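/- arXiv:1711.00675 — 11 statements merged into one kernel-verified Lean document; each statement's English description precedes it below -/
import Mathlib

section
/- Let H be a Hilbert space and M₀, M₁ ∈ L(H) bounded operators such that the range R(M₀) is closed. Suppose there exists ν ∈ ℝ such that zM₀ + M₁ is boundedly invertible for all z with Re z > ν and the inverses are uniformly bounded on {Re z > ν}. Then the operator P∘M₁∘ι : N(M₀) → R(M₀)^⊥ is continuously invertible, where ι : N(M₀) → H is the inclusion and P : H → R(M₀)^⊥ is the orthogonal projection. -/
set_option synthInstance.maxHeartbeats 1000000
set_option maxHeartbeats 1000000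

open MeasureTheory Filter Set Complex
open scoped Topology

noncomputable section

variable {H : Type*} [NormedAddCommGroup H] [InnerProductSpace ℂ H] [CompleteSpace H]

private lemma le_of_forall_pos_le_add' {a b : ℝ} (h : ∀ ε : ℝ, 0 < ε → a ≤ b + ε) : a ≤ b := by
  by_contra hc
  push_neg at hc
  linarith [h ((a - b) / 2) (by linarith)]

theorem stmt_0 (M₀ M₁ : H →L[ℂ] H)
    (hR : IsClosed (LinearMap.range (M₀ : H →ₗ[ℂ] H) : Set H))
    (hreg : ∃ ν C : ℝ, ∀ z : ℂ, ν < z.re →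
      ∃ S : H →L[ℂ] H, (z • M₀ + M₁).comp S = ContinuousLinearMap.id ℂ H ∧
        S.comp (z • M₀ + M₁) = ContinuousLinearMap.id ℂ H ∧ ‖S‖ ≤ C) :
    ∃ S : ↥((LinearMap.range (M₀ : H →ₗ[ℂ] H))ᗮ) →L[ℂ] ↥(LinearMap.ker (M₀ : H →ₗ[ℂ] H)),
      ((Submodule.orthogonalProjectionOnto ((LinearMap.range (M₀ : H →ₗ[ℂ] H))ᗮ)).comp
          (M₁.comp (LinearMap.ker (M₀ : H →ₗ[ℂ] H)).subtypeL)).comp S =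
        ContinuousLinearMap.id ℂ ↥((LinearMap.range (M₀ : H →ₗ[ℂ] H))ᗮ) ∧
      S.comp ((Submodule.orthogonalProjectionOnto ((LinearMap.range (M₀ : H →ₗ[ℂ] H))ᗮ)).comp
          (M₁.comp (LinearMap.ker (M₀ : H →ₗ[ℂ] H)).subtypeL)) =
        ContinuousLinearMap.id ℂ ↥(LinearMap.ker (M₀ : H →ₗ[ℂ] H)) := by
  obtain ⟨ν, C, hreg⟩ := hreg
  haveI : CompleteSpace (LinearMap.range (M₀ : H →ₗ[ℂ] H)) := hR.completeSpace_coe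
  haveI : CompleteSpace (LinearMap.ker (M₀ : H →ₗ[ℂ] H)) :=
    (ContinuousLinearMap.isClosed_ker M₀).completeSpace_coe
  haveI : CompleteSpace ((LinearMap.range (M₀ : H →ₗ[ℂ] H))ᗮ) :=
    (Submodule.isClosed_orthogonal _).completeSpace_coe
  have hRoo : ((LinearMap.range (M₀ : H →ₗ[ℂ] H))ᗮ)ᗮ = LinearMap.range (M₀ : H →ₗ[ℂ] H) :=
    Submodule.orthogonal_orthogonal _
  have hC : 0 ≤ C := by
    obtain ⟨S, _, _, hS⟩ := hreg ((ν + 1 : ℝ) : ℂ) (by simp)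
    exact (norm_nonneg S).trans hS
  -- the operator in question
  set A : ↥(LinearMap.ker (M₀ : H →ₗ[ℂ] H)) →L[ℂ] ↥((LinearMap.range (M₀ : H →ₗ[ℂ] H))ᗮ) :=
    ((Submodule.orthogonalProjectionOnto ((LinearMap.range (M₀ : H →ₗ[ℂ] H))ᗮ)).comp
      (M₁.comp (LinearMap.ker (M₀ : H →ₗ[ℂ] H)).subtypeL)) with hA
  -- key estimate : A is bounded below
  have key : ∀ x : H, M₀ x = 0 →
      ‖x‖ ≤ C * ‖(Submodule.orthogonalProjectionOnto ((LinearMap.range (M₀ : H →ₗ[ℂ] H))ᗮ) (M₁ x) : H)‖ := by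
    intro x hx
    set v : H := ↑(Submodule.orthogonalProjectionOnto ((LinearMap.range (M₀ : H →ₗ[ℂ] H))ᗮ) (M₁ x)) with hv
    have hr : M₁ x - v ∈ LinearMap.range (M₀ : H →ₗ[ℂ] H) := by
      rw [← hRoo]
      exact Submodule.sub_starProjection_mem_orthogonal (K := (LinearMap.range (M₀ : H →ₗ[ℂ] H))ᗮ) (M₁ x)
    obtain ⟨w, hw⟩ := hr
    apply le_of_forall_pos_le_add'
    intro ε hε
    set D : ℝ := ‖w‖ + C * (‖M₁‖ * ‖w‖) with hDdef
    have hD : 0 ≤ D := by positivity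
    set t : ℝ := max (ν + 1) (D / ε + 1) with ht
    have htν : ν < t := lt_of_lt_of_le (by linarith) (le_max_left _ _)
    have ht0 : 0 < t := lt_of_lt_of_le (by positivity) (le_max_right _ _)
    have htD : D / t ≤ ε := by
      rw [div_le_iff₀ ht0]
      have h1 : D / ε + 1 ≤ t := le_max_right _ _
      have h2 : ε * (D / ε + 1) ≤ ε * t := mul_le_mul_of_nonneg_left h1 hε.le
      rw [mul_add, mul_div_cancel₀ _ (ne_of_gt hε)] at h2
      linarith
    obtain ⟨S, hSl, hSr, hSnorm⟩ := hreg ((t : ℝ) : ℂ) (by simpa using htν)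
    have htc : ((t : ℝ) : ℂ) ≠ 0 := by
      simp only [ne_eq, Complex.ofReal_eq_zero]
      exact ne_of_gt ht0
    -- x = S (M₁ x)
    have h1 : S (M₁ x) = x := by
      have h := congrArg (fun f : H →L[ℂ] H => f x) hSr
      simpa [ContinuousLinearMap.comp_apply, hx] using h
    -- S (M₀ w) = t⁻¹ • (w - S (M₁ w))
    have h2 : S (M₀ w) = (((t : ℝ) : ℂ))⁻¹ • (w - S (M₁ w)) := by
      have h := congrArg (fun f : H →L[ℂ] H => f w) hSr
      simp only [ContinuousLinearMap.comp_apply, ContinuousLinearMap.add_apply,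
        ContinuousLinearMap.smul_apply, ContinuousLinearMap.id_apply, map_add,
        _root_.map_smul] at h
      rw [eq_inv_smul_iff₀ htc, eq_sub_iff_add_eq]
      exact h
    have h3 : ‖S (M₀ w)‖ ≤ D / t := by
      rw [h2, norm_smul]
      have hnw : ‖w - S (M₁ w)‖ ≤ D := by
        calc ‖w - S (M₁ w)‖ ≤ ‖w‖ + ‖S (M₁ w)‖ := norm_sub_le _ _
        _ ≤ ‖w‖ + C * (‖M₁‖ * ‖w‖) := by
            gcongr
            calc ‖S (M₁ w)‖ ≤ ‖S‖ * ‖M₁ w‖ := S.le_opNorm _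
            _ ≤ C * (‖M₁‖ * ‖w‖) :=
                mul_le_mul hSnorm (M₁.le_opNorm w) (norm_nonneg _) hC
      have hti : ‖(((t : ℝ) : ℂ))⁻¹‖ = t⁻¹ := by
        rw [norm_inv, Complex.norm_real, Real.norm_of_nonneg ht0.le]
      rw [hti, div_eq_inv_mul]
      gcongr
    have h4 : x = S v + S (M₀ w) := by
      rw [← h1, show M₀ w = M₁ x - v from hw, ← map_add]
      congr 1
      abel
    calc ‖x‖ ≤ ‖S v‖ + ‖S (M₀ w)‖ := by rw [h4]; exact norm_add_le _ _
    _ ≤ C * ‖v‖ + D / t := by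
        gcongr
        calc ‖S v‖ ≤ ‖S‖ * ‖v‖ := S.le_opNorm _
        _ ≤ C * ‖v‖ := by gcongr
    _ ≤ C * ‖v‖ + ε := by gcongr
  -- bounded below for A
  have Abb : ∀ y : ↥(LinearMap.ker (M₀ : H →ₗ[ℂ] H)), ‖y‖ ≤ C * ‖A y‖ := by
    intro y
    have hy : M₀ (y : H) = 0 := y.2
    have := key (y : H) hy
    simpa [hA, ContinuousLinearMap.comp_apply] using this
  -- injectivity
  have hker : A.ker = ⊥ := by
    rw [LinearMap.ker_eq_bot']
    intro y hy
    have := Abb y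
    rw [show A y = 0 from hy] at this
    simp only [norm_zero, mul_zero] at this
    exact norm_le_zero_iff.mp this
  -- closed range
  have hanti : AntilipschitzWith C.toNNReal A := by
    apply ContinuousLinearMap.antilipschitz_of_bound
    intro y
    simpa [Real.coe_toNNReal _ hC] using Abb y
  have hclosed : IsClosed (A.range : Set ↥((LinearMap.range (M₀ : H →ₗ[ℂ] H))ᗮ)) := by
    have : Set.range A = (A.range : Set _) := by
      ext u; simp [LinearMap.mem_range]
    rw [← this]
    exact hanti.isClosed_range A.uniformContinuous
  -- M₀ is bounded below on (ker M₀)ᗮ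
  have hmemT : ∀ x : ↥((LinearMap.ker (M₀ : H →ₗ[ℂ] H))ᗮ),
      (M₀.comp ((LinearMap.ker (M₀ : H →ₗ[ℂ] H))ᗮ).subtypeL) x ∈ LinearMap.range (M₀ : H →ₗ[ℂ] H) :=
    fun x => ⟨(x : H), rfl⟩
  set T : ↥((LinearMap.ker (M₀ : H →ₗ[ℂ] H))ᗮ) →L[ℂ] ↥(LinearMap.range (M₀ : H →ₗ[ℂ] H)) :=
    (M₀.comp ((LinearMap.ker (M₀ : H →ₗ[ℂ] H))ᗮ).subtypeL).codRestrict (LinearMap.range (M₀ : H →ₗ[ℂ] H))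
      hmemT with hT
  have hTker : T.ker = ⊥ := by
    rw [LinearMap.ker_eq_bot']
    intro x hx
    have hx0 : M₀ (x : H) = 0 := by
      have := congrArg (Subtype.val) (show T x = 0 from hx)
      simpa [hT, ContinuousLinearMap.coe_codRestrict_apply] using this
    have hxK : (x : H) ∈ LinearMap.ker (M₀ : H →ₗ[ℂ] H) := hx0
    have : (x : H) = 0 := by
      have h := x.2
      rw [Submodule.mem_orthogonal] at h
      have := h (x : H) hxK
      simpa using inner_self_eq_zero.mp this
    exact Subtype.ext this
  have hTrange : T.range = ⊤ := by
    rw [LinearMap.range_eq_top]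
    rintro ⟨r, a, ha⟩
    refine ⟨⟨a - (Submodule.orthogonalProjectionOnto (LinearMap.ker (M₀ : H →ₗ[ℂ] H)) a : H),
      by rw [← Submodule.starProjection_apply]; exact Submodule.sub_starProjection_mem_orthogonal a⟩, ?_⟩
    apply Subtype.ext
    simp only [hT, ContinuousLinearMap.coe_coe, ContinuousLinearMap.coe_codRestrict_apply,
      ContinuousLinearMap.comp_apply, Submodule.subtypeL_apply, map_sub]
    have : M₀ ((Submodule.orthogonalProjectionOnto (LinearMap.ker (M₀ : H →ₗ[ℂ] H)) a : H)) = 0 :=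
      (Submodule.orthogonalProjectionOnto (LinearMap.ker (M₀ : H →ₗ[ℂ] H)) a).2
    rw [this, sub_zero, show M₀ a = r from ha]
  obtain ⟨c, hc0, hMbb⟩ : ∃ c : ℝ, 0 ≤ c ∧
      ∀ x : ↥((LinearMap.ker (M₀ : H →ₗ[ℂ] H))ᗮ), ‖x‖ ≤ c * ‖M₀ (x : H)‖ := by
    let ST : ↥(LinearMap.range (M₀ : H →ₗ[ℂ] H)) →L[ℂ] ↥((LinearMap.ker (M₀ : H →ₗ[ℂ] H))ᗮ) :=
      (ContinuousLinearEquiv.ofBijective T hTker hTrange).symm.toContinuousLinearMap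
    refine ⟨‖ST‖, norm_nonneg ST, fun x => ?_⟩
    have h1 : ST (T x) = x :=
      ContinuousLinearEquiv.ofBijective_symm_apply_apply T hTker hTrange x
    have h2 : ((T x : H)) = M₀ (x : H) := by
      rw [hT]
      simp [ContinuousLinearMap.coe_codRestrict_apply]
    have h3 : ‖T x‖ = ‖M₀ (x : H)‖ := by
      rw [Submodule.coe_norm, h2]
    calc ‖x‖ = ‖ST (T x)‖ := by rw [h1]
    _ ≤ ‖ST‖ * ‖T x‖ := ST.le_opNorm _
    _ = ‖ST‖ * ‖M₀ (x : H)‖ := by rw [h3]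
  -- dense range
  have hrange : A.range = ⊤ := by
    rw [Submodule.eq_top_iff']
    intro u
    have hmem : (u : ↥((LinearMap.range (M₀ : H →ₗ[ℂ] H))ᗮ)) ∈ closure (A.range : Set _) := by
      rw [Metric.mem_closure_iff]
      intro ε hε
      set D : ℝ := ‖(u : H)‖ + ‖M₁‖ * (C * ‖(u : H)‖) with hDdef
      have hD : 0 ≤ D := by positivity
      set X : ℝ := ‖M₁‖ * (c * D) with hX
      have hX0 : 0 ≤ X := by positivity
      obtain ⟨t, htν, ht0, htX⟩ : ∃ t : ℝ, ν < t ∧ 0 < t ∧ X / t < ε := by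
        refine ⟨max (ν + 1) (X / ε + 1), lt_of_lt_of_le (by linarith) (le_max_left _ _),
          lt_of_lt_of_le (by positivity) (le_max_right _ _), ?_⟩
        set t : ℝ := max (ν + 1) (X / ε + 1) with ht
        have ht0 : 0 < t := lt_of_lt_of_le (by positivity) (le_max_right _ _)
        rw [div_lt_iff₀ ht0]
        have h1 : X / ε + 1 ≤ t := le_max_right _ _
        have h2 : ε * (X / ε + 1) ≤ ε * t := mul_le_mul_of_nonneg_left h1 hε.le
        rw [mul_add, mul_div_cancel₀ _ (ne_of_gt hε)] at h2
        linarith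
      obtain ⟨S, hSl, hSr, hSnorm⟩ := hreg ((t : ℝ) : ℂ) (by simpa using htν)
      have htc : ((t : ℝ) : ℂ) ≠ 0 := by
        simp only [ne_eq, Complex.ofReal_eq_zero]; exact ne_of_gt ht0
      set x : H := S (u : H) with hx
      have hxe : ((t : ℝ) : ℂ) • M₀ x + M₁ x = (u : H) := by
        have h := congrArg (fun f : H →L[ℂ] H => f (u : H)) hSl
        simpa [ContinuousLinearMap.comp_apply] using h
      have hxn : ‖x‖ ≤ C * ‖(u : H)‖ := by
        calc ‖x‖ ≤ ‖S‖ * ‖(u : H)‖ := S.le_opNorm _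
        _ ≤ C * ‖(u : H)‖ := by gcongr
      -- decompose x
      set y : H := ↑(Submodule.orthogonalProjectionOnto (LinearMap.ker (M₀ : H →ₗ[ℂ] H)) x) with hy
      have hyK : y ∈ LinearMap.ker (M₀ : H →ₗ[ℂ] H) := (Submodule.orthogonalProjectionOnto (LinearMap.ker (M₀ : H →ₗ[ℂ] H)) x).2
      set q : ↥((LinearMap.ker (M₀ : H →ₗ[ℂ] H))ᗮ) := ⟨x - y, by rw [hy, ← Submodule.starProjection_apply]; exact Submodule.sub_starProjection_mem_orthogonal x⟩
        with hq
      have hM₀q : M₀ ((q : H)) = M₀ x := by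
        simp only [hq, map_sub]
        have : M₀ y = 0 := hyK
        rw [this, sub_zero]
      have hM₀x : ‖M₀ x‖ ≤ D / t := by
        have h0 : M₀ x = (((t : ℝ) : ℂ))⁻¹ • ((u : H) - M₁ x) := by
          rw [eq_inv_smul_iff₀ htc, eq_sub_iff_add_eq]
          exact hxe
        rw [h0, norm_smul, norm_inv, Complex.norm_real, Real.norm_of_nonneg ht0.le,
          div_eq_inv_mul]
        gcongr
        calc ‖(u : H) - M₁ x‖ ≤ ‖(u : H)‖ + ‖M₁ x‖ := norm_sub_le _ _
        _ ≤ D := by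
            rw [hDdef]
            gcongr
            calc ‖M₁ x‖ ≤ ‖M₁‖ * ‖x‖ := M₁.le_opNorm _
            _ ≤ ‖M₁‖ * (C * ‖(u : H)‖) := by gcongr
      have hqn : ‖(q : H)‖ ≤ c * (D / t) := by
        have := hMbb q
        rw [hM₀q] at this
        calc ‖(q : H)‖ = ‖q‖ := rfl
        _ ≤ c * ‖M₀ x‖ := this
        _ ≤ c * (D / t) := by gcongr
      refine ⟨A ⟨y, hyK⟩, LinearMap.mem_range_self _ _, ?_⟩
      rw [dist_eq_norm]
      have hdiff : ((u - A ⟨y, hyK⟩ : ↥((LinearMap.range (M₀ : H →ₗ[ℂ] H))ᗮ)) : H) =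
          ↑(Submodule.orthogonalProjectionOnto ((LinearMap.range (M₀ : H →ₗ[ℂ] H))ᗮ) (M₁ ((q : H)))) := by
        have hu : Submodule.orthogonalProjectionOnto ((LinearMap.range (M₀ : H →ₗ[ℂ] H))ᗮ) (u : H) = u :=
          Submodule.orthogonalProjectionOnto_mem_subspace_eq_self u
        have hAy : (A ⟨y, hyK⟩ : ↥((LinearMap.range (M₀ : H →ₗ[ℂ] H))ᗮ)) =
            Submodule.orthogonalProjectionOnto ((LinearMap.range (M₀ : H →ₗ[ℂ] H))ᗮ) (M₁ y) := rfl
        have hM₀x0 : Submodule.orthogonalProjectionOnto ((LinearMap.range (M₀ : H →ₗ[ℂ] H))ᗮ)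
            (((t : ℝ) : ℂ) • M₀ x) = 0 := by
          apply Submodule.orthogonalProjectionOnto_apply_of_mem_orthogonal
          rw [hRoo]
          exact Submodule.smul_mem _ _ (LinearMap.mem_range_self _ _)
        have hqx : M₁ ((q : H)) = M₁ x - M₁ y := by
          simp only [hq, map_sub]
        have : u - A ⟨y, hyK⟩ =
            Submodule.orthogonalProjectionOnto ((LinearMap.range (M₀ : H →ₗ[ℂ] H))ᗮ) (M₁ ((q : H))) := by
          rw [hqx, map_sub, hAy]
          have hux : Submodule.orthogonalProjectionOnto ((LinearMap.range (M₀ : H →ₗ[ℂ] H))ᗮ) (M₁ x) = u := by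
            have := congrArg (Submodule.orthogonalProjectionOnto ((LinearMap.range (M₀ : H →ₗ[ℂ] H))ᗮ)) hxe
            rw [map_add, hM₀x0, zero_add] at this
            rw [this, hu]
          rw [hux]
        rw [this]
      calc ‖u - A ⟨y, hyK⟩‖ = ‖((u - A ⟨y, hyK⟩ : ↥((LinearMap.range (M₀ : H →ₗ[ℂ] H))ᗮ)) : H)‖ := rfl
      _ = ‖(↑(Submodule.orthogonalProjectionOnto ((LinearMap.range (M₀ : H →ₗ[ℂ] H))ᗮ) (M₁ ((q : H)))) : H)‖ := by
          rw [hdiff]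
      _ ≤ ‖M₁ ((q : H))‖ := by
          have hle := (Submodule.orthogonalProjectionOnto ((LinearMap.range (M₀ : H →ₗ[ℂ] H))ᗮ)).le_opNorm (M₁ ((q : H)))
          have hno := Submodule.orthogonalProjectionOnto_norm_le ((LinearMap.range (M₀ : H →ₗ[ℂ] H))ᗮ)
          calc ‖(↑(Submodule.orthogonalProjectionOnto ((LinearMap.range (M₀ : H →ₗ[ℂ] H))ᗮ) (M₁ ((q : H)))) : H)‖
              = ‖Submodule.orthogonalProjectionOnto ((LinearMap.range (M₀ : H →ₗ[ℂ] H))ᗮ) (M₁ ((q : H)))‖ := rfl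
          _ ≤ ‖Submodule.orthogonalProjectionOnto ((LinearMap.range (M₀ : H →ₗ[ℂ] H))ᗮ)‖ * ‖M₁ ((q : H))‖ := hle
          _ ≤ 1 * ‖M₁ ((q : H))‖ :=
              mul_le_mul_of_nonneg_right hno (norm_nonneg _)
          _ = ‖M₁ ((q : H))‖ := one_mul _
      _ ≤ ‖M₁‖ * (c * (D / t)) := by
          calc ‖M₁ ((q : H))‖ ≤ ‖M₁‖ * ‖(q : H)‖ := M₁.le_opNorm _
          _ ≤ ‖M₁‖ * (c * (D / t)) := by gcongr
      _ = X / t := by rw [hX]; ring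
      _ < ε := htX
    rw [hclosed.closure_eq] at hmem
    exact hmem
  refine ⟨(ContinuousLinearEquiv.ofBijective A hker hrange).symm.toContinuousLinearMap, ?_, ?_⟩
  · ext u
    exact congrArg Subtype.val
      (ContinuousLinearEquiv.ofBijective_apply_symm_apply A hker hrange u)
  · ext y
    exact congrArg Subtype.val
      (ContinuousLinearEquiv.ofBijective_symm_apply_apply A hker hrange y)
end
end

section
/- Let H be a Hilbert space, M₀, M₁ ∈ L(H) with R(M₀) closed. If the operator P∘M₁∘ι : N(M₀) → R(M₀)^⊥ (P the orthogonal projection onto R(M₀)^⊥, ι the inclusion of N(M₀)) is continuously invertible, then the pencil z ↦ zM₀ + M₁ is regular: there exists ν ∈ ℝ such that zM₀ + M₁ is boundedly invertible for Re z > ν with sup_{Re z > ν} ‖(zM₀+M₁)^{-1}‖ < ∞. -/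
set_option synthInstance.maxHeartbeats 1000000
set_option maxHeartbeats 1000000

open MeasureTheory Filter Set Complex
open scoped Topology

noncomputable section

variable {H : Type*} [NormedAddCommGroup H] [InnerProductSpace ℂ H] [CompleteSpace H]

lemma my_ker_adjoint (T : H →L[ℂ] H) :
    LinearMap.ker ((ContinuousLinearMap.adjoint T : H →L[ℂ] H) : H →ₗ[ℂ] H) = (LinearMap.range (T : H →ₗ[ℂ] H))ᗮ := by
  ext x
  simp only [LinearMap.mem_ker, Submodule.mem_orthogonal]
  constructor
  · rintro h u ⟨y, rfl⟩
    simp only [ContinuousLinearMap.coe_coe] at h ⊢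
    rw [← ContinuousLinearMap.adjoint_inner_right, h, inner_zero_right]
  · intro h
    have := h (T (ContinuousLinearMap.adjoint T x)) ⟨_, rfl⟩
    rw [← ContinuousLinearMap.adjoint_inner_right] at this
    exact inner_self_eq_zero.mp this

lemma my_below (A : H →L[ℂ] H) (hR : IsClosed (LinearMap.range (A : H →ₗ[ℂ] H) : Set H)) :
    ∃ c₀ : ℝ, 0 < c₀ ∧ ∀ u ∈ (LinearMap.ker (A : H →ₗ[ℂ] H))ᗮ, c₀ * ‖u‖ ≤ ‖A u‖ := by
  haveI : CompleteSpace (LinearMap.range (A : H →ₗ[ℂ] H)) := hR.completeSpace_coe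
  haveI : CompleteSpace ((LinearMap.ker (A : H →ₗ[ℂ] H))ᗮ : Submodule ℂ H) :=
    ((LinearMap.ker (A : H →ₗ[ℂ] H)).isClosed_orthogonal).completeSpace_coe
  set f : ((LinearMap.ker (A : H →ₗ[ℂ] H))ᗮ : Submodule ℂ H) →L[ℂ] (LinearMap.range (A : H →ₗ[ℂ] H)) :=
    (A.comp (LinearMap.ker (A : H →ₗ[ℂ] H))ᗮ.subtypeL).codRestrict (LinearMap.range (A : H →ₗ[ℂ] H))
      (fun x => LinearMap.mem_range_self _ _) with hf
  have hker : f.ker = ⊥ := by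
    rw [LinearMap.ker_eq_bot']
    intro u hu
    have hAu : A u = 0 := congrArg Subtype.val hu
    have h1 : (u : H) ∈ LinearMap.ker (A : H →ₗ[ℂ] H) := hAu
    have := u.2 _ h1
    exact Subtype.ext (inner_self_eq_zero.mp this)
  have hrange : f.range = ⊤ := by
    rw [LinearMap.range_eq_top]
    rintro ⟨y, x, rfl⟩
    obtain ⟨p, hp, q, hq, rfl⟩ := (LinearMap.ker (A : H →ₗ[ℂ] H)).exists_add_mem_mem_orthogonal x
    refine ⟨⟨q, hq⟩, ?_⟩
    apply Subtype.ext
    show A q = A (p + q)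
    simp [map_add, show A p = 0 from LinearMap.mem_ker.mp hp]
  have hanti : ∃ K : NNReal, ∀ x, ‖x‖ ≤ K * ‖f x‖ := by
    have h := (ContinuousLinearEquiv.ofBijective f hker hrange).antilipschitz
    rw [ContinuousLinearEquiv.coeFn_ofBijective] at h
    exact ⟨_, fun x => f.bound_of_antilipschitz h x⟩
  obtain ⟨K, hK⟩ := hanti
  refine ⟨((K : ℝ) + 1)⁻¹, by positivity, ?_⟩
  intro u hu
  have h1 : ‖u‖ ≤ (K : ℝ) * ‖A u‖ := by
    have := hK ⟨u, hu⟩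
    have h2 : ‖f ⟨u, hu⟩‖ = ‖A u‖ := rfl
    rwa [h2] at this
  rw [inv_mul_le_iff₀ (by positivity)]
  nlinarith [norm_nonneg (A u), K.coe_nonneg]

lemma my_pencil_below (A B : H →L[ℂ] H) (V : Submodule ℂ H) [Submodule.HasOrthogonalProjection V]
    (c₀ k : ℝ) (hc₀ : 0 < c₀) (hk : 0 ≤ k)
    (hAV : ∀ x, A x ∈ Vᗮ)
    (h1 : ∀ u ∈ (LinearMap.ker (A : H →ₗ[ℂ] H))ᗮ, c₀ * ‖u‖ ≤ ‖A u‖)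
    (h2 : ∀ v ∈ LinearMap.ker (A : H →ₗ[ℂ] H), ‖v‖ ≤ k * ‖(Submodule.orthogonalProjectionOnto V (B v) : H)‖) :
    ∀ z : ℂ, (1 + ‖B‖ + k * ‖B‖ ^ 2) / c₀ < z.re → ∀ x : H,
      ‖x‖ ≤ ((1 + k * ‖B‖) ^ 2 + k) * ‖(z • A + B) x‖ := by
  haveI : CompleteSpace (LinearMap.ker (A : H →ₗ[ℂ] H)) := (ContinuousLinearMap.isClosed_ker A).completeSpace_coe
  intro z hz x
  obtain ⟨v, hv, u, hu, rfl⟩ := (LinearMap.ker (A : H →ₗ[ℂ] H)).exists_add_mem_mem_orthogonal x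
  set y := (z • A + B) (v + u) with hy
  have hAv : A v = 0 := LinearMap.mem_ker.mp hv
  have hyd : y = z • A u + B (v + u) := by
    simp only [hy, ContinuousLinearMap.add_apply, ContinuousLinearMap.smul_apply, map_add, hAv,
      smul_zero, zero_add]
    abel
  -- projection of y
  have hPy : (Submodule.orthogonalProjectionOnto V y : H) = z • (Submodule.orthogonalProjectionOnto V (A u) : H)
      + (Submodule.orthogonalProjectionOnto V (B (v + u)) : H) := by
    rw [hyd, map_add, _root_.map_smul]; simp
  have hPAu : (Submodule.orthogonalProjectionOnto V (A u) : H) = 0 := by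
    rw [Submodule.orthogonalProjectionOnto_apply_of_mem_orthogonal (hAV u)]
    rfl
  have hPnorm : ∀ w : H, ‖(Submodule.orthogonalProjectionOnto V w : H)‖ ≤ ‖w‖ := by
    intro w
    calc ‖(Submodule.orthogonalProjectionOnto V w : H)‖ ≤ ‖Submodule.orthogonalProjectionOnto V‖ * ‖w‖ :=
          (Submodule.orthogonalProjectionOnto V).le_opNorm w
    _ ≤ 1 * ‖w‖ := mul_le_mul_of_nonneg_right (Submodule.orthogonalProjectionOnto_norm_le V) (norm_nonneg w)
    _ = ‖w‖ := one_mul _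
  have e1 : ‖(Submodule.orthogonalProjectionOnto V (B v) : H)‖ ≤ ‖y‖ + ‖B‖ * ‖u‖ := by
    have hBv : B v = B (v + u) - B u := by rw [map_add]; abel
    have : (Submodule.orthogonalProjectionOnto V (B v) : H)
        = (Submodule.orthogonalProjectionOnto V y : H) - (Submodule.orthogonalProjectionOnto V (B u) : H) := by
      rw [hPy, hPAu, smul_zero, zero_add, hBv, map_sub]
      rfl
    rw [this]
    calc ‖(Submodule.orthogonalProjectionOnto V y : H) - (Submodule.orthogonalProjectionOnto V (B u) : H)‖
        ≤ ‖(Submodule.orthogonalProjectionOnto V y : H)‖ + ‖(Submodule.orthogonalProjectionOnto V (B u) : H)‖ :=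
          norm_sub_le _ _
    _ ≤ ‖y‖ + ‖B‖ * ‖u‖ := by
          gcongr
          · exact hPnorm y
          · exact (hPnorm _).trans (B.le_opNorm u)
  have e2 : ‖v‖ ≤ k * (‖y‖ + ‖B‖ * ‖u‖) := by
    calc ‖v‖ ≤ k * ‖(Submodule.orthogonalProjectionOnto V (B v) : H)‖ := h2 v hv
    _ ≤ k * (‖y‖ + ‖B‖ * ‖u‖) := by gcongr
  -- lower bound on u
  have hzre : 0 < z.re := lt_of_le_of_lt (by positivity) hz
  have e3 : z.re * (c₀ * ‖u‖) ≤ ‖y‖ + ‖B‖ * (‖v‖ + ‖u‖) := by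
    have hzAu : z • A u = y - B (v + u) := by rw [hyd]; abel
    have h4 : ‖z • A u‖ ≤ ‖y‖ + ‖B‖ * (‖v‖ + ‖u‖) := by
      rw [hzAu]
      calc ‖y - B (v + u)‖ ≤ ‖y‖ + ‖B (v + u)‖ := norm_sub_le _ _
      _ ≤ ‖y‖ + ‖B‖ * ‖v + u‖ := by gcongr; exact B.le_opNorm _
      _ ≤ ‖y‖ + ‖B‖ * (‖v‖ + ‖u‖) := by gcongr; exact norm_add_le _ _
    have h5 : z.re * (c₀ * ‖u‖) ≤ ‖z • A u‖ := by
      rw [norm_smul]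
      have hre : z.re ≤ ‖z‖ := by exact Complex.re_le_norm z
      calc z.re * (c₀ * ‖u‖) ≤ ‖z‖ * (c₀ * ‖u‖) := by
            gcongr
      _ ≤ ‖z‖ * ‖A u‖ := by gcongr; exact h1 u hu
    exact h5.trans h4
  -- combine
  set b := ‖B‖ with hb
  set Y := ‖y‖
  set U := ‖u‖
  set Vn := ‖v‖
  have hbn : 0 ≤ b := norm_nonneg _
  have hUn : 0 ≤ U := norm_nonneg _
  have hYn : 0 ≤ Y := norm_nonneg _
  have key : 1 + b + k * b ^ 2 < z.re * c₀ := by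
    rw [div_lt_iff₀ hc₀] at hz; linarith
  have h5 : z.re * c₀ * U ≤ (1 + k * b) * Y + (b + k * b ^ 2) * U := by
    have := mul_le_mul_of_nonneg_left e2 hbn
    nlinarith [e3]
  have hU : U ≤ (1 + k * b) * Y := by
    nlinarith [mul_le_mul_of_nonneg_right key.le hUn]
  calc ‖v + u‖ ≤ Vn + U := norm_add_le _ _
  _ ≤ ((1 + k * b) ^ 2 + k) * Y := by
      have := mul_le_mul_of_nonneg_left hU (mul_nonneg hk hbn)
      nlinarith [e2]

theorem stmt_1 (M₀ M₁ : H →L[ℂ] H)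
    (hR : IsClosed (LinearMap.range (M₀ : H →ₗ[ℂ] H) : Set H))
    (hinv : ∃ S : ↥((LinearMap.range (M₀ : H →ₗ[ℂ] H))ᗮ) →L[ℂ] ↥(LinearMap.ker (M₀ : H →ₗ[ℂ] H)),
      ((Submodule.orthogonalProjectionOnto ((LinearMap.range (M₀ : H →ₗ[ℂ] H))ᗮ)).comp
          (M₁.comp (LinearMap.ker (M₀ : H →ₗ[ℂ] H)).subtypeL)).comp S =
        ContinuousLinearMap.id ℂ ↥((LinearMap.range (M₀ : H →ₗ[ℂ] H))ᗮ) ∧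
      S.comp ((Submodule.orthogonalProjectionOnto ((LinearMap.range (M₀ : H →ₗ[ℂ] H))ᗮ)).comp
          (M₁.comp (LinearMap.ker (M₀ : H →ₗ[ℂ] H)).subtypeL)) =
        ContinuousLinearMap.id ℂ ↥(LinearMap.ker (M₀ : H →ₗ[ℂ] H))) :
    ∃ ν C : ℝ, ∀ z : ℂ, ν < z.re →
      ∃ S : H →L[ℂ] H, (z • M₀ + M₁).comp S = ContinuousLinearMap.id ℂ H ∧
        S.comp (z • M₀ + M₁) = ContinuousLinearMap.id ℂ H ∧ ‖S‖ ≤ C := by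
  classical
  haveI : CompleteSpace (LinearMap.range (M₀ : H →ₗ[ℂ] H)) := hR.completeSpace_coe
  haveI : CompleteSpace (LinearMap.ker (M₀ : H →ₗ[ℂ] H)) :=
    (ContinuousLinearMap.isClosed_ker M₀).completeSpace_coe
  set V : Submodule ℂ H := (LinearMap.range (M₀ : H →ₗ[ℂ] H))ᗮ with hVdef
  obtain ⟨S, hS1, hS2⟩ := hinv
  haveI : CompleteSpace V := (LinearMap.range (M₀ : H →ₗ[ℂ] H)).isClosed_orthogonal.completeSpace_coe
  obtain ⟨c₀, hc₀, h1⟩ := my_below M₀ hR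
  set k : ℝ := ‖S‖ with hkdef
  have hk : 0 ≤ k := norm_nonneg S
  set G : ↥(LinearMap.ker (M₀ : H →ₗ[ℂ] H)) →L[ℂ] ↥V :=
    (Submodule.orthogonalProjectionOnto V).comp (M₁.comp (LinearMap.ker (M₀ : H →ₗ[ℂ] H)).subtypeL) with hGdef
  -- h2 for the direct problem
  have h2 : ∀ v ∈ LinearMap.ker (M₀ : H →ₗ[ℂ] H), ‖v‖ ≤ k * ‖(Submodule.orthogonalProjectionOnto V (M₁ v) : H)‖ := by
    intro v hv
    have happ : S (G ⟨v, hv⟩) = ⟨v, hv⟩ := by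
      have := congrArg (fun f : ↥(LinearMap.ker (M₀ : H →ₗ[ℂ] H)) →L[ℂ] ↥(LinearMap.ker (M₀ : H →ₗ[ℂ] H)) =>
        f ⟨v, hv⟩) hS2
      simpa using this
    have hGv : (G ⟨v, hv⟩ : H) = (Submodule.orthogonalProjectionOnto V (M₁ v) : H) := rfl
    calc ‖v‖ = ‖S (G ⟨v, hv⟩)‖ := by rw [happ]; rfl
    _ ≤ k * ‖G ⟨v, hv⟩‖ := S.le_opNorm _
    _ = k * ‖(Submodule.orthogonalProjectionOnto V (M₁ v) : H)‖ := by
        congr 1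
  -- hAV for the direct problem
  have hAV1 : ∀ x, M₀ x ∈ Vᗮ := fun x =>
    (LinearMap.range (M₀ : H →ₗ[ℂ] H)).le_orthogonal_orthogonal (LinearMap.mem_range_self _ x)
  -- adjoint data
  have hkeradj : LinearMap.ker ((ContinuousLinearMap.adjoint M₀ : H →L[ℂ] H) : H →ₗ[ℂ] H) = V := my_ker_adjoint M₀
  have hAV2 : ∀ x, (ContinuousLinearMap.adjoint M₀) x ∈ (LinearMap.ker (M₀ : H →ₗ[ℂ] H))ᗮ := by
    intro x
    intro u hu
    rw [ContinuousLinearMap.adjoint_inner_right]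
    rw [show M₀ u = 0 from LinearMap.mem_ker.mp hu, inner_zero_left]
  have h1' : ∀ u ∈ (LinearMap.ker ((ContinuousLinearMap.adjoint M₀ : H →L[ℂ] H) : H →ₗ[ℂ] H))ᗮ,
      c₀ * ‖u‖ ≤ ‖(ContinuousLinearMap.adjoint M₀) u‖ := by
    intro u hu
    rw [hkeradj, hVdef, Submodule.orthogonal_orthogonal] at hu
    obtain ⟨x, rfl⟩ := hu
    obtain ⟨p, hp, q, hq, rfl⟩ := (LinearMap.ker (M₀ : H →ₗ[ℂ] H)).exists_add_mem_mem_orthogonal x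
    have hMx : M₀ (p + q) = M₀ q := by rw [map_add, show M₀ p = 0 from LinearMap.mem_ker.mp hp, zero_add]
    rw [ContinuousLinearMap.coe_coe, hMx]
    have hinner : ‖(inner ℂ ((ContinuousLinearMap.adjoint M₀) (M₀ q)) q : ℂ)‖
        = ‖M₀ q‖ ^ 2 := by
      rw [ContinuousLinearMap.adjoint_inner_left]
      rw [inner_self_eq_norm_sq_to_K]
      simp [norm_pow]
    have hbound : ‖M₀ q‖ ^ 2 ≤ ‖(ContinuousLinearMap.adjoint M₀) (M₀ q)‖ * ‖q‖ := by
      rw [← hinner]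
      exact norm_inner_le_norm _ _
    have hq1 : c₀ * ‖q‖ ≤ ‖M₀ q‖ := h1 q hq
    rcases eq_or_lt_of_le (norm_nonneg (M₀ q)) with h0 | h0
    · rw [← h0, mul_zero]; positivity
    · nlinarith [norm_nonneg ((ContinuousLinearMap.adjoint M₀) (M₀ q)), norm_nonneg q]
  have h2' : ∀ v ∈ LinearMap.ker ((ContinuousLinearMap.adjoint M₀ : H →L[ℂ] H) : H →ₗ[ℂ] H), ‖v‖ ≤ k *
      ‖(Submodule.orthogonalProjectionOnto (LinearMap.ker (M₀ : H →ₗ[ℂ] H)) ((ContinuousLinearMap.adjoint M₁) v) : H)‖ := by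
    intro v hv
    rw [hkeradj] at hv
    have hS1' : (ContinuousLinearMap.adjoint S).comp (ContinuousLinearMap.adjoint G) =
        ContinuousLinearMap.id ℂ ↥V := by
      have := congrArg ContinuousLinearMap.adjoint hS1
      rwa [ContinuousLinearMap.adjoint_comp, ContinuousLinearMap.adjoint_id] at this
    have hGadj : ContinuousLinearMap.adjoint G =
        ((Submodule.orthogonalProjectionOnto (LinearMap.ker (M₀ : H →ₗ[ℂ] H))).comp
          (ContinuousLinearMap.adjoint M₁)).comp V.subtypeL := by
      rw [hGdef, ContinuousLinearMap.adjoint_comp, ContinuousLinearMap.adjoint_comp,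
        Submodule.adjoint_subtypeL, Submodule.adjoint_orthogonalProjection,
        ContinuousLinearMap.comp_assoc]
    have happ : (ContinuousLinearMap.adjoint S) ((ContinuousLinearMap.adjoint G) ⟨v, hv⟩)
        = ⟨v, hv⟩ := by
      have := congrArg (fun f : ↥V →L[ℂ] ↥V => f ⟨v, hv⟩) hS1'
      simpa using this
    have hGv : ((ContinuousLinearMap.adjoint G) ⟨v, hv⟩ : H)
        = (Submodule.orthogonalProjectionOnto (LinearMap.ker (M₀ : H →ₗ[ℂ] H)) ((ContinuousLinearMap.adjoint M₁) v) : H) := by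
      rw [hGadj]; rfl
    have hnormadj : ‖ContinuousLinearMap.adjoint S‖ = k := by
      rw [hkdef]
      exact LinearIsometryEquiv.norm_map ContinuousLinearMap.adjoint S
    calc ‖v‖ = ‖(ContinuousLinearMap.adjoint S) ((ContinuousLinearMap.adjoint G) ⟨v, hv⟩)‖ := by
          rw [happ]; rfl
    _ ≤ ‖ContinuousLinearMap.adjoint S‖ * ‖(ContinuousLinearMap.adjoint G) ⟨v, hv⟩‖ :=
          (ContinuousLinearMap.adjoint S).le_opNorm _
    _ = k * ‖(Submodule.orthogonalProjectionOnto (LinearMap.ker (M₀ : H →ₗ[ℂ] H))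
          ((ContinuousLinearMap.adjoint M₁) v) : H)‖ := by
          rw [hnormadj]
          congr 1
          show ‖(((ContinuousLinearMap.adjoint G) ⟨v, hv⟩ : ↥(LinearMap.ker (M₀ : H →ₗ[ℂ] H))) : H)‖ = _
          rw [hGv]
  -- the two bounded-below estimates
  have hnormM₁ : ‖ContinuousLinearMap.adjoint M₁‖ = ‖M₁‖ :=
    LinearIsometryEquiv.norm_map ContinuousLinearMap.adjoint M₁
  set ν : ℝ := (1 + ‖M₁‖ + k * ‖M₁‖ ^ 2) / c₀ with hν
  set C : ℝ := (1 + k * ‖M₁‖) ^ 2 + k with hC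
  have hC0 : 0 ≤ C := by positivity
  have bd1 : ∀ z : ℂ, ν < z.re → ∀ x : H, ‖x‖ ≤ C * ‖(z • M₀ + M₁) x‖ :=
    my_pencil_below M₀ M₁ V c₀ k hc₀ hk hAV1 h1 h2
  have bd2 : ∀ z : ℂ, ν < z.re → ∀ x : H, ‖x‖ ≤ C *
      ‖(z • (ContinuousLinearMap.adjoint M₀) + ContinuousLinearMap.adjoint M₁) x‖ := by
    have := my_pencil_below (ContinuousLinearMap.adjoint M₀) (ContinuousLinearMap.adjoint M₁)
      (LinearMap.ker (M₀ : H →ₗ[ℂ] H)) c₀ k hc₀ hk hAV2 h1' h2'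
    rwa [hnormM₁] at this
  refine ⟨ν, C, ?_⟩
  intro z hz
  set T : H →L[ℂ] H := z • M₀ + M₁ with hT
  have hb1 : ∀ x : H, ‖x‖ ≤ C * ‖T x‖ := bd1 z hz
  have hTadj : ContinuousLinearMap.adjoint T =
      (starRingEnd ℂ z) • ContinuousLinearMap.adjoint M₀ + ContinuousLinearMap.adjoint M₁ := by
    rw [hT, map_add]
    congr 1
    exact LinearIsometryEquiv.map_smulₛₗ ContinuousLinearMap.adjoint z M₀
  have hb2 : ∀ x : H, ‖x‖ ≤ C * ‖(ContinuousLinearMap.adjoint T) x‖ := by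
    intro x
    rw [hTadj]
    exact bd2 (starRingEnd ℂ z) (by simpa using hz) x
  have hker : LinearMap.ker (T : H →ₗ[ℂ] H) = ⊥ := by
    rw [LinearMap.ker_eq_bot']
    intro x hx
    have := hb1 x
    rw [show T x = 0 from hx, norm_zero, mul_zero] at this
    exact norm_le_zero_iff.mp this
  have hrange : LinearMap.range (T : H →ₗ[ℂ] H) = ⊤ := by
    have horth : (LinearMap.range (T : H →ₗ[ℂ] H))ᗮ = ⊥ := by
      rw [← my_ker_adjoint T, LinearMap.ker_eq_bot']
      intro x hx
      have := hb2 x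
      rw [show (ContinuousLinearMap.adjoint T) x = 0 from hx, norm_zero, mul_zero] at this
      exact norm_le_zero_iff.mp this
    have hanti : AntilipschitzWith C.toNNReal T := by
      apply T.antilipschitz_of_bound
      intro x
      calc ‖x‖ ≤ C * ‖T x‖ := hb1 x
      _ ≤ C.toNNReal * ‖T x‖ := by
          gcongr
          exact Real.le_coe_toNNReal C
    have hclosed : (LinearMap.range (T : H →ₗ[ℂ] H)).topologicalClosure = LinearMap.range (T : H →ₗ[ℂ] H) :=
      ContinuousLinearMap.closed_range_of_antilipschitz hanti
    haveI : CompleteSpace (LinearMap.range (T : H →ₗ[ℂ] H)) := by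
      rw [← hclosed]
      exact (LinearMap.range (T : H →ₗ[ℂ] H)).isClosed_topologicalClosure.completeSpace_coe
    rw [← Submodule.orthogonal_orthogonal (LinearMap.range (T : H →ₗ[ℂ] H)), horth,
      Submodule.bot_orthogonal_eq_top]
  set e := ContinuousLinearEquiv.ofBijective T hker hrange with he
  refine ⟨(e.symm : H →L[ℂ] H), ?_, ?_, ?_⟩
  · ext x
    exact ContinuousLinearEquiv.ofBijective_apply_symm_apply T hker hrange x
  · ext x
    exact ContinuousLinearEquiv.ofBijective_symm_apply_apply T hker hrange x
  · apply ContinuousLinearMap.opNorm_le_bound _ hC0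
    intro y
    calc ‖(e.symm : H →L[ℂ] H) y‖ ≤ C * ‖T ((e.symm : H →L[ℂ] H) y)‖ := hb1 _
    _ = C * ‖y‖ := by
        rw [show T ((e.symm : H →L[ℂ] H) y) = y from
          ContinuousLinearEquiv.ofBijective_apply_symm_apply T hker hrange y]
end
end

section
/- Let H be a Hilbert space and M₀, M₁ ∈ L(H) with R(M₀) closed and the pencil z ↦ zM₀ + M₁ regular. Then the spectrum σ(𝓜) := {z ∈ ℂ : zM₀ + M₁ is not boundedly invertible} is compact. -/
set_option synthInstance.maxHeartbeats 1000000
set_option maxHeartbeats 1000000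

open MeasureTheory Filter Set Complex
open scoped Topology

noncomputable section

variable {H : Type*} [NormedAddCommGroup H] [InnerProductSpace ℂ H] [CompleteSpace H]

lemma aux_near_unit {A B : H →L[ℂ] H} {c : ℝ} (hc : 0 < c) (hA : IsUnit A)
    (hlow : ∀ x, c * ‖x‖ ≤ ‖A x‖) (hAB : ‖B - A‖ < c) : IsUnit B := by
  obtain ⟨u, rfl⟩ := hA
  have hinv : ∀ y, ‖(↑u⁻¹ : H →L[ℂ] H) y‖ ≤ c⁻¹ * ‖y‖ := by
    intro y
    have h1 : (↑u : H →L[ℂ] H) ((↑u⁻¹ : H →L[ℂ] H) y) = y := by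
      rw [← ContinuousLinearMap.mul_apply, u.mul_inv, ContinuousLinearMap.one_apply]
    have h2 := hlow ((↑u⁻¹ : H →L[ℂ] H) y)
    rw [h1] at h2
    rw [inv_mul_eq_div, le_div_iff₀ hc]
    linarith [h2]
  have hnorm : ‖(↑u⁻¹ : H →L[ℂ] H)‖ ≤ c⁻¹ :=
    ContinuousLinearMap.opNorm_le_bound _ (by positivity) hinv
  rcases eq_or_lt_of_le (norm_nonneg (↑u⁻¹ : H →L[ℂ] H)) with h0 | h0
  · -- degenerate: the ring is trivial
    have hz : (↑u⁻¹ : H →L[ℂ] H) = 0 := by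
      rw [← norm_eq_zero]; exact h0.symm
    have h10 : (1 : H →L[ℂ] H) = 0 := by
      have := u.mul_inv
      rw [hz, mul_zero] at this
      exact this.symm
    have : Subsingleton (H →L[ℂ] H) := subsingleton_of_zero_eq_one h10.symm
    exact isUnit_of_subsingleton B
  · have hcle : c ≤ ‖(↑u⁻¹ : H →L[ℂ] H)‖⁻¹ := by
      rw [← inv_inv c]
      exact inv_anti₀ h0 hnorm
    have h' : ‖B - ↑u‖ < ‖(↑u⁻¹ : H →L[ℂ] H)‖⁻¹ := lt_of_lt_of_le hAB hcle
    have := (u.ofNearby B h').isUnit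
    simpa using this

lemma aux_closed_range (M₀ : H →L[ℂ] H) (hR : IsClosed (LinearMap.range (M₀ : H →ₗ[ℂ] H) : Set H)) :
    ∃ Ke : ℝ, 1 ≤ Ke ∧
      (∀ x ∈ (LinearMap.ker (M₀ : H →ₗ[ℂ] H))ᗮ, ‖x‖ ≤ Ke * ‖M₀ x‖) ∧
      (∀ y ∈ LinearMap.range (M₀ : H →ₗ[ℂ] H), ∃ u, M₀ u = y ∧ ‖u‖ ≤ Ke * ‖y‖) := by
  set K0 := LinearMap.ker (M₀ : H →ₗ[ℂ] H) with hK0def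
  set R0 := LinearMap.range (M₀ : H →ₗ[ℂ] H) with hR0def
  haveI : CompleteSpace R0 := hR.completeSpace_coe
  haveI : CompleteSpace K0 := (ContinuousLinearMap.isClosed_ker M₀).completeSpace_coe
  haveI : CompleteSpace (K0ᗮ : Submodule ℂ H) := K0.isClosed_orthogonal.completeSpace_coe
  have hsub : ∀ x : K0ᗮ, (M₀.comp K0ᗮ.subtypeL) x ∈ R0 := fun x => LinearMap.mem_range_self _ _
  set f : K0ᗮ →L[ℂ] R0 := (M₀.comp K0ᗮ.subtypeL).codRestrict R0 hsub with hfdef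
  have hfapply : ∀ x : K0ᗮ, (f x : H) = M₀ x := fun x => rfl
  have hker : LinearMap.ker (f : K0ᗮ →ₗ[ℂ] R0) = ⊥ := by
    rw [Submodule.eq_bot_iff]
    intro x hx
    have h1 : M₀ (x : H) = 0 := by
      have := congrArg (Subtype.val) (LinearMap.mem_ker.mp hx)
      simpa [hfapply] using this
    have h2 : (x : H) ∈ K0 := h1
    have := (Submodule.orthogonal_disjoint K0).le_bot ⟨h2, x.2⟩
    exact Subtype.ext (by simpa using this)
  have hrange : LinearMap.range (f : K0ᗮ →ₗ[ℂ] R0) = ⊤ := by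
    rw [Submodule.eq_top_iff']
    rintro ⟨y, x, rfl⟩
    refine ⟨⟨x - (Submodule.orthogonalProjectionOnto K0 x : H), Submodule.sub_starProjection_mem_orthogonal x⟩, ?_⟩
    apply Subtype.ext
    have hk : M₀ ((Submodule.orthogonalProjectionOnto K0 x : H)) = 0 := (Submodule.orthogonalProjectionOnto K0 x).2
    simp [hfapply, map_sub, hk, show M₀ (K0.starProjection x) = 0 from hk]
  set e := ContinuousLinearEquiv.ofBijective f hker hrange with hedef
  set Ke := max ‖(e.symm : R0 →L[ℂ] K0ᗮ)‖ 1 with hKedef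
  have hKe1 : (1:ℝ) ≤ Ke := le_max_right _ _
  refine ⟨Ke, hKe1, ?_, ?_⟩
  · intro x hx
    have h1 : (⟨x, hx⟩ : K0ᗮ) = e.symm (e ⟨x, hx⟩) := (e.symm_apply_apply _).symm
    have h2 : ‖e.symm (e ⟨x, hx⟩)‖ ≤ ‖(e.symm : R0 →L[ℂ] K0ᗮ)‖ * ‖e ⟨x, hx⟩‖ :=
      (e.symm : R0 →L[ℂ] K0ᗮ).le_opNorm _
    have h3 : ‖e ⟨x, hx⟩‖ = ‖M₀ x‖ := by
      have : ((e ⟨x, hx⟩ : R0) : H) = M₀ x := hfapply _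
      rw [← this]; rfl
    calc ‖x‖ = ‖e.symm (e ⟨x, hx⟩)‖ := by rw [← h1]; rfl
    _ ≤ ‖(e.symm : R0 →L[ℂ] K0ᗮ)‖ * ‖M₀ x‖ := by rw [← h3]; exact h2
    _ ≤ Ke * ‖M₀ x‖ := by
        apply mul_le_mul_of_nonneg_right (le_max_left _ _) (norm_nonneg _)
  · intro y hy
    refine ⟨(e.symm ⟨y, hy⟩ : H), ?_, ?_⟩
    · have h1 := congrArg Subtype.val (e.apply_symm_apply ⟨y, hy⟩)
      rw [← hfapply]
      exact h1
    · have h2 : ‖e.symm ⟨y, hy⟩‖ ≤ ‖(e.symm : R0 →L[ℂ] K0ᗮ)‖ * ‖(⟨y, hy⟩ : R0)‖ :=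
        (e.symm : R0 →L[ℂ] K0ᗮ).le_opNorm _
      have h3 : ‖(⟨y, hy⟩ : R0)‖ = ‖y‖ := rfl
      calc ‖(e.symm ⟨y, hy⟩ : H)‖ = ‖e.symm ⟨y, hy⟩‖ := rfl
      _ ≤ ‖(e.symm : R0 →L[ℂ] K0ᗮ)‖ * ‖y‖ := by rw [← h3]; exact h2
      _ ≤ Ke * ‖y‖ := mul_le_mul_of_nonneg_right (le_max_left _ _) (norm_nonneg _)

lemma aux_ker (M₀ M₁ : H →L[ℂ] H) (hR : IsClosed (LinearMap.range (M₀ : H →ₗ[ℂ] H) : Set H))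
    [inst : Submodule.HasOrthogonalProjection (LinearMap.range (M₀ : H →ₗ[ℂ] H))]
    (ν C : ℝ) (hC : 0 < C)
    (hreg : ∀ z : ℂ, ν < z.re → ∃ S : H →L[ℂ] H, S * (z • M₀ + M₁) = 1 ∧ ‖S‖ ≤ C) :
    ∀ x ∈ LinearMap.ker (M₀ : H →ₗ[ℂ] H),
      ‖x‖ ≤ 2 * C * ‖M₁ x - (Submodule.orthogonalProjectionOnto (LinearMap.range (M₀ : H →ₗ[ℂ] H)) (M₁ x) : H)‖ := by
  obtain ⟨Ke, hKe1, _, hpre⟩ := aux_closed_range M₀ hR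
  set R0 := LinearMap.range (M₀ : H →ₗ[ℂ] H) with hR0def
  set a := 1 + C * ‖M₁‖ with hadef
  have ha1 : (1:ℝ) ≤ a := by
    have : 0 ≤ C * ‖M₁‖ := by positivity
    linarith
  set w : ℝ := max (ν + 1) (2 * a * (Ke * ‖M₁‖) + 1) with hwdef
  have hw1 : (1:ℝ) ≤ w := by
    have : (0:ℝ) ≤ 2 * a * (Ke * ‖M₁‖) := by positivity
    have := le_max_right (ν + 1) (2 * a * (Ke * ‖M₁‖) + 1)
    linarith
  have hwpos : (0:ℝ) < w := by linarith
  have hwre : ν < ((w:ℝ) : ℂ).re := by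
    simp only [Complex.ofReal_re]
    have := le_max_left (ν + 1) (2 * a * (Ke * ‖M₁‖) + 1)
    linarith
  obtain ⟨S, hS2, hSn⟩ := hreg ((w:ℝ) : ℂ) hwre
  have hCnn : (0:ℝ) ≤ C := le_of_lt hC
  -- S ∘ T = id pointwise
  have hSid : ∀ v : H, S (((w:ℝ):ℂ) • M₀ v + M₁ v) = v := by
    intro v
    have := congrArg (fun (f : H →L[ℂ] H) => f v) hS2
    simpa [ContinuousLinearMap.mul_apply] using this
  have hSM₀ : ∀ v : H, ‖S (M₀ v)‖ ≤ (a / w) * ‖v‖ := by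
    intro v
    have h := hSid v
    rw [map_add, _root_.map_smul] at h
    have h1 : ((w:ℝ):ℂ) • S (M₀ v) = v - S (M₁ v) := eq_sub_of_add_eq h
    have hwc : ((w:ℝ):ℂ) ≠ 0 := by exact_mod_cast hwpos.ne'
    have h2 : S (M₀ v) = ((w:ℝ):ℂ)⁻¹ • (v - S (M₁ v)) := by
      rw [← h1, smul_smul, inv_mul_cancel₀ hwc, one_smul]
    have hn : ‖(((w:ℝ):ℂ))⁻¹‖ = w⁻¹ := by
      rw [norm_inv, Complex.norm_real, Real.norm_eq_abs, abs_of_pos hwpos]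
    have h3 : ‖v - S (M₁ v)‖ ≤ a * ‖v‖ := by
      have hb : ‖S (M₁ v)‖ ≤ C * (‖M₁‖ * ‖v‖) := by
        calc ‖S (M₁ v)‖ ≤ ‖S‖ * ‖M₁ v‖ := S.le_opNorm _
        _ ≤ C * (‖M₁‖ * ‖v‖) := by
            apply mul_le_mul hSn (M₁.le_opNorm v) (norm_nonneg _) hCnn
      calc ‖v - S (M₁ v)‖ ≤ ‖v‖ + ‖S (M₁ v)‖ := norm_sub_le _ _
      _ ≤ ‖v‖ + C * (‖M₁‖ * ‖v‖) := by linarith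
      _ = a * ‖v‖ := by rw [hadef]; ring
    calc ‖S (M₀ v)‖ = w⁻¹ * ‖v - S (M₁ v)‖ := by rw [h2, norm_smul, hn]
    _ ≤ w⁻¹ * (a * ‖v‖) := by
        apply mul_le_mul_of_nonneg_left h3 (by positivity)
    _ = (a / w) * ‖v‖ := by field_simp
  intro x hx
  have hx0 : M₀ x = 0 := hx
  set m := M₁ x with hmdef
  set m₁ : H := (Submodule.orthogonalProjectionOnto R0 m : H) with hm₁def
  have hm₁mem : m₁ ∈ R0 := (Submodule.orthogonalProjectionOnto R0 m).2
  obtain ⟨u, hu1, hu2⟩ := hpre m₁ hm₁mem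
  have hxm : x = S m := by
    have h := hSid x
    rw [hx0, smul_zero, zero_add] at h
    exact h.symm
  have hsplit : x = S (M₀ u) + S (m - m₁) := by
    rw [hu1, ← map_add, hxm]
    congr 1
    abel
  have hm₁n : ‖m₁‖ ≤ ‖M₁‖ * ‖x‖ := by
    have h2 : ‖Submodule.orthogonalProjectionOnto R0 m‖ ≤ 1 * ‖m‖ := by
      calc ‖Submodule.orthogonalProjectionOnto R0 m‖ ≤ ‖Submodule.orthogonalProjectionOnto R0‖ * ‖m‖ :=
            (Submodule.orthogonalProjectionOnto R0).le_opNorm m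
      _ ≤ 1 * ‖m‖ := by
          apply mul_le_mul_of_nonneg_right (Submodule.orthogonalProjectionOnto_norm_le R0) (norm_nonneg _)
    have h3 : ‖m‖ ≤ ‖M₁‖ * ‖x‖ := M₁.le_opNorm x
    have h1 : ‖m₁‖ = ‖Submodule.orthogonalProjectionOnto R0 m‖ := rfl
    rw [h1]; linarith
  have key : ‖x‖ ≤ ((a/w) * (Ke * ‖M₁‖)) * ‖x‖ + C * ‖m - m₁‖ := by
    have hb1 : ‖S (M₀ u)‖ ≤ (a/w) * (Ke * (‖M₁‖ * ‖x‖)) := by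
      calc ‖S (M₀ u)‖ ≤ (a/w) * ‖u‖ := hSM₀ u
      _ ≤ (a/w) * (Ke * ‖m₁‖) := by
          apply mul_le_mul_of_nonneg_left hu2 (by positivity)
      _ ≤ (a/w) * (Ke * (‖M₁‖ * ‖x‖)) := by
          apply mul_le_mul_of_nonneg_left _ (by positivity)
          apply mul_le_mul_of_nonneg_left hm₁n (by linarith)
    have hb2 : ‖S (m - m₁)‖ ≤ C * ‖m - m₁‖ := by
      calc ‖S (m - m₁)‖ ≤ ‖S‖ * ‖m - m₁‖ := S.le_opNorm _
      _ ≤ C * ‖m - m₁‖ := mul_le_mul_of_nonneg_right hSn (norm_nonneg _)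
    calc ‖x‖ ≤ ‖S (M₀ u)‖ + ‖S (m - m₁)‖ := by rw [hsplit]; exact norm_add_le _ _
    _ ≤ (a/w) * (Ke * (‖M₁‖ * ‖x‖)) + C * ‖m - m₁‖ := by linarith
    _ = ((a/w) * (Ke * ‖M₁‖)) * ‖x‖ + C * ‖m - m₁‖ := by ring
  have hcoef : (a/w) * (Ke * ‖M₁‖) ≤ 1/2 := by
    rw [div_mul_eq_mul_div, div_le_iff₀ hwpos]
    have hwge : 2 * a * (Ke * ‖M₁‖) + 1 ≤ w := le_max_right _ _
    nlinarith
  have hxx : ‖x‖ ≤ (1/2) * ‖x‖ + C * ‖m - m₁‖ := by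
    have h0 : ((a/w) * (Ke * ‖M₁‖)) * ‖x‖ ≤ (1/2) * ‖x‖ :=
      mul_le_mul_of_nonneg_right hcoef (norm_nonneg _)
    linarith
  have : ‖x‖ ≤ 2 * C * ‖m - m₁‖ := by linarith
  exact this

theorem stmt_2 (M₀ M₁ : H →L[ℂ] H)
    (hR : IsClosed (LinearMap.range (M₀ : H →ₗ[ℂ] H) : Set H))
    (hreg : ∃ ν C : ℝ, ∀ z : ℂ, ν < z.re →
      ∃ S : H →L[ℂ] H, (z • M₀ + M₁).comp S = ContinuousLinearMap.id ℂ H ∧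
        S.comp (z • M₀ + M₁) = ContinuousLinearMap.id ℂ H ∧ ‖S‖ ≤ C) :
    IsCompact {z : ℂ | ¬ IsUnit (z • M₀ + M₁)} := by
  obtain ⟨ν, C0, hregC⟩ := hreg
  set C := max C0 1 with hCdef
  have hC : (0:ℝ) < C := lt_of_lt_of_le one_pos (le_max_right _ _)
  have hreg' : ∀ z : ℂ, ν < z.re → ∃ S : H →L[ℂ] H,
      (z • M₀ + M₁) * S = 1 ∧ S * (z • M₀ + M₁) = 1 ∧ ‖S‖ ≤ C := by
    intro z hz
    obtain ⟨S, h1, h2, h3⟩ := hregC z hz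
    exact ⟨S, by rw [ContinuousLinearMap.mul_def, h1, ContinuousLinearMap.one_def],
      by rw [ContinuousLinearMap.mul_def, h2, ContinuousLinearMap.one_def],
      le_trans h3 (le_max_left _ _)⟩
  have hcont : Continuous fun z : ℂ => z • M₀ + M₁ :=
    (continuous_id.smul continuous_const).add continuous_const
  haveI : CompleteSpace (LinearMap.range (M₀ : H →ₗ[ℂ] H)) := hR.completeSpace_coe
  haveI : CompleteSpace (LinearMap.ker (M₀ : H →ₗ[ℂ] H)) := (ContinuousLinearMap.isClosed_ker M₀).completeSpace_coe
  set R0 := LinearMap.range (M₀ : H →ₗ[ℂ] H) with hR0def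
  set K0 := LinearMap.ker (M₀ : H →ₗ[ℂ] H) with hK0def
  obtain ⟨Ke, hKe1, hlowM₀, hpre⟩ := aux_closed_range M₀ hR
  have hker := aux_ker M₀ M₁ hR ν C hC (fun z hz => by
    obtain ⟨S, _, h2, h3⟩ := hreg' z hz; exact ⟨S, h2, h3⟩)
  set nM₁ := ‖M₁‖ with hnM₁def
  have hnM₁0 : 0 ≤ nM₁ := norm_nonneg _
  -- the "orthogonal complement part" operator
  set Pm : H →L[ℂ] H :=
    ContinuousLinearMap.id ℂ H - (Submodule.subtypeL R0).comp (Submodule.orthogonalProjectionOnto R0) with hPmdef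
  have hPv : ∀ v : H, Pm v = v - (Submodule.orthogonalProjectionOnto R0 v : H) := by
    intro v; simp [hPmdef, ContinuousLinearMap.sub_apply]
  have hPcontr : ∀ v : H, ‖Pm v‖ ≤ ‖v‖ := by
    intro v
    rw [hPv, show v - (Submodule.orthogonalProjectionOnto R0 v : H) = (Submodule.orthogonalProjectionOnto R0ᗮ v : H) from (Submodule.starProjection_orthogonal_val (K := R0) v).symm]
    calc ‖(Submodule.orthogonalProjectionOnto R0ᗮ v : H)‖ = ‖Submodule.orthogonalProjectionOnto R0ᗮ v‖ := rfl
    _ ≤ ‖Submodule.orthogonalProjectionOnto R0ᗮ‖ * ‖v‖ := (Submodule.orthogonalProjectionOnto R0ᗮ).le_opNorm v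
    _ ≤ 1 * ‖v‖ := mul_le_mul_of_nonneg_right (Submodule.orthogonalProjectionOnto_norm_le _) (norm_nonneg _)
    _ = ‖v‖ := one_mul _
  have hPR0 : ∀ v ∈ R0, Pm v = 0 := by
    intro v hv
    rw [hPv, show ((Submodule.orthogonalProjectionOnto R0 v : R0) : H) = v from Submodule.starProjection_eq_self_iff.mpr hv, sub_self]
  have hker' : ∀ x ∈ K0, ‖x‖ ≤ 2 * C * ‖Pm (M₁ x)‖ := by
    intro x hx
    rw [hPv]
    exact hker x hx
  set D := (2 * C * nM₁ + 1) * Ke with hDdef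
  have hD0 : 0 < D := by positivity
  set Rb := max 1 (2 * D * nM₁ + 1) with hRbdef
  have hRb1 : (1:ℝ) ≤ Rb := le_max_left _ _
  have hRb2 : 2 * D * nM₁ + 1 ≤ Rb := le_max_right _ _
  set clow := (2 * (2 * C + D))⁻¹ with hclowdef
  have hclow0 : 0 < clow := by positivity
  -- uniform lower bound for large |z|
  have hlow : ∀ z : ℂ, Rb ≤ ‖z‖ → ∀ x : H, clow * ‖x‖ ≤ ‖(z • M₀ + M₁) x‖ := by
    intro z hz x
    set q : H := (Submodule.orthogonalProjectionOnto K0 x : H) with hqdef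
    set r : H := x - q with hrdef
    have hqK : q ∈ K0 := (Submodule.orthogonalProjectionOnto K0 x).2
    have hrK : r ∈ K0ᗮ := Submodule.sub_starProjection_mem_orthogonal x
    set y := (z • M₀ + M₁) x with hydef
    have hyx : y = z • M₀ x + M₁ x := by
      simp [hydef, ContinuousLinearMap.add_apply, ContinuousLinearMap.smul_apply]
    have hM₀q : M₀ q = 0 := hqK
    have hM₀x : M₀ x = M₀ r := by rw [hrdef, map_sub, hM₀q, sub_zero]
    set Z := ‖z‖ with hZdef
    have hZ1 : (1:ℝ) ≤ Z := le_trans hRb1 hz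
    have hZpos : (0:ℝ) < Z := by linarith
    have est1 : Z * ‖r‖ ≤ Ke * (‖y‖ + nM₁ * ‖x‖) := by
      have h1 : ‖r‖ ≤ Ke * ‖M₀ r‖ := hlowM₀ r hrK
      have h2 : z • M₀ x = y - M₁ x := by rw [hyx]; abel
      have h3 : ‖z • M₀ x‖ = Z * ‖M₀ x‖ := norm_smul z (M₀ x)
      have h4 : ‖y - M₁ x‖ ≤ ‖y‖ + nM₁ * ‖x‖ := by
        have := M₁.le_opNorm x
        have := norm_sub_le y (M₁ x)
        linarith
      calc Z * ‖r‖ ≤ Z * (Ke * ‖M₀ r‖) := mul_le_mul_of_nonneg_left h1 (le_of_lt hZpos)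
      _ = Ke * (Z * ‖M₀ x‖) := by rw [hM₀x]; ring
      _ = Ke * ‖y - M₁ x‖ := by rw [← h3, h2]
      _ ≤ Ke * (‖y‖ + nM₁ * ‖x‖) := by
          apply mul_le_mul_of_nonneg_left h4 (by linarith)
    have est2 : ‖q‖ ≤ 2 * C * (‖y‖ + nM₁ * ‖r‖) := by
      have hq1 : ‖q‖ ≤ 2 * C * ‖Pm (M₁ q)‖ := hker' q hqK
      have hsplit : Pm (M₁ q) = Pm y - Pm (M₁ r) := by
        have hmq : M₁ q = (y - z • M₀ x) - M₁ r := by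
          rw [hyx, hrdef, map_sub]; abel
        have hz0 : Pm (z • M₀ x) = 0 :=
          hPR0 _ (Submodule.smul_mem _ _ (LinearMap.mem_range_self _ x))
        rw [hmq, map_sub, map_sub, hz0, sub_zero]
      have hb : ‖Pm (M₁ q)‖ ≤ ‖y‖ + nM₁ * ‖r‖ := by
        have h5 : ‖Pm (M₁ r)‖ ≤ nM₁ * ‖r‖ := le_trans (hPcontr _) (M₁.le_opNorm r)
        have h6 : ‖Pm y‖ ≤ ‖y‖ := hPcontr y
        calc ‖Pm (M₁ q)‖ ≤ ‖Pm y‖ + ‖Pm (M₁ r)‖ := by rw [hsplit]; exact norm_sub_le _ _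
        _ ≤ ‖y‖ + nM₁ * ‖r‖ := by linarith
      calc ‖q‖ ≤ 2 * C * ‖Pm (M₁ q)‖ := hq1
      _ ≤ 2 * C * (‖y‖ + nM₁ * ‖r‖) := by
          apply mul_le_mul_of_nonneg_left hb (by linarith)
    have hxqr : ‖x‖ ≤ ‖q‖ + ‖r‖ := by
      have : x = q + r := by rw [hrdef]; abel
      rw [this]; exact norm_add_le _ _
    -- combine
    have hZRb : 2 * D * nM₁ + 1 ≤ Z := le_trans hRb2 hz
    have h1 : Z * ‖x‖ ≤ Z * (‖q‖ + ‖r‖) := mul_le_mul_of_nonneg_left hxqr (le_of_lt hZpos)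
    have h2 : Z * ‖q‖ ≤ Z * (2 * C * (‖y‖ + nM₁ * ‖r‖)) :=
      mul_le_mul_of_nonneg_left est2 (le_of_lt hZpos)
    have h3 : (2 * C * nM₁ + 1) * (Z * ‖r‖) ≤ D * (‖y‖ + nM₁ * ‖x‖) := by
      calc (2 * C * nM₁ + 1) * (Z * ‖r‖) ≤ (2 * C * nM₁ + 1) * (Ke * (‖y‖ + nM₁ * ‖x‖)) :=
            mul_le_mul_of_nonneg_left est1 (by positivity)
      _ = ((2 * C * nM₁ + 1) * Ke) * (‖y‖ + nM₁ * ‖x‖) := by ring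
      _ = D * (‖y‖ + nM₁ * ‖x‖) := by rw [hDdef]
    have h4 : 0 ≤ (Z - 1) * (D * ‖y‖) :=
      mul_nonneg (by linarith) (by positivity)
    have h5 : 0 ≤ (Z - 1 - 2 * D * nM₁) * ‖x‖ :=
      mul_nonneg (by linarith) (norm_nonneg x)
    have hfin : Z * ‖x‖ ≤ Z * (2 * (2 * C + D) * ‖y‖) := by
      nlinarith [h1, h2, h3, h4, h5, norm_nonneg x]
    have hxy : ‖x‖ ≤ 2 * (2 * C + D) * ‖y‖ := le_of_mul_le_mul_left hfin hZpos
    rw [hclowdef]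
    rw [inv_mul_le_iff₀ (by positivity)]
    calc ‖x‖ ≤ 2 * (2 * C + D) * ‖y‖ := hxy
    _ = 2 * (2 * C + D) * ‖(z • M₀ + M₁) x‖ := rfl
  -- large |z| gives units, via connectedness
  have hbig : ∀ z : ℂ, Rb < ‖z‖ → IsUnit (z • M₀ + M₁) := by
    by_contra hcon
    push_neg at hcon
    obtain ⟨z₀, hz₀R, hz₀⟩ := hcon
    set U : Set ℂ := {z | Rb < ‖z‖} with hUdef
    have hRb0 : (0:ℝ) < Rb := by linarith
    have hUconn : IsPreconnected U := by
      have hUeq : U = (fun p : ℝ × ℝ => (p.1 : ℂ) * Complex.exp (p.2 * Complex.I)) ''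
          ((Set.Ioi Rb) ×ˢ (Set.univ : Set ℝ)) := by
        ext z
        constructor
        · intro hz
          refine ⟨(‖z‖, Complex.arg z), ⟨?_, trivial⟩, ?_⟩
          · exact hz
          · exact Complex.norm_mul_exp_arg_mul_I z
        · rintro ⟨⟨rr, t⟩, ⟨hrr, -⟩, rfl⟩
          have hrrpos : 0 < rr := lt_trans hRb0 hrr
          show Rb < ‖(rr:ℂ) * Complex.exp ((t:ℂ) * Complex.I)‖
          rw [norm_mul, Complex.norm_exp_ofReal_mul_I,
            mul_one, Complex.norm_real, Real.norm_eq_abs, abs_of_pos hrrpos]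
          exact hrr
      rw [hUeq]
      apply (isPreconnected_Ioi.prod isPreconnected_univ).image
      apply Continuous.continuousOn
      exact (Complex.continuous_ofReal.comp continuous_fst).mul
        (Complex.continuous_exp.comp
          ((Complex.continuous_ofReal.comp continuous_snd).mul continuous_const))
    set Vu : Set ℂ := {z | IsUnit (z • M₀ + M₁)} with hVudef
    have hVuopen : IsOpen Vu := Units.isOpen.preimage hcont
    set Vn : Set ℂ := {z | Rb < ‖z‖ ∧ ¬ IsUnit (z • M₀ + M₁)} with hVndef
    have hVnopen : IsOpen Vn := by
      rw [Metric.isOpen_iff]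
      intro z hz
      obtain ⟨hz1, hz2⟩ := hz
      have hzRb : 0 < ‖z‖ - Rb := by linarith
      refine ⟨min (‖z‖ - Rb) (clow / (‖M₀‖ + 1)), lt_min hzRb (by positivity), ?_⟩
      intro z' hz'
      rw [Metric.mem_ball, Complex.dist_eq] at hz'
      have hd1 : ‖z' - z‖ < ‖z‖ - Rb := lt_of_lt_of_le hz' (min_le_left _ _)
      have hd2 : ‖z' - z‖ < clow / (‖M₀‖ + 1) := lt_of_lt_of_le hz' (min_le_right _ _)
      have hz'R : Rb < ‖z'‖ := by
        have h := norm_sub_norm_le z z'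
        have : ‖z - z'‖ = ‖z' - z‖ := by
          rw [← norm_neg]
          congr 1
          ring
        rw [this] at h
        linarith
      refine ⟨hz'R, ?_⟩
      intro hz'unit
      apply hz2
      apply aux_near_unit hclow0 hz'unit (hlow z' (le_of_lt hz'R))
      have : (z • M₀ + M₁) - (z' • M₀ + M₁) = (z - z') • M₀ := by
        rw [sub_smul]
        abel
      rw [this, norm_smul]
      have hM₀lt : ‖M₀‖ < ‖M₀‖ + 1 := by linarith
      have hzz' : ‖z - z'‖ = ‖z' - z‖ := by
        rw [← norm_neg]; congr 1; ring
      rw [hzz']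
      calc ‖z' - z‖ * ‖M₀‖ ≤ ‖z' - z‖ * (‖M₀‖ + 1) := by
            apply mul_le_mul_of_nonneg_left (le_of_lt hM₀lt) (norm_nonneg _)
      _ < (clow / (‖M₀‖ + 1)) * (‖M₀‖ + 1) := by
            apply mul_lt_mul_of_pos_right hd2 (by positivity)
      _ = clow := by field_simp
    have hsub : U ⊆ Vu ∪ Vn := by
      intro z hz
      by_cases h : IsUnit (z • M₀ + M₁)
      · exact Or.inl h
      · exact Or.inr ⟨hz, h⟩
    have h1 : (U ∩ Vu).Nonempty := by
      set w₁ : ℝ := max (ν + 1) (Rb + 1) with hw₁def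
      refine ⟨(w₁ : ℂ), ?_, ?_⟩
      · show Rb < ‖((w₁:ℝ) : ℂ)‖
        rw [Complex.norm_real, Real.norm_eq_abs]
        have h := le_max_right (ν + 1) (Rb + 1)
        rw [abs_of_pos (by linarith)]
        linarith
      · have hre : ν < ((w₁:ℝ) : ℂ).re := by
          simp only [Complex.ofReal_re]
          have := le_max_left (ν + 1) (Rb + 1)
          linarith
        obtain ⟨S, hS1, hS2, -⟩ := hreg' ((w₁:ℝ) : ℂ) hre
        exact ⟨⟨((w₁:ℝ):ℂ) • M₀ + M₁, S, hS1, hS2⟩, rfl⟩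
    have h2 : (U ∩ Vn).Nonempty := ⟨z₀, hz₀R, hz₀R, hz₀⟩
    obtain ⟨z, hzU, hzVu, hzVn⟩ := hUconn Vu Vn hVuopen hVnopen hsub h1 h2
    exact hzVn.2 hzVu
  -- conclude
  have hclosed : IsClosed {z : ℂ | ¬ IsUnit (z • M₀ + M₁)} := by
    have heq : {z : ℂ | ¬ IsUnit (z • M₀ + M₁)} =
        ((fun z : ℂ => z • M₀ + M₁) ⁻¹' {T : H →L[ℂ] H | IsUnit T})ᶜ := by
      ext z; simp [Set.mem_preimage]
    rw [heq]
    exact (Units.isOpen.preimage hcont).isClosed_compl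
  have hbdd : Bornology.IsBounded {z : ℂ | ¬ IsUnit (z • M₀ + M₁)} := by
    apply Bornology.IsBounded.subset (Metric.isBounded_closedBall (x := (0:ℂ)) (r := Rb))
    intro z hz
    rw [Metric.mem_closedBall, Complex.dist_eq, sub_zero]
    by_contra h
    push_neg at h
    exact hz (hbig z h)
  exact Metric.isCompact_of_isClosed_isBounded hclosed hbdd
end
end

section
/- Let H be a Hilbert space, M₀, M₁ ∈ L(H) with R(M₀) closed and the pencil z ↦ zM₀ + M₁ regular. Then there exists R > 0 such that sup_{|z| > R} ‖(zM₀ + M₁)^{-1}‖ < ∞ (in particular zM₀+M₁ is boundedly invertible for all |z| > R). -/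
set_option synthInstance.maxHeartbeats 1000000
set_option maxHeartbeats 1000000

open MeasureTheory Filter Set Complex
open scoped Topology

noncomputable section

variable {H : Type*} [NormedAddCommGroup H] [InnerProductSpace ℂ H] [CompleteSpace H]

namespace Stmt3Aux

open ContinuousLinearMap
open Submodule

lemma norm_proj_le (U : Submodule ℂ H) [HasOrthogonalProjection U] (y : H) :
    ‖(orthogonalProjection U y : H)‖ ≤ ‖y‖ := by
  have := orthogonalProjection_norm_le U
  calc ‖(orthogonalProjection U y : H)‖ = ‖orthogonalProjection U y‖ := rfl
    _ ≤ ‖orthogonalProjection U‖ * ‖y‖ := (orthogonalProjection U).le_opNorm y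
    _ ≤ 1 * ‖y‖ := by gcongr
    _ = ‖y‖ := one_mul _

omit [CompleteSpace H] in
lemma mem_orth_self_zero {U : Submodule ℂ H} {x : H} (h1 : x ∈ U) (h2 : x ∈ Uᗮ) : x = 0 :=
  inner_self_eq_zero.mp ((Submodule.mem_orthogonal U x).1 h2 x h1)

lemma adj_mem_ker_orth (M₀ : H →L[ℂ] H) (x : H) : adjoint M₀ x ∈ (LinearMap.ker (M₀ : H →ₗ[ℂ] H))ᗮ := by
  rw [Submodule.mem_orthogonal]
  intro k hk
  rw [adjoint_inner_right]
  rw [LinearMap.mem_ker] at hk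
  rw [show M₀ k = 0 from hk, inner_zero_left]

lemma adj_orth_zero (M₀ : H →L[ℂ] H) {w : H} (hw : w ∈ (LinearMap.range (M₀ : H →ₗ[ℂ] H))ᗮ) :
    adjoint M₀ w = 0 := by
  apply ext_inner_left ℂ
  intro v
  rw [adjoint_inner_right, inner_zero_right]
  exact (Submodule.mem_orthogonal _ _).1 hw _ (LinearMap.mem_range_self (M₀ : H →ₗ[ℂ] H) v)

lemma inv_of_bb (L : H →L[ℂ] H) {δ : ℝ} (hδ : 0 < δ)
    (h1 : ∀ x, δ * ‖x‖ ≤ ‖L x‖) (h2 : ∀ x, δ * ‖x‖ ≤ ‖adjoint L x‖) :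
    ∃ S : H →L[ℂ] H, L.comp S = ContinuousLinearMap.id ℂ H ∧
      S.comp L = ContinuousLinearMap.id ℂ H ∧ ‖S‖ ≤ δ⁻¹ := by
  have hanti : AntilipschitzWith ⟨δ⁻¹, by positivity⟩ L := by
    apply L.antilipschitz_of_bound
    intro x
    change ‖x‖ ≤ δ⁻¹ * ‖L x‖
    rw [inv_mul_eq_div, le_div_iff₀ hδ, mul_comm]
    exact h1 x
  have hker : LinearMap.ker (L : H →ₗ[ℂ] H) = ⊥ := LinearMap.ker_eq_bot.2 hanti.injective
  have hclosed : IsClosed (LinearMap.range (L : H →ₗ[ℂ] H) : Set H) :=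
    hanti.isClosed_range L.uniformContinuous
  haveI : CompleteSpace (LinearMap.range (L : H →ₗ[ℂ] H)) := hclosed.completeSpace_coe
  have horth : (LinearMap.range (L : H →ₗ[ℂ] H))ᗮ = ⊥ := by
    rw [Submodule.eq_bot_iff]
    intro w hw
    have hLw : adjoint L w = 0 := by
      apply ext_inner_left ℂ
      intro v
      rw [adjoint_inner_right, inner_zero_right]
      exact (Submodule.mem_orthogonal _ _).1 hw _ (LinearMap.mem_range_self (L : H →ₗ[ℂ] H) v)
    have h2w := h2 w
    rw [hLw, norm_zero] at h2w
    have : ‖w‖ ≤ 0 := by nlinarith [norm_nonneg w]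
    simpa using le_antisymm this (norm_nonneg w)
  have htop : LinearMap.range (L : H →ₗ[ℂ] H) = ⊤ := by
    rwa [Submodule.orthogonal_eq_bot_iff] at horth
  let e := ContinuousLinearEquiv.ofBijective L hker htop
  have he : ∀ x, L (e.symm x) = x := fun x => by
    have := e.apply_symm_apply x
    rwa [show ∀ y, e y = L y from fun y => rfl] at this
  refine ⟨e.symm.toContinuousLinearMap, ?_, ?_, ?_⟩
  · ext x; exact he x
  · ext x
    have : e.symm (e x) = x := e.symm_apply_apply x
    exact this
  · apply opNorm_le_bound _ (by positivity)
    intro y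
    have h1y := h1 (e.symm y)
    rw [he y] at h1y
    rw [inv_mul_eq_div, le_div_iff₀ hδ]
    calc ‖e.symm.toContinuousLinearMap y‖ * δ = δ * ‖(e.symm y : H)‖ := by
          simp [mul_comm]
      _ ≤ ‖y‖ := h1y

lemma arith_aux {m β c₁ : ℝ} (hm : 1 ≤ m) (hβ : 0 < β) (hc : 1 ≤ c₁)
    {a b w N zn X : ℝ} (ha : 0 ≤ a) (hb : 0 ≤ b) (hw : 0 ≤ w) (hN : 0 ≤ N)
    (h1 : β * b - m * a ≤ N) (h2a : a ≤ c₁ * w) (h2b : zn * w - m * (a + b) ≤ N)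
    (hz : 2 * m * c₁ * (m + β) ≤ β * zn) (hX : X ≤ a + b) (hX0 : 0 ≤ X) :
    β * m / (2 * m + β) * X ≤ N := by
  have hmpos : (0:ℝ) < m := by linarith
  have hcpos : (0:ℝ) < c₁ := by linarith
  have k1 : 2 * m * (m + β) * a ≤ β * (zn * w) := by
    have e1 : 2 * m * (m + β) * a ≤ 2 * m * (m + β) * (c₁ * w) := by
      have : (0:ℝ) ≤ 2 * m * (m + β) := by positivity
      nlinarith
    have e2 : 2 * m * c₁ * (m + β) * w ≤ β * zn * w :=
      mul_le_mul_of_nonneg_right hz hw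
    nlinarith
  have k2 : β * (zn * w) - β * m * (a + b) ≤ β * N := by nlinarith
  have k3 : 2 * m * (β * b - m * a) ≤ 2 * m * N := by nlinarith
  have key : β * m * (a + b) ≤ (2 * m + β) * N := by nlinarith
  rw [div_mul_eq_mul_div, div_le_iff₀ (by linarith : (0:ℝ) < 2 * m + β)]
  nlinarith [mul_le_mul_of_nonneg_left hX (by positivity : (0:ℝ) ≤ β * m)]

lemma exists_bb (M₀ : H →L[ℂ] H) (hR : IsClosed (LinearMap.range (M₀ : H →ₗ[ℂ] H) : Set H)) :
    ∃ c₁ : ℝ, 1 ≤ c₁ ∧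
      (∀ u : H, u ∈ (LinearMap.ker (M₀ : H →ₗ[ℂ] H))ᗮ → ‖u‖ ≤ c₁ * ‖M₀ u‖) ∧
      (∀ w : H, w ∈ LinearMap.range (M₀ : H →ₗ[ℂ] H) → ∃ u, u ∈ (LinearMap.ker (M₀ : H →ₗ[ℂ] H))ᗮ ∧ M₀ u = w ∧ ‖u‖ ≤ c₁ * ‖w‖) := by
  set Kk := LinearMap.ker (M₀ : H →ₗ[ℂ] H) with hKk
  set R₀ := LinearMap.range (M₀ : H →ₗ[ℂ] H) with hR₀
  haveI : CompleteSpace R₀ := hR.completeSpace_coe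
  set f : ↥Kkᗮ →L[ℂ] ↥R₀ :=
    (M₀.comp Kkᗮ.subtypeL).codRestrict R₀ (fun u => ⟨↑u, rfl⟩) with hf
  have hfapp : ∀ u : ↥Kkᗮ, (f u : H) = M₀ ↑u := fun u => rfl
  have hker : LinearMap.ker (f : ↥Kkᗮ →ₗ[ℂ] ↥R₀) = ⊥ := by
    apply LinearMap.ker_eq_bot.2
    intro u v huv
    have huv' : f u = f v := huv
    have h0 : M₀ (↑u - ↑v) = 0 := by
      have : (f u : H) = (f v : H) := by rw [huv']
      rw [hfapp, hfapp] at this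
      rw [map_sub, this, sub_self]
    have : (↑u - ↑v : H) = 0 :=
      mem_orth_self_zero (by simpa [hKk, LinearMap.mem_ker] using h0)
        (Submodule.sub_mem _ u.2 v.2)
    exact Subtype.ext (sub_eq_zero.mp this)
  have hrange : LinearMap.range (f : ↥Kkᗮ →ₗ[ℂ] ↥R₀) = ⊤ := by
    rw [LinearMap.range_eq_top]
    rintro ⟨w, hw⟩
    obtain ⟨x, hx⟩ := hw
    refine ⟨⟨x - ↑(orthogonalProjection Kk x), by exact Submodule.sub_starProjection_mem_orthogonal x⟩, ?_⟩
    apply Subtype.ext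
    rw [ContinuousLinearMap.coe_coe, hfapp]
    have hker' : M₀ ↑(orthogonalProjection Kk x) = 0 := (orthogonalProjection Kk x).2
    simp only [map_sub, hker', sub_zero]
    exact hx
  set e := ContinuousLinearEquiv.ofBijective f hker hrange with he
  have hef : ∀ u, e u = f u := fun u => rfl
  set c₁ : ℝ := ‖e.symm.toContinuousLinearMap‖ + 1 with hc₁def
  have hc₁ : 1 ≤ c₁ := by
    have := norm_nonneg e.symm.toContinuousLinearMap
    linarith
  refine ⟨c₁, hc₁, ?_, ?_⟩
  · intro u hu
    have h1 : ‖(⟨u, hu⟩ : ↥Kkᗮ)‖ = ‖e.symm (e ⟨u, hu⟩)‖ := by rw [e.symm_apply_apply]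
    have h2 : ‖e.symm (e ⟨u, hu⟩)‖ ≤ ‖e.symm.toContinuousLinearMap‖ * ‖e (⟨u, hu⟩ : ↥Kkᗮ)‖ :=
      e.symm.toContinuousLinearMap.le_opNorm _
    have h3 : ‖e (⟨u, hu⟩ : ↥Kkᗮ)‖ = ‖M₀ u‖ := by
      rw [hef]
      show ‖(f ⟨u, hu⟩ : H)‖ = _
      rw [hfapp]
    have h4 : ‖u‖ = ‖(⟨u, hu⟩ : ↥Kkᗮ)‖ := rfl
    rw [h4, h1]
    calc ‖e.symm (e ⟨u, hu⟩)‖ ≤ ‖e.symm.toContinuousLinearMap‖ * ‖M₀ u‖ := by rw [← h3]; exact h2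
      _ ≤ c₁ * ‖M₀ u‖ := by
          have := norm_nonneg (M₀ u); nlinarith
  · intro w hw
    set u' := e.symm ⟨w, hw⟩ with hu'
    refine ⟨↑u', u'.2, ?_, ?_⟩
    · have : (f u' : H) = w := by
        have : e u' = ⟨w, hw⟩ := e.apply_symm_apply _
        rw [← hef]; exact congrArg Subtype.val this
      rwa [hfapp] at this
    · have h2 : ‖u'‖ ≤ ‖e.symm.toContinuousLinearMap‖ * ‖(⟨w, hw⟩ : ↥R₀)‖ :=
        e.symm.toContinuousLinearMap.le_opNorm _
      have h3 : ‖(⟨w, hw⟩ : ↥R₀)‖ = ‖w‖ := rfl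
      rw [h3] at h2
      have h4 : ‖(↑u' : H)‖ = ‖u'‖ := rfl
      rw [h4]
      have := norm_nonneg w; nlinarith

lemma adj_bb (M₀ : H →L[ℂ] H) {c₁ : ℝ} (hc₁ : 1 ≤ c₁)
    (hsur : ∀ w, w ∈ LinearMap.range (M₀ : H →ₗ[ℂ] H) → ∃ u, u ∈ (LinearMap.ker (M₀ : H →ₗ[ℂ] H))ᗮ ∧ M₀ u = w ∧ ‖u‖ ≤ c₁ * ‖w‖) :
    ∀ w, w ∈ LinearMap.range (M₀ : H →ₗ[ℂ] H) → ‖w‖ ≤ c₁ * ‖adjoint M₀ w‖ := by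
  intro w hw
  obtain ⟨u, _, huw, hun⟩ := hsur w hw
  have key : ‖w‖ ^ 2 ≤ ‖u‖ * ‖adjoint M₀ w‖ := by
    have h1 : (‖w‖:ℝ) ^ 2 = RCLike.re (inner ℂ w w : ℂ) := (inner_self_eq_norm_sq w).symm
    have h2 : (inner ℂ w w : ℂ) = inner ℂ u (adjoint M₀ w) := by
      rw [adjoint_inner_right, huw]
    calc ‖w‖ ^ 2 = RCLike.re (inner ℂ u (adjoint M₀ w) : ℂ) := by rw [h1, h2]
      _ ≤ ‖u‖ * ‖adjoint M₀ w‖ := re_inner_le_norm _ _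
  rcases eq_or_lt_of_le (norm_nonneg w) with h0 | h0
  · rw [← h0]
    have := norm_nonneg (adjoint M₀ w); nlinarith
  · have : ‖u‖ * ‖adjoint M₀ w‖ ≤ c₁ * ‖w‖ * ‖adjoint M₀ w‖ :=
      mul_le_mul_of_nonneg_right hun (norm_nonneg _)
    nlinarith

lemma adj_surj (M₀ : H →L[ℂ] H) {c₁ : ℝ} (hc₁ : 1 ≤ c₁)
    (hbb : ∀ u : H, u ∈ (LinearMap.ker (M₀ : H →ₗ[ℂ] H))ᗮ → ‖u‖ ≤ c₁ * ‖M₀ u‖) :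
    ∀ v, v ∈ (LinearMap.ker (M₀ : H →ₗ[ℂ] H))ᗮ → ∃ h : H, adjoint M₀ h = v ∧
      ‖h‖ ≤ (‖M₀‖ * (c₁ * c₁) + 1) * ‖v‖ := by
  set Kk := LinearMap.ker (M₀ : H →ₗ[ℂ] H) with hKk
  haveI : CompleteSpace ↥(Kkᗮ) := (Submodule.isClosed_orthogonal Kk).completeSpace_coe
  set G : ↥Kkᗮ →L[ℂ] ↥Kkᗮ :=
    (((adjoint M₀).comp M₀).comp Kkᗮ.subtypeL).codRestrict Kkᗮ
      (fun u => adj_mem_ker_orth M₀ (M₀ ↑u)) with hG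
  have hGapp : ∀ u : ↥Kkᗮ, (G u : H) = adjoint M₀ (M₀ ↑u) := fun u => rfl
  have hre : ∀ u : ↥Kkᗮ, RCLike.re (inner ℂ (↑u : H) (G u : H) : ℂ) = ‖M₀ (↑u:H)‖ ^ 2 := by
    intro u
    rw [hGapp, adjoint_inner_right]
    exact inner_self_eq_norm_sq _
  have hGb : ∀ u : ↥Kkᗮ, ‖u‖ ≤ (c₁ * c₁) * ‖G u‖ := by
    intro u
    have h1 : ‖M₀ (↑u:H)‖ ^ 2 ≤ ‖(↑u:H)‖ * ‖(G u : H)‖ := by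
      rw [← hre u]; exact re_inner_le_norm _ _
    have h2 : ‖(↑u:H)‖ ≤ c₁ * ‖M₀ (↑u:H)‖ := hbb _ u.2
    have h3 : ‖(↑u:H)‖ = ‖u‖ := rfl
    have h4 : ‖(G u : H)‖ = ‖G u‖ := rfl
    rcases eq_or_lt_of_le (norm_nonneg (↑u:H)) with h0 | h0
    · rw [h3] at h0
      rw [← h0]
      have := norm_nonneg (G u); nlinarith
    · rw [← h3, ← h4]
      nlinarith [norm_nonneg (M₀ (↑u:H)), norm_nonneg (G u : H)]
  have hanti : AntilipschitzWith ⟨c₁ * c₁, by nlinarith⟩ G := by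
    apply G.antilipschitz_of_bound
    intro x
    change ‖x‖ ≤ (c₁ * c₁) * ‖G x‖
    exact hGb x
  have hkerG : LinearMap.ker (G : ↥Kkᗮ →ₗ[ℂ] ↥Kkᗮ) = ⊥ := LinearMap.ker_eq_bot.2 hanti.injective
  have hclosedG : IsClosed (LinearMap.range (G : ↥Kkᗮ →ₗ[ℂ] ↥Kkᗮ) : Set ↥Kkᗮ) :=
    hanti.isClosed_range G.uniformContinuous
  haveI : CompleteSpace (LinearMap.range (G : ↥Kkᗮ →ₗ[ℂ] ↥Kkᗮ)) := hclosedG.completeSpace_coe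
  have horth : (LinearMap.range (G : ↥Kkᗮ →ₗ[ℂ] ↥Kkᗮ))ᗮ = ⊥ := by
    rw [Submodule.eq_bot_iff]
    intro w hw
    have h0 : (inner ℂ (G w) w : ℂ) = 0 :=
      (Submodule.mem_orthogonal _ _).1 hw _ (LinearMap.mem_range_self (G : ↥Kkᗮ →ₗ[ℂ] ↥Kkᗮ) w)
    have h1 : (inner ℂ (↑w : H) (G w : H) : ℂ) = 0 := by
      rw [← Submodule.coe_inner, ← inner_conj_symm, h0, map_zero]
    have h2 : ‖M₀ (↑w:H)‖ ^ 2 = 0 := by rw [← hre w, h1]; simp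
    have h3 : M₀ (↑w:H) = 0 := by
      rw [pow_eq_zero_iff (by norm_num : 2 ≠ 0)] at h2
      exact norm_eq_zero.mp h2
    have h4 : (↑w : H) = 0 := mem_orth_self_zero (LinearMap.mem_ker.2 h3) w.2
    exact Subtype.ext h4
  have htop : LinearMap.range (G : ↥Kkᗮ →ₗ[ℂ] ↥Kkᗮ) = ⊤ := by
    rwa [Submodule.orthogonal_eq_bot_iff] at horth
  intro v hv
  obtain ⟨u, hu⟩ : ∃ u, G u = ⟨v, hv⟩ := LinearMap.range_eq_top.1 htop ⟨v, hv⟩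
  refine ⟨M₀ ↑u, ?_, ?_⟩
  · have := congrArg Subtype.val hu
    rwa [hGapp] at this
  · have h1 : ‖M₀ (↑u:H)‖ ≤ ‖M₀‖ * ‖(↑u:H)‖ := M₀.le_opNorm _
    have h2 : ‖(↑u:H)‖ = ‖u‖ := rfl
    have h3 : ‖G u‖ = ‖v‖ := by rw [hu]; rfl
    have h4 := hGb u
    rw [h3] at h4
    have h5 := norm_nonneg v
    have h6 := norm_nonneg (↑u : H)
    have h7 : (0:ℝ) ≤ ‖M₀‖ := norm_nonneg _
    nlinarith [h4, h1]


lemma small_aux {Sa A B : H →L[ℂ] H} {t C' m : ℝ} (htpos : 0 < t)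
    (happ : ∀ g : H, Sa (((t:ℝ):ℂ) • A g + B g) = g)
    (hB : ∀ g : H, ‖Sa (B g)‖ ≤ C' * (m * ‖g‖)) :
    ∀ g : H, ‖Sa (A g)‖ ≤ (1 + C' * m) / t * ‖g‖ := by
  intro g
  have htnorm : ‖(((t:ℝ):ℂ))‖ = t := by
    rw [Complex.norm_real]
    exact Real.norm_of_nonneg htpos.le
  have e1 : ((t:ℝ):ℂ) • Sa (A g) + Sa (B g) = g := by
    have := happ g
    rwa [_root_.map_add, _root_.map_smul] at this
  have e2 : ‖((t:ℝ):ℂ) • Sa (A g)‖ = t * ‖Sa (A g)‖ := by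
    rw [norm_smul, htnorm]
  have e3 : ‖((t:ℝ):ℂ) • Sa (A g)‖ ≤ ‖g‖ + ‖Sa (B g)‖ := by
    have h := eq_sub_of_add_eq e1
    rw [h]
    exact norm_sub_le _ _
  rw [div_mul_eq_mul_div, le_div_iff₀ htpos]
  nlinarith [e2, e3, hB g]

lemma kest_aux (V : Submodule ℂ H) [HasOrthogonalProjection V]
    {Sa : H →L[ℂ] H} {C' m γ : ℝ} (hC'1 : 1 ≤ C') (hγ : 0 ≤ γ)
    (hhalf : γ * m ≤ 1 / 2) (hm0 : 0 ≤ m)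
    (hSaC : ∀ y : H, ‖Sa y‖ ≤ C' * ‖y‖)
    (hsmallV : ∀ w, w ∈ V → ‖Sa w‖ ≤ γ * ‖w‖)
    {v y : H} (hyv : ‖y‖ ≤ m * ‖v‖) (hvS : Sa y = v) :
    1 / (2 * C') * ‖v‖ ≤ ‖y - ↑(orthogonalProjection V y)‖ := by
  have hv0 := norm_nonneg v
  have hy0 := norm_nonneg y
  have hp1 : ‖(↑(orthogonalProjection V y) : H)‖ ≤ ‖y‖ := norm_proj_le V y
  have hp2 : ‖Sa ↑(orthogonalProjection V y)‖ ≤ γ * (m * ‖v‖) := by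
    have := hsmallV _ (orthogonalProjection V y).2
    have h2 : γ * ‖(↑(orthogonalProjection V y) : H)‖ ≤ γ * (m * ‖v‖) := by
      apply mul_le_mul_of_nonneg_left _ hγ
      linarith
    linarith
  have hsplit : v = Sa (y - ↑(orthogonalProjection V y)) + Sa ↑(orthogonalProjection V y) := by
    rw [← _root_.map_add, sub_add_cancel, hvS]
  have hb1 : ‖v‖ ≤ C' * ‖y - ↑(orthogonalProjection V y)‖ + γ * (m * ‖v‖) := by
    calc ‖v‖ ≤ ‖Sa (y - ↑(orthogonalProjection V y))‖ + ‖Sa ↑(orthogonalProjection V y)‖ := by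
          rw [hsplit] at *
          exact norm_add_le _ _
      _ ≤ C' * ‖y - ↑(orthogonalProjection V y)‖ + γ * (m * ‖v‖) := by
          have := hSaC (y - ↑(orthogonalProjection V y))
          linarith
  have hb2 : ‖v‖ ≤ 2 * C' * ‖y - ↑(orthogonalProjection V y)‖ := by
    have hq0 := norm_nonneg (y - ↑(orthogonalProjection V y))
    nlinarith [mul_le_mul_of_nonneg_right hhalf hv0]
  rw [div_mul_eq_mul_div, div_le_iff₀ (by linarith : (0:ℝ) < 2 * C')]
  nlinarith [norm_nonneg (y - ↑(orthogonalProjection V y))]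

lemma bb_aux (U V : Submodule ℂ H) [HasOrthogonalProjection U] [HasOrthogonalProjection V]
    {A B : H →L[ℂ] H} {β m c₁ : ℝ} (hm : 1 ≤ m) (hβ : 0 < β) (hc : 1 ≤ c₁)
    (hAU : ∀ x, x ∈ U → A x = 0) (hAV : ∀ x : H, A x ∈ V)
    (hbborth : ∀ u, u ∈ Uᗮ → ‖u‖ ≤ c₁ * ‖A u‖)
    (hkest : ∀ v, v ∈ U → β * ‖v‖ ≤ ‖B v - ↑(orthogonalProjection V (B v))‖)
    (hBm : ∀ x : H, ‖B x‖ ≤ m * ‖x‖)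
    (zc : ℂ) (hz : 2 * m * c₁ * (m + β) ≤ β * ‖zc‖) (x : H) :
    β * m / (2 * m + β) * ‖x‖ ≤ ‖zc • A x + B x‖ := by
  set v : H := ↑(orthogonalProjection U x) with hvdef
  set u : H := x - v with hudef
  have hvU : v ∈ U := (orthogonalProjection U x).2
  have huO : u ∈ Uᗮ := Submodule.sub_starProjection_mem_orthogonal x
  have hxuv : x = u + v := by rw [hudef]; abel
  have hX : ‖x‖ ≤ ‖u‖ + ‖v‖ := by
    conv_lhs => rw [hxuv]
    exact norm_add_le _ _
  have hAx : A x = A u := by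
    rw [hxuv, _root_.map_add, hAU v hvU, add_zero]
  have h2a : ‖u‖ ≤ c₁ * ‖A x‖ := by
    rw [hAx]
    exact hbborth u huO
  set L : H := zc • A x + B x with hLdef
  have h2b : ‖zc‖ * ‖A x‖ - m * (‖u‖ + ‖v‖) ≤ ‖L‖ := by
    have i1 : ‖zc • A x‖ ≤ ‖L‖ + ‖B x‖ := by
      have : zc • A x = L - B x := by rw [hLdef]; abel
      rw [this]
      exact norm_sub_le _ _
    have i2 : ‖zc • A x‖ = ‖zc‖ * ‖A x‖ := norm_smul _ _
    have i3 : ‖B x‖ ≤ m * (‖u‖ + ‖v‖) := by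
      have := hBm x
      have hmm : (0:ℝ) ≤ m := by linarith
      nlinarith [hX]
    linarith
  have h1 : β * ‖v‖ - m * ‖u‖ ≤ ‖L‖ := by
    -- the component of L outside V equals that of B x
    have hproj : L - ↑(orthogonalProjection V L) = B x - ↑(orthogonalProjection V (B x)) := by
      have hsm : (↑(orthogonalProjection V L) : H)
          = zc • A x + ↑(orthogonalProjection V (B x)) := by
        rw [hLdef, _root_.map_add, _root_.map_smul]
        push_cast
        congr 1
        congr 1
        exact Submodule.starProjection_eq_self_iff.2 (hAV x)
      rw [hsm, hLdef]
      abel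
    have hBsplit : B x - ↑(orthogonalProjection V (B x))
        = (B v - ↑(orthogonalProjection V (B v))) + (B u - ↑(orthogonalProjection V (B u))) := by
      conv_lhs => rw [hxuv]
      rw [_root_.map_add, _root_.map_add]
      push_cast
      abel
    have hnormL : ‖B x - ↑(orthogonalProjection V (B x))‖ ≤ ‖L‖ := by
      rw [← hproj]
      have : L - ↑(orthogonalProjection V L) = ↑(orthogonalProjection Vᗮ L) :=
        (Submodule.starProjection_orthogonal_val L).symm
      rw [this]
      exact norm_proj_le Vᗮ L
    have hBu : ‖B u - ↑(orthogonalProjection V (B u))‖ ≤ m * ‖u‖ := by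
      have : B u - ↑(orthogonalProjection V (B u)) = ↑(orthogonalProjection Vᗮ (B u)) :=
        (Submodule.starProjection_orthogonal_val (B u)).symm
      rw [this]
      calc ‖(↑(orthogonalProjection Vᗮ (B u)) : H)‖ ≤ ‖B u‖ := norm_proj_le Vᗮ (B u)
        _ ≤ m * ‖u‖ := hBm u
    have hBv : β * ‖v‖ ≤ ‖B v - ↑(orthogonalProjection V (B v))‖ := hkest v hvU
    have htri : ‖B v - ↑(orthogonalProjection V (B v))‖
        ≤ ‖B x - ↑(orthogonalProjection V (B x))‖ + ‖B u - ↑(orthogonalProjection V (B u))‖ := by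
      rw [hBsplit]
      have := norm_add_le (B v - ↑(orthogonalProjection V (B v)))
        (B u - ↑(orthogonalProjection V (B u)))
      have h9 : ‖-(B u - ↑(orthogonalProjection V (B u)))‖
          = ‖B u - ↑(orthogonalProjection V (B u))‖ := norm_neg _
      calc ‖B v - ↑(orthogonalProjection V (B v))‖
          = ‖(B v - ↑(orthogonalProjection V (B v)) + (B u - ↑(orthogonalProjection V (B u))))
              + -(B u - ↑(orthogonalProjection V (B u)))‖ := by congr 1; abel
        _ ≤ ‖B v - ↑(orthogonalProjection V (B v)) + (B u - ↑(orthogonalProjection V (B u)))‖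
            + ‖-(B u - ↑(orthogonalProjection V (B u)))‖ := norm_add_le _ _
        _ = ‖B v - ↑(orthogonalProjection V (B v)) + (B u - ↑(orthogonalProjection V (B u)))‖
            + ‖B u - ↑(orthogonalProjection V (B u))‖ := by rw [h9]
    linarith
  exact arith_aux hm hβ hc (norm_nonneg u) (norm_nonneg v) (norm_nonneg (A x))
    (norm_nonneg L) h1 h2a h2b hz hX (norm_nonneg x)

end Stmt3Aux

theorem stmt_3 (M₀ M₁ : H →L[ℂ] H)
    (hR : IsClosed (LinearMap.range (M₀ : H →ₗ[ℂ] H) : Set H))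
    (hreg : ∃ ν C : ℝ, ∀ z : ℂ, ν < z.re →
      ∃ S : H →L[ℂ] H, (z • M₀ + M₁).comp S = ContinuousLinearMap.id ℂ H ∧
        S.comp (z • M₀ + M₁) = ContinuousLinearMap.id ℂ H ∧ ‖S‖ ≤ C) :
    ∃ R : ℝ, 0 < R ∧ ∃ C : ℝ, ∀ z : ℂ, R < ‖z‖ →
      ∃ S : H →L[ℂ] H, (z • M₀ + M₁).comp S = ContinuousLinearMap.id ℂ H ∧
        S.comp (z • M₀ + M₁) = ContinuousLinearMap.id ℂ H ∧ ‖S‖ ≤ C := by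
  classical
  obtain ⟨ν, C0, hreg⟩ := hreg
  obtain ⟨c₁, hc₁1, hbb, hsur⟩ := Stmt3Aux.exists_bb M₀ hR
  haveI : CompleteSpace (LinearMap.range (M₀ : H →ₗ[ℂ] H)) := hR.completeSpace_coe
  haveI : CompleteSpace (LinearMap.ker (M₀ : H →ₗ[ℂ] H)) :=
    (ContinuousLinearMap.isClosed_ker M₀).completeSpace_coe
  set C' : ℝ := max C0 1 with hC'def
  have hC'1 : 1 ≤ C' := le_max_right _ _
  set m : ℝ := ‖M₁‖ + 1 with hmdef
  have hm1 : 1 ≤ m := by have := norm_nonneg M₁; simp [hmdef]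
  have hM₁m : ‖M₁‖ ≤ m := by simp [hmdef]
  have hM₁x : ∀ x : H, ‖M₁ x‖ ≤ m * ‖x‖ := fun x =>
    le_trans (M₁.le_opNorm x) (mul_le_mul_of_nonneg_right hM₁m (norm_nonneg x))
  have hM₁ax : ∀ x : H, ‖ContinuousLinearMap.adjoint M₁ x‖ ≤ m * ‖x‖ := by
    intro x
    have h := (ContinuousLinearMap.adjoint M₁).le_opNorm x
    rw [LinearIsometryEquiv.norm_map] at h
    exact le_trans h (mul_le_mul_of_nonneg_right hM₁m (norm_nonneg x))
  set κ : ℝ := ‖M₀‖ * (c₁ * c₁) + 1 with hκdef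
  have hκ1 : 1 ≤ κ := by
    have h7 : (0:ℝ) ≤ ‖M₀‖ := norm_nonneg _
    nlinarith
  have hκs := Stmt3Aux.adj_surj M₀ hc₁1 hbb
  have hadjbb := Stmt3Aux.adj_bb M₀ hc₁1 hsur
  set β : ℝ := 1 / (2 * C') with hβdef
  have hβ : 0 < β := by
    rw [hβdef]
    positivity
  set tq : ℝ := 2 * (1 + C' * m) * (max c₁ κ * m) with htqdef
  set t : ℝ := max (ν + 1) tq with htdef
  have hmax1 : 1 ≤ max c₁ κ := le_trans hc₁1 (le_max_left _ _)
  have htq : tq ≤ t := le_max_right _ _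
  have h1Cm : (0:ℝ) < 1 + C' * m := by nlinarith
  have hmaxm : (0:ℝ) < max c₁ κ * m := by nlinarith
  have htqpos : (0:ℝ) < tq := by rw [htqdef]; nlinarith [mul_pos h1Cm hmaxm]
  have htpos : 0 < t := lt_of_lt_of_le htqpos htq
  have htν : ν < (((t:ℝ):ℂ)).re := by
    rw [Complex.ofReal_re]
    have : ν + 1 ≤ t := le_max_left _ _
    linarith
  obtain ⟨S, hS1, hS2, hSn⟩ := hreg ((t:ℝ):ℂ) htν
  have hSC' : ‖S‖ ≤ C' := le_trans hSn (le_max_left _ _)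
  have hSaC' : ‖ContinuousLinearMap.adjoint S‖ ≤ C' := by
    rw [LinearIsometryEquiv.norm_map]
    exact hSC'
  have hSC : ∀ y : H, ‖S y‖ ≤ C' * ‖y‖ := fun y =>
    le_trans (S.le_opNorm y) (mul_le_mul_of_nonneg_right hSC' (norm_nonneg y))
  have hSaCp : ∀ y : H, ‖ContinuousLinearMap.adjoint S y‖ ≤ C' * ‖y‖ := fun y =>
    le_trans ((ContinuousLinearMap.adjoint S).le_opNorm y)
      (mul_le_mul_of_nonneg_right hSaC' (norm_nonneg y))
  have hS2app : ∀ g : H, S (((t:ℝ):ℂ) • M₀ g + M₁ g) = g := by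
    intro g
    have := ContinuousLinearMap.ext_iff.1 hS2 g
    simpa using this
  have hS1adj : (ContinuousLinearMap.adjoint S).comp
      (((t:ℝ):ℂ) • ContinuousLinearMap.adjoint M₀ + ContinuousLinearMap.adjoint M₁)
      = ContinuousLinearMap.id ℂ H := by
    have h : ContinuousLinearMap.adjoint (((((t:ℝ):ℂ)) • M₀ + M₁).comp S)
        = ContinuousLinearMap.adjoint (ContinuousLinearMap.id ℂ H) := by rw [hS1]
    rw [ContinuousLinearMap.adjoint_comp, ContinuousLinearMap.adjoint_id] at h
    rwa [map_add, LinearIsometryEquiv.map_smulₛₗ, Complex.conj_ofReal] at h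
  have hSaapp : ∀ g : H, (ContinuousLinearMap.adjoint S)
      (((t:ℝ):ℂ) • ContinuousLinearMap.adjoint M₀ g + ContinuousLinearMap.adjoint M₁ g) = g := by
    intro g
    have := ContinuousLinearMap.ext_iff.1 hS1adj g
    simpa using this
  have hBs : ∀ g : H, ‖S (M₁ g)‖ ≤ C' * (m * ‖g‖) := fun g =>
    le_trans (hSC (M₁ g)) (mul_le_mul_of_nonneg_left (hM₁x g) (by linarith))
  have hBsa : ∀ g : H, ‖ContinuousLinearMap.adjoint S (ContinuousLinearMap.adjoint M₁ g)‖
      ≤ C' * (m * ‖g‖) := fun g =>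
    le_trans (hSaCp (ContinuousLinearMap.adjoint M₁ g))
      (mul_le_mul_of_nonneg_left (hM₁ax g) (by linarith))
  have hSM₀ := Stmt3Aux.small_aux htpos hS2app hBs
  have hSaM₀ := Stmt3Aux.small_aux htpos hSaapp hBsa
  set η : ℝ := (1 + C' * m) / t with hηdef
  have hη0 : 0 ≤ η := by
    rw [hηdef]
    exact div_nonneg (by nlinarith) htpos.le
  have hfrac : ∀ d : ℝ, 0 ≤ d → d ≤ max c₁ κ → η * (d * m) ≤ 1 / 2 := by
    intro d hd hdm
    rw [hηdef, div_mul_eq_mul_div, div_le_div_iff₀ htpos (by norm_num : (0:ℝ) < 2)]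
    have h2 : 2 * (1 + C' * m) * (d * m) ≤ 2 * (1 + C' * m) * (max c₁ κ * m) := by
      have hmm : (0:ℝ) < m := by linarith
      have : d * m ≤ max c₁ κ * m := mul_le_mul_of_nonneg_right hdm (le_of_lt hmm)
      nlinarith
    nlinarith [htq]
  have hsmallR : ∀ w, w ∈ LinearMap.range (M₀ : H →ₗ[ℂ] H) → ‖S w‖ ≤ η * c₁ * ‖w‖ := by
    intro w hw
    obtain ⟨g, hgO, hgw, hgn⟩ := hsur w hw
    calc ‖S w‖ = ‖S (M₀ g)‖ := by rw [hgw]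
      _ ≤ η * ‖g‖ := hSM₀ g
      _ ≤ η * c₁ * ‖w‖ := by
          rw [mul_assoc]
          exact mul_le_mul_of_nonneg_left hgn hη0
  have hsmallK : ∀ w, w ∈ (LinearMap.ker (M₀ : H →ₗ[ℂ] H))ᗮ →
      ‖ContinuousLinearMap.adjoint S w‖ ≤ η * κ * ‖w‖ := by
    intro w hw
    obtain ⟨g, hgw, hgn⟩ := hκs w hw
    calc ‖ContinuousLinearMap.adjoint S w‖
        = ‖ContinuousLinearMap.adjoint S (ContinuousLinearMap.adjoint M₀ g)‖ := by rw [hgw]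
      _ ≤ η * ‖g‖ := hSaM₀ g
      _ ≤ η * κ * ‖w‖ := by
          rw [mul_assoc]
          rw [← hκdef] at hgn
          exact mul_le_mul_of_nonneg_left hgn hη0
  have hhalfR : η * c₁ * m ≤ 1 / 2 := by
    rw [mul_assoc]
    exact hfrac c₁ (by linarith) (le_max_left _ _)
  have hhalfK : η * κ * m ≤ 1 / 2 := by
    rw [mul_assoc]
    exact hfrac κ (by linarith) (le_max_right _ _)
  have hKest : ∀ v, v ∈ LinearMap.ker (M₀ : H →ₗ[ℂ] H) →
      β * ‖v‖ ≤ ‖M₁ v - ↑(Submodule.orthogonalProjection (LinearMap.range (M₀ : H →ₗ[ℂ] H)) (M₁ v))‖ := by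
    intro v hv
    have hvS : S (M₁ v) = v := by
      have h := hS2app v
      rw [show M₀ v = 0 from LinearMap.mem_ker.1 hv, smul_zero, zero_add] at h
      exact h
    have h := Stmt3Aux.kest_aux (LinearMap.range (M₀ : H →ₗ[ℂ] H)) hC'1
      (mul_nonneg hη0 (by linarith : (0:ℝ) ≤ c₁)) hhalfR (by linarith : (0:ℝ) ≤ m)
      hSC hsmallR (hM₁x v) hvS
    rw [hβdef]
    exact h
  have hK'est : ∀ w, w ∈ (LinearMap.range (M₀ : H →ₗ[ℂ] H))ᗮ →
      β * ‖w‖ ≤ ‖ContinuousLinearMap.adjoint M₁ w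
        - ↑(Submodule.orthogonalProjection (LinearMap.ker (M₀ : H →ₗ[ℂ] H))ᗮ (ContinuousLinearMap.adjoint M₁ w))‖ := by
    intro w hw
    have hvS : ContinuousLinearMap.adjoint S (ContinuousLinearMap.adjoint M₁ w) = w := by
      have h := hSaapp w
      rw [Stmt3Aux.adj_orth_zero M₀ hw, smul_zero, zero_add] at h
      exact h
    have h := Stmt3Aux.kest_aux ((LinearMap.ker (M₀ : H →ₗ[ℂ] H))ᗮ) hC'1
      (mul_nonneg hη0 (by linarith : (0:ℝ) ≤ κ)) hhalfK (by linarith : (0:ℝ) ≤ m)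
      hSaCp hsmallK (hM₁ax w) hvS
    rw [hβdef]
    exact h
  set δ : ℝ := β * m / (2 * m + β) with hδdef
  have hδ : 0 < δ := by
    rw [hδdef]
    have h1 : 0 < β * m := mul_pos hβ (by linarith)
    exact div_pos h1 (by linarith)
  refine ⟨max ((2 * m * c₁ * (m + β)) / β) 1, lt_of_lt_of_le one_pos (le_max_right _ _),
    δ⁻¹, ?_⟩
  intro z hz
  have hzn : 2 * m * c₁ * (m + β) ≤ β * ‖z‖ := by
    have h1 : (2 * m * c₁ * (m + β)) / β < ‖z‖ :=
      lt_of_le_of_lt (le_max_left _ _) hz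
    rw [div_lt_iff₀ hβ] at h1
    nlinarith
  have hbb1 : ∀ x, δ * ‖x‖ ≤ ‖(z • M₀ + M₁) x‖ := by
    intro x
    have h := Stmt3Aux.bb_aux (LinearMap.ker (M₀ : H →ₗ[ℂ] H)) (LinearMap.range (M₀ : H →ₗ[ℂ] H)) hm1 hβ hc₁1
      (fun y hy => LinearMap.mem_ker.1 hy) (fun y => LinearMap.mem_range_self (M₀ : H →ₗ[ℂ] H) y)
      hbb hKest hM₁x z hzn x
    rw [hδdef]
    simpa using h
  have hbb2 : ∀ x, δ * ‖x‖ ≤ ‖ContinuousLinearMap.adjoint (z • M₀ + M₁) x‖ := by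
    have hadjL : ContinuousLinearMap.adjoint (z • M₀ + M₁)
        = (starRingEnd ℂ z) • ContinuousLinearMap.adjoint M₀ + ContinuousLinearMap.adjoint M₁ := by
      rw [map_add, LinearIsometryEquiv.map_smulₛₗ]
    intro x
    have hbbo : ∀ u, u ∈ ((LinearMap.range (M₀ : H →ₗ[ℂ] H))ᗮ)ᗮ →
        ‖u‖ ≤ c₁ * ‖ContinuousLinearMap.adjoint M₀ u‖ := by
      intro u hu
      apply hadjbb
      rwa [Submodule.orthogonal_orthogonal] at hu
    have hzc : 2 * m * c₁ * (m + β) ≤ β * ‖(starRingEnd ℂ) z‖ := by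
      rwa [RCLike.norm_conj]
    have h := Stmt3Aux.bb_aux ((LinearMap.range (M₀ : H →ₗ[ℂ] H))ᗮ) ((LinearMap.ker (M₀ : H →ₗ[ℂ] H))ᗮ) hm1 hβ hc₁1
      (fun y hy => Stmt3Aux.adj_orth_zero M₀ hy) (fun y => Stmt3Aux.adj_mem_ker_orth M₀ y)
      hbbo hK'est hM₁ax ((starRingEnd ℂ) z) hzc x
    rw [hδdef, hadjL]
    simpa using h
  obtain ⟨Sf, hf1, hf2, hf3⟩ := Stmt3Aux.inv_of_bb (z • M₀ + M₁) hδ hbb1 hbb2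
  exact ⟨Sf, hf1, hf2, hf3⟩

end
end

section
/- Let H be a Hilbert space, M₀, M₁ ∈ L(H) with R(M₀) closed and the pencil z ↦ zM₀ + M₁ regular. If u : [0,∞) → H is continuous, continuously differentiable on (0,∞), and satisfies M₀u'(t) + M₁u(t) = 0 for all t > 0, then the initial value u(0) lies in the space IV := {x ∈ H : M₁x ∈ R(M₀)} = M₁⁻¹[R(M₀)]. -/
set_option synthInstance.maxHeartbeats 1000000
set_option maxHeartbeats 1000000

open MeasureTheory Filter Set Complex
open scoped Topology

noncomputable section

variable {H : Type*} [NormedAddCommGroup H] [InnerProductSpace ℂ H] [CompleteSpace H]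

theorem stmt_4 (M₀ M₁ : H →L[ℂ] H)
    (hR : IsClosed (LinearMap.range (M₀ : H →ₗ[ℂ] H) : Set H))
    (hreg : ∃ ν C : ℝ, ∀ z : ℂ, ν < z.re →
      ∃ S : H →L[ℂ] H, (z • M₀ + M₁).comp S = ContinuousLinearMap.id ℂ H ∧
        S.comp (z • M₀ + M₁) = ContinuousLinearMap.id ℂ H ∧ ‖S‖ ≤ C)
    (u u' : ℝ → H) (hu_cont : ContinuousOn u (Ici 0))
    (hu_deriv : ∀ t : ℝ, 0 < t → HasDerivAt u (u' t) t)
    (hu'_cont : ContinuousOn u' (Ioi 0))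
    (heq : ∀ t : ℝ, 0 < t → M₀ (u' t) + M₁ (u t) = 0) :
    M₁ (u 0) ∈ LinearMap.range (M₀ : H →ₗ[ℂ] H) := by
  have htend : Tendsto (fun t => M₁ (u t)) (𝓝[>] (0:ℝ)) (𝓝 (M₁ (u 0))) := by
    have h0 : Tendsto u (𝓝[>] (0:ℝ)) (𝓝 (u 0)) :=
      ((hu_cont 0 (self_mem_Ici)).mono Ioi_subset_Ici_self).tendsto
    exact (M₁.continuous.tendsto _).comp h0
  refine hR.mem_of_tendsto htend ?_
  filter_upwards [self_mem_nhdsWithin] with t ht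
  refine ⟨-u' t, ?_⟩
  have := heq t ht
  simp only [map_neg]
  exact neg_eq_of_add_eq_zero_right this
end
end

section
/- Let H be a Hilbert space, M₀, M₁ ∈ L(H), R(M₀) closed, and the pencil z ↦ zM₀ + M₁ regular. Then IV ∩ N(M₀) = {0}, where IV = M₁⁻¹[R(M₀)]. -/
set_option synthInstance.maxHeartbeats 1000000
set_option maxHeartbeats 1000000

open MeasureTheory Filter Set Complex
open scoped Topology

noncomputable section

variable {H : Type*} [NormedAddCommGroup H] [InnerProductSpace ℂ H] [CompleteSpace H]

theorem stmt_5 (M₀ M₁ : H →L[ℂ] H)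
    (hR : IsClosed (LinearMap.range (M₀ : H →ₗ[ℂ] H) : Set H))
    (hreg : ∃ ν C : ℝ, ∀ z : ℂ, ν < z.re →
      ∃ S : H →L[ℂ] H, (z • M₀ + M₁).comp S = ContinuousLinearMap.id ℂ H ∧
        S.comp (z • M₀ + M₁) = ContinuousLinearMap.id ℂ H ∧ ‖S‖ ≤ C) :
    Submodule.comap (M₁ : H →ₗ[ℂ] H) (LinearMap.range (M₀ : H →ₗ[ℂ] H)) ⊓ LinearMap.ker (M₀ : H →ₗ[ℂ] H) = ⊥ := by
  rw [Submodule.eq_bot_iff]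
  rintro x ⟨hx1, hx2⟩
  obtain ⟨y, hy⟩ := (Submodule.mem_comap.mp hx1)
  have hx2' : M₀ x = 0 := hx2
  obtain ⟨ν, C, hreg⟩ := hreg
  set K := ‖y‖ + C * ‖M₁ y‖ with hK
  have key : ∀ t : ℝ, max ν 0 < t → ‖x‖ ≤ K / t := by
    intro t ht
    have ht0 : (0:ℝ) < t := lt_of_le_of_lt (le_max_right _ _) ht
    obtain ⟨S, hS1, hS2, hSC⟩ := hreg (t : ℂ)
      (by simpa using lt_of_le_of_lt (le_max_left _ _) ht)
    have hid : ∀ v : H, S ((((t:ℂ)) • M₀ + M₁) v) = v := by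
      intro v
      have := congrArg (fun f : H →L[ℂ] H => f v) hS2
      simpa using this
    have hMx : ((t:ℂ) • M₀ + M₁) x = M₀ y := by
      simp [hx2', show M₀ y = M₁ x from hy]
    have hMy : M₀ y = (t:ℂ)⁻¹ • (((t:ℂ) • M₀ + M₁) y - M₁ y) := by
      have h1 : ((t:ℂ) • M₀ + M₁) y - M₁ y = (t:ℂ) • M₀ y := by simp
      rw [h1, smul_smul, inv_mul_cancel₀ (by exact_mod_cast ht0.ne'), one_smul]
    have hxx : x = (t:ℂ)⁻¹ • (y - S (M₁ y)) := by
      have : x = S (((t:ℂ) • M₀ + M₁) x) := (hid x).symm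
      rw [this, hMx, hMy, _root_.map_smul, map_sub, hid y]
    have hC0 : 0 ≤ C := le_trans (norm_nonneg S) hSC
    have hbound : ‖y - S (M₁ y)‖ ≤ K := by
      calc ‖y - S (M₁ y)‖ ≤ ‖y‖ + ‖S (M₁ y)‖ := norm_sub_le _ _
        _ ≤ ‖y‖ + ‖S‖ * ‖M₁ y‖ := by
            gcongr; exact S.le_opNorm _
        _ ≤ K := by rw [hK]; gcongr
    rw [hxx, norm_smul]
    have hnt : ‖((t:ℂ))⁻¹‖ = t⁻¹ := by
      rw [norm_inv, Complex.norm_real, Real.norm_of_nonneg ht0.le]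
    rw [hnt, div_eq_inv_mul]
    gcongr
  by_contra hx0
  have hxpos : 0 < ‖x‖ := norm_pos_iff.mpr hx0
  have hK0 : 0 ≤ K := by
    have h := key (max ν 0 + 1) (lt_add_one _)
    have hp : (0:ℝ) < max ν 0 + 1 := by positivity
    nlinarith [norm_nonneg x, (le_div_iff₀ hp).mp h]
  set t := max (max ν 0 + 1) (K / ‖x‖ + 1) with htdef
  have ht1 : max ν 0 < t := lt_of_lt_of_le (lt_add_one _) (le_max_left _ _)
  have ht0 : 0 < t := lt_of_le_of_lt (le_max_right _ _) ht1
  have h2 : K / ‖x‖ < t := lt_of_lt_of_le (lt_add_one _) (le_max_right _ _)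
  have : K / t < ‖x‖ := by
    rw [div_lt_iff₀ ht0]
    have : K = (K / ‖x‖) * ‖x‖ := by field_simp
    nlinarith
  exact absurd (key t ht1) (not_le.mpr this)
end
end

section
/- Let H be a Hilbert space, M₀, M₁ ∈ L(H), R(M₀) closed, and the pencil z ↦ zM₀ + M₁ regular. Then the operator Q∘M₀∘ι_IV : IV → R(M₀) is bijective (hence continuously invertible), where Q : H → R(M₀) is the orthogonal projection and ι_IV : IV ↪ H is the inclusion of IV = M₁⁻¹[R(M₀)]. -/
set_option synthInstance.maxHeartbeats 1000000
set_option maxHeartbeats 1000000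

open MeasureTheory Filter Set Complex
open scoped Topology

noncomputable section

variable {H : Type*} [NormedAddCommGroup H] [InnerProductSpace ℂ H] [CompleteSpace H]

theorem stmt_6 (M₀ M₁ : H →L[ℂ] H)
    (hR : IsClosed (LinearMap.range (M₀ : H →ₗ[ℂ] H) : Set H))
    (hreg : ∃ ν C : ℝ, ∀ z : ℂ, ν < z.re →
      ∃ S : H →L[ℂ] H, (z • M₀ + M₁).comp S = ContinuousLinearMap.id ℂ H ∧
        S.comp (z • M₀ + M₁) = ContinuousLinearMap.id ℂ H ∧ ‖S‖ ≤ C)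
    (T : ↥(Submodule.comap (M₁ : H →ₗ[ℂ] H) (LinearMap.range (M₀ : H →ₗ[ℂ] H))) →L[ℂ] ↥(LinearMap.range (M₀ : H →ₗ[ℂ] H)))
    (hT : T = (M₀.comp (Submodule.comap (M₁ : H →ₗ[ℂ] H) (LinearMap.range (M₀ : H →ₗ[ℂ] H))).subtypeL).codRestrict
      (LinearMap.range (M₀ : H →ₗ[ℂ] H)) (fun x => ⟨_, rfl⟩)) :
    Function.Bijective T ∧
      ∃ S : ↥(LinearMap.range (M₀ : H →ₗ[ℂ] H)) →L[ℂ] ↥(Submodule.comap (M₁ : H →ₗ[ℂ] H) (LinearMap.range (M₀ : H →ₗ[ℂ] H))),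
        T.comp S = ContinuousLinearMap.id ℂ ↥(LinearMap.range (M₀ : H →ₗ[ℂ] H)) ∧
        S.comp T = ContinuousLinearMap.id ℂ ↥(Submodule.comap (M₁ : H →ₗ[ℂ] H) (LinearMap.range (M₀ : H →ₗ[ℂ] H))) := by
  subst hT
  obtain ⟨ν, C, hreg⟩ := hreg
  set R := LinearMap.range (M₀ : H →ₗ[ℂ] H) with hRdef
  set V := Submodule.comap (M₁ : H →ₗ[ℂ] H) R with hVdef
  set T := (M₀.comp V.subtypeL).codRestrict R (fun x => ⟨_, rfl⟩) with hTdef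
  haveI : CompleteSpace R := hR.completeSpace_coe
  have hVclosed : IsClosed (V : Set H) := by
    have h1 : (V : Set H) = M₁ ⁻¹' (R : Set H) := rfl
    rw [h1]; exact hR.preimage M₁.continuous
  haveI : CompleteSpace V := hVclosed.completeSpace_coe
  -- C is nonnegative
  have hC0 : 0 ≤ C := by
    obtain ⟨S, -, -, hS⟩ := hreg ((ν + 1 : ℝ) : ℂ) (by simp)
    exact le_trans (norm_nonneg S) hS
  -- T applied, as an element of H
  have hTapp : ∀ x : V, (T x : H) = M₀ (x : H) := fun x => rfl
  -- pseudo-inverse constant for M₀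
  have hsurj0 : Function.Surjective (M₀.codRestrict R fun x => LinearMap.mem_range_self _ x) := by
    rintro ⟨y, x, rfl⟩
    exact ⟨x, rfl⟩
  obtain ⟨K, hK0, hKspec⟩ :=
    ContinuousLinearMap.exists_preimage_norm_le
      (M₀.codRestrict R fun x => LinearMap.mem_range_self _ x) hsurj0
  have hKspec' : ∀ y ∈ R, ∃ w, M₀ w = y ∧ ‖w‖ ≤ K * ‖y‖ := by
    intro y hy
    obtain ⟨w, hw1, hw2⟩ := hKspec ⟨y, hy⟩
    exact ⟨w, congrArg Subtype.val hw1, hw2⟩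
  -- key algebraic identity
  have key : ∀ (z : ℂ) (S : H →L[ℂ] H), S.comp (z • M₀ + M₁) = ContinuousLinearMap.id ℂ H →
      ∀ v : H, S (z • M₀ v) = v - S (M₁ v) := by
    intro z S h2 v
    have h3 : S (z • M₀ v + M₁ v) = v := by
      have := congrArg (fun f : H →L[ℂ] H => f v) h2
      simpa using this
    calc S (z • M₀ v) = S (z • M₀ v + M₁ v) - S (M₁ v) := by rw [map_add]; abel
    _ = v - S (M₁ v) := by rw [h3]
  -- the bounded-below constant
  set t : ℝ := max (ν + 1) (max 1 (2 * (1 + C * ‖M₁‖) * (K * ‖M₁‖) + 1)) with htdef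
  have ht_nu : ν < ((t : ℝ) : ℂ).re := by
    simp only [Complex.ofReal_re]
    calc ν < ν + 1 := by linarith
    _ ≤ t := le_max_left _ _
  have ht1 : (1 : ℝ) ≤ t := le_trans (le_max_left _ _) (le_max_right _ _)
  have ht0 : 0 < t := lt_of_lt_of_le one_pos ht1
  have ht2 : 2 * (1 + C * ‖M₁‖) * (K * ‖M₁‖) + 1 ≤ t :=
    le_trans (le_max_right _ _) (le_max_right _ _)
  obtain ⟨S, hS1, hS2, hSnorm⟩ := hreg ((t : ℝ) : ℂ) ht_nu
  -- bounded below estimate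
  have hbb : ∀ x : V, ‖(x : H)‖ ≤ (2 * (C + 1) * t) * ‖(T x : H)‖ := by
    intro x
    obtain ⟨w, hw1, hw2⟩ := hKspec' (M₁ (x : H)) x.2
    have hx : (x : H) = S (((t : ℝ) : ℂ) • M₀ (x : H)) + S (M₀ w) := by
      have h3 : S (((t : ℝ) : ℂ) • M₀ (x : H) + M₁ (x : H)) = (x : H) := by
        have := congrArg (fun f : H →L[ℂ] H => f (x : H)) hS2
        simpa using this
      rw [← hw1] at h3
      rw [← map_add]
      exact h3.symm
    set v : H := (((t : ℝ) : ℂ))⁻¹ • w with hvdef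
    have htC : (((t : ℝ) : ℂ)) ≠ 0 := by
      simp only [ne_eq, Complex.ofReal_eq_zero]
      exact ne_of_gt ht0
    have hwv : w = ((t : ℝ) : ℂ) • v := by
      rw [hvdef, smul_smul, mul_inv_cancel₀ htC, one_smul]
    have hnv : ‖v‖ = ‖w‖ / t := by
      rw [hvdef, norm_smul]
      simp [abs_of_pos ht0, div_eq_inv_mul]
    have hSMw : ‖S (M₀ w)‖ ≤ (1 + C * ‖M₁‖) * (‖w‖ / t) := by
      have : S (M₀ w) = v - S (M₁ v) := by
        rw [hwv, _root_.map_smul]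
        exact key _ S hS2 v
      rw [this]
      calc ‖v - S (M₁ v)‖ ≤ ‖v‖ + ‖S (M₁ v)‖ := norm_sub_le _ _
      _ ≤ ‖v‖ + C * (‖M₁‖ * ‖v‖) := by
          gcongr
          calc ‖S (M₁ v)‖ ≤ ‖S‖ * ‖M₁ v‖ := S.le_opNorm _
          _ ≤ C * (‖M₁‖ * ‖v‖) := by
              have := M₁.le_opNorm v
              gcongr
      _ = (1 + C * ‖M₁‖) * ‖v‖ := by ring
      _ = (1 + C * ‖M₁‖) * (‖w‖ / t) := by rw [hnv]
    have hC1 : 0 ≤ 1 + C * ‖M₁‖ := by positivity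
    have hest : ‖(x : H)‖ ≤ C * t * ‖M₀ (x : H)‖ + (1 + C * ‖M₁‖) * (K * ‖M₁‖) * ‖(x : H)‖ / t := by
      calc ‖(x : H)‖ = ‖S (((t : ℝ) : ℂ) • M₀ (x : H)) + S (M₀ w)‖ := congrArg norm hx
      _ ≤ ‖S (((t : ℝ) : ℂ) • M₀ (x : H))‖ + ‖S (M₀ w)‖ := norm_add_le _ _
      _ ≤ C * (t * ‖M₀ (x : H)‖) + (1 + C * ‖M₁‖) * (‖w‖ / t) := by
          gcongr
          calc ‖S (((t : ℝ) : ℂ) • M₀ (x : H))‖ ≤ ‖S‖ * ‖((t : ℝ) : ℂ) • M₀ (x : H)‖ :=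
                S.le_opNorm _
          _ = ‖S‖ * (t * ‖M₀ (x : H)‖) := by
              rw [norm_smul]; simp [abs_of_pos ht0]
          _ ≤ C * (t * ‖M₀ (x : H)‖) := by
              have : 0 ≤ t * ‖M₀ (x : H)‖ := by positivity
              gcongr
      _ ≤ C * t * ‖M₀ (x : H)‖ + (1 + C * ‖M₁‖) * ((K * ‖M₁ (x : H)‖) / t) := by
          rw [mul_assoc]
          gcongr
      _ ≤ C * t * ‖M₀ (x : H)‖ + (1 + C * ‖M₁‖) * ((K * (‖M₁‖ * ‖(x : H)‖)) / t) := by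
          have := M₁.le_opNorm (x : H)
          gcongr
      _ = C * t * ‖M₀ (x : H)‖ + (1 + C * ‖M₁‖) * (K * ‖M₁‖) * ‖(x : H)‖ / t := by
          ring
    have hhalf : (1 + C * ‖M₁‖) * (K * ‖M₁‖) * ‖(x : H)‖ / t ≤ ‖(x : H)‖ / 2 := by
      rw [div_le_div_iff₀ ht0 two_pos]
      have hKM : 0 ≤ (1 + C * ‖M₁‖) * (K * ‖M₁‖) := by positivity
      have h2t : 2 * ((1 + C * ‖M₁‖) * (K * ‖M₁‖)) ≤ t := by
        calc 2 * ((1 + C * ‖M₁‖) * (K * ‖M₁‖)) ≤ 2 * (1 + C * ‖M₁‖) * (K * ‖M₁‖) + 1 := by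
              nlinarith
        _ ≤ t := ht2
      calc (1 + C * ‖M₁‖) * (K * ‖M₁‖) * ‖(x : H)‖ * 2
          = (2 * ((1 + C * ‖M₁‖) * (K * ‖M₁‖))) * ‖(x : H)‖ := by ring
      _ ≤ t * ‖(x : H)‖ := by gcongr
      _ = ‖(x : H)‖ * t := mul_comm _ _
    have h4 : ‖(x : H)‖ ≤ 2 * (C * t) * ‖M₀ (x : H)‖ := by linarith
    rw [hTapp]
    calc ‖(x : H)‖ ≤ 2 * (C * t) * ‖M₀ (x : H)‖ := h4
    _ ≤ (2 * (C + 1) * t) * ‖M₀ (x : H)‖ := by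
        have : 0 ≤ ‖M₀ (x : H)‖ := norm_nonneg _
        nlinarith
  -- antilipschitz
  have hc0 : 0 ≤ 2 * (C + 1) * t := by positivity
  have hanti : AntilipschitzWith (2 * (C + 1) * t).toNNReal T := by
    apply T.antilipschitz_of_bound
    intro x
    rw [Real.coe_toNNReal _ hc0]
    exact hbb x
  have hinj : Function.Injective T := hanti.injective
  have hclosed : IsClosed (Set.range T) := hanti.isClosed_range T.uniformContinuous
  -- surjectivity via density
  have hsurj : Function.Surjective T := by
    intro y
    -- show y is in the closure of the range
    have hyc : (y : ↥R) ∈ closure (Set.range T) := by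
      rw [Metric.mem_closure_iff]
      intro ε hε
      obtain ⟨u, hu⟩ := y.2
      set A : ℝ := ‖M₁‖ * ((1 + C * ‖M₁‖) * ‖u‖) with hAdef
      have hA0 : 0 ≤ A := by positivity
      set s : ℝ := max (ν + 1) (A / ε + 1) with hsdef
      have hs_nu : ν < ((s : ℝ) : ℂ).re := by
        simp only [Complex.ofReal_re]
        calc ν < ν + 1 := by linarith
        _ ≤ s := le_max_left _ _
      have hsA : A / ε + 1 ≤ s := le_max_right _ _
      have hs0 : 0 < s := by
        have : 0 ≤ A / ε := by positivity
        linarith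
      obtain ⟨S', hS'1, hS'2, hS'norm⟩ := hreg ((s : ℝ) : ℂ) hs_nu
      set x : H := S' (((s : ℝ) : ℂ) • M₀ u) with hxdef
      have hx_eq : x = u - S' (M₁ u) := by
        rw [hxdef, _root_.map_smul, ← _root_.map_smul]
        exact key _ S' hS'2 u
      have hxnorm : ‖x‖ ≤ (1 + C * ‖M₁‖) * ‖u‖ := by
        rw [hx_eq]
        calc ‖u - S' (M₁ u)‖ ≤ ‖u‖ + ‖S' (M₁ u)‖ := norm_sub_le _ _
        _ ≤ ‖u‖ + C * (‖M₁‖ * ‖u‖) := by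
            gcongr
            calc ‖S' (M₁ u)‖ ≤ ‖S'‖ * ‖M₁ u‖ := S'.le_opNorm _
            _ ≤ C * (‖M₁‖ * ‖u‖) := by
                have := M₁.le_opNorm u
                gcongr
        _ = (1 + C * ‖M₁‖) * ‖u‖ := by ring
      -- pencil applied to x gives s • M₀ u
      have hpencil : ((s : ℝ) : ℂ) • M₀ x + M₁ x = ((s : ℝ) : ℂ) • M₀ u := by
        have := congrArg (fun f : H →L[ℂ] H => f (((s : ℝ) : ℂ) • M₀ u)) hS'1
        simpa [hxdef] using this
      have hM1x : M₁ x = M₀ (((s : ℝ) : ℂ) • (u - x)) := by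
        rw [_root_.map_smul, map_sub, smul_sub]
        rw [← hpencil]; abel
      have hxV : x ∈ V := by
        rw [hVdef]
        exact ⟨((s : ℝ) : ℂ) • (u - x), hM1x.symm⟩
      refine ⟨T ⟨x, hxV⟩, ⟨⟨x, hxV⟩, rfl⟩, ?_⟩
      have hdist : dist y (T ⟨x, hxV⟩) = ‖(y : H) - M₀ x‖ := by
        rw [Subtype.dist_eq, dist_eq_norm, hTapp]
      rw [hdist]
      have hsC : (((s : ℝ) : ℂ)) ≠ 0 := by
        simp only [ne_eq, Complex.ofReal_eq_zero]
        exact ne_of_gt hs0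
      have hdiff : ((s : ℝ) : ℂ) • ((y : H) - M₀ x) = M₁ x := by
        rw [← (show M₀ u = (y : H) from hu), smul_sub, ← hpencil]; abel
      have hnorm_eq : s * ‖(y : H) - M₀ x‖ = ‖M₁ x‖ := by
        rw [← hdiff, norm_smul]
        simp [abs_of_pos hs0]
      have hM1xnorm : ‖M₁ x‖ ≤ A := by
        rw [hAdef]
        calc ‖M₁ x‖ ≤ ‖M₁‖ * ‖x‖ := M₁.le_opNorm _
        _ ≤ ‖M₁‖ * ((1 + C * ‖M₁‖) * ‖u‖) := by gcongr
      have : ‖(y : H) - M₀ x‖ ≤ A / s := by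
        rw [le_div_iff₀ hs0]
        calc ‖(y : H) - M₀ x‖ * s = s * ‖(y : H) - M₀ x‖ := mul_comm _ _
        _ = ‖M₁ x‖ := hnorm_eq
        _ ≤ A := hM1xnorm
      calc ‖(y : H) - M₀ x‖ ≤ A / s := this
      _ < ε := by
          rw [div_lt_iff₀ hs0]
          have h1 : ε * (A / ε + 1) ≤ ε * s := mul_le_mul_of_nonneg_left hsA (le_of_lt hε)
          have h2 : ε * (A / ε + 1) = A + ε := by field_simp
          linarith
    rw [hclosed.closure_eq] at hyc
    exact hyc
  have hbij : Function.Bijective T := ⟨hinj, hsurj⟩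
  refine ⟨hbij, ?_⟩
  set e := ContinuousLinearEquiv.ofBijective T (LinearMap.ker_eq_bot.mpr hinj)
    (LinearMap.range_eq_top.mpr hsurj) with hedef
  refine ⟨(e.symm : ↥R →L[ℂ] ↥V), ?_, ?_⟩
  · ext y
    simp only [ContinuousLinearMap.comp_apply, ContinuousLinearMap.id_apply,
      ContinuousLinearEquiv.coe_coe]
    exact congrArg Subtype.val (e.apply_symm_apply y)
  · ext x
    simp only [ContinuousLinearMap.comp_apply, ContinuousLinearMap.id_apply,
      ContinuousLinearEquiv.coe_coe]
    exact congrArg Subtype.val (e.symm_apply_apply x)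
end
end

section
/- Let H be a Hilbert space, M₀, M₁ ∈ L(H), R(M₀) closed, and the pencil z ↦ zM₀ + M₁ regular. Let A := (Q M₀ ι_IV)⁻¹ (Q M₁ ι_IV) : IV → IV, where Q is the orthogonal projection onto R(M₀) and ι_IV the inclusion of IV = M₁⁻¹[R(M₀)]. Then for every u₀ ∈ IV, the function u(t) := exp(−tA)u₀ is the unique continuous function u : [0,∞) → H, continuously differentiable on (0,∞), satisfying M₀u'(t) + M₁u(t) = 0 for t > 0 and u(0) = u₀. -/
set_option synthInstance.maxHeartbeats 1000000
set_option maxHeartbeats 1000000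

open MeasureTheory Filter Set Complex
open scoped Topology

noncomputable section

variable {H : Type*} [NormedAddCommGroup H] [InnerProductSpace ℂ H] [CompleteSpace H]

open scoped Nat

private lemma exp_apply_hasSum (B : H →L[ℂ] H) (x : H) :
    HasSum (fun n : ℕ => (n !⁻¹ : ℂ) • (B ^ n) x) (NormedSpace.exp B x) := by
  have h : HasSum (fun n : ℕ => (n !⁻¹ : ℂ) • B ^ n) (NormedSpace.exp B) := by
    rw [NormedSpace.exp_eq_tsum (𝕂 := ℂ)]
    exact (NormedSpace.expSeries_summable' B).hasSum
  simpa using (ContinuousLinearMap.apply ℂ H x).hasSum h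

private lemma exp_mem (S : Submodule ℂ H) (hS : IsClosed (S : Set H))
    (B : H →L[ℂ] H) (hB : ∀ x ∈ S, B x ∈ S) {x : H} (hx : x ∈ S) :
    NormedSpace.exp B x ∈ S := by
  have hpow : ∀ n : ℕ, (B ^ n) x ∈ S := by
    intro n
    induction n with
    | zero => simpa using hx
    | succ n ih =>
      rw [pow_succ']
      simpa [ContinuousLinearMap.mul_apply] using hB _ ih
  exact hS.mem_of_tendsto (exp_apply_hasSum B x).tendsto_sum_nat
    (Eventually.of_forall fun n => Submodule.sum_mem S fun i _ => S.smul_mem _ (hpow i))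

private lemma expR_hasDerivAt (A : H →L[ℂ] H) (t : ℝ) :
    HasDerivAt (fun s : ℝ => NormedSpace.exp ((s : ℂ) • A))
      (NormedSpace.exp ((t : ℂ) • A) * A) t := by
  have h := hasDerivAt_exp_smul_const (𝕂 := ℂ) A ((t : ℝ) : ℂ)
  have hh : HasDerivAt (fun s : ℝ => (s : ℂ)) 1 t := by
    simpa using (hasDerivAt_id t).ofReal_comp
  simpa [Function.comp_def] using h.scomp t hh

private lemma expRneg_hasDerivAt (A : H →L[ℂ] H) (t : ℝ) :
    HasDerivAt (fun s : ℝ => NormedSpace.exp ((-(s : ℂ)) • A))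
      (-(A * NormedSpace.exp ((-(t : ℂ)) • A))) t := by
  have h := hasDerivAt_exp_smul_const' (𝕂 := ℂ) A (-(t : ℂ))
  have hh : HasDerivAt (fun s : ℝ => -(s : ℂ)) (-1) t := by
    simpa using ((hasDerivAt_id t).neg).ofReal_comp
  simpa [Function.comp_def] using h.scomp t hh

private lemma ker_lemma (M₀ M₁ : H →L[ℂ] H)
    (hreg : ∃ ν C : ℝ, ∀ z : ℂ, ν < z.re →
      ∃ S : H →L[ℂ] H, (z • M₀ + M₁).comp S = ContinuousLinearMap.id ℂ H ∧
        S.comp (z • M₀ + M₁) = ContinuousLinearMap.id ℂ H ∧ ‖S‖ ≤ C)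
    (k : H) (hk0 : M₀ k = 0) (hk1 : M₁ k ∈ LinearMap.range (M₀ : H →ₗ[ℂ] H)) : k = 0 := by
  obtain ⟨ν, C, hreg⟩ := hreg
  obtain ⟨y, hy⟩ := hk1
  set K : ℝ := ‖y‖ + C * ‖M₁ y‖ with hK
  have hbound : ∀ r : ℝ, max ν 0 < r → ‖k‖ ≤ r⁻¹ * K := by
    intro r hr
    have hr0 : (0 : ℝ) < r := lt_of_le_of_lt (le_max_right _ _) hr
    have hrν : ν < ((r : ℂ)).re := by
      simpa using lt_of_le_of_lt (le_max_left ν 0) hr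
    obtain ⟨S, hS1, hS2, hSC⟩ := hreg (r : ℂ) hrν
    have hid : ∀ w : H, S (((r : ℂ) • M₀ + M₁) w) = w := by
      intro w
      have := congrArg (fun T : H →L[ℂ] H => T w) hS2
      simpa using this
    have hk : k = S (M₀ y) := by
      have h1 := hid k
      rw [ContinuousLinearMap.add_apply, ContinuousLinearMap.smul_apply, hk0, smul_zero,
        zero_add, ← hy] at h1
      exact h1.symm
    have hMy : M₀ y = (r : ℂ)⁻¹ • (((r : ℂ) • M₀ + M₁) y - M₁ y) := by
      have hrz : (r : ℂ) ≠ 0 := by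
        simpa using (Complex.ofReal_ne_zero.mpr hr0.ne')
      rw [ContinuousLinearMap.add_apply, ContinuousLinearMap.smul_apply]
      rw [add_sub_cancel_right, smul_smul, inv_mul_cancel₀ hrz, one_smul]
    have hky : k = (r : ℂ)⁻¹ • (y - S (M₁ y)) := by
      rw [hk, hMy, _root_.map_smul, map_sub, hid]
    have hnorm : ‖k‖ ≤ r⁻¹ * (‖y‖ + ‖S (M₁ y)‖) := by
      rw [hky, norm_smul]
      have h1 : ‖((r : ℂ)⁻¹)‖ = r⁻¹ := by
        rw [norm_inv]; simp [abs_of_pos hr0]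
      rw [h1]
      exact mul_le_mul_of_nonneg_left ((norm_sub_le _ _)) (by positivity)
    refine hnorm.trans ?_
    have h2 : ‖S (M₁ y)‖ ≤ C * ‖M₁ y‖ :=
      (S.le_opNorm _).trans (mul_le_mul_of_nonneg_right hSC (norm_nonneg _))
    have : (0:ℝ) ≤ r⁻¹ := by positivity
    exact mul_le_mul_of_nonneg_left (by linarith) this
  have h0 : ‖k‖ ≤ 0 := by
    have ht : Tendsto (fun r : ℝ => r⁻¹ * K) atTop (𝓝 0) := by
      simpa using tendsto_inv_atTop_zero.mul_const K
    exact ge_of_tendsto ht (eventually_atTop.2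
      ⟨max ν 0 + 1, fun r hr => hbound r (lt_of_lt_of_le (lt_add_one _) hr)⟩)
  simpa using le_antisymm h0 (norm_nonneg k)

/-- `A` is (any bounded extension to `H` of) the operator
`(Q M₀ ι_IV)⁻¹ (Q M₁ ι_IV) : IV → IV`, characterised on `IV` by `M₀ (A x) = M₁ x`
together with invariance of `IV`; the strong solution is `u(t) = exp (−tA) u₀`. -/
theorem stmt_8 (M₀ M₁ : H →L[ℂ] H)
    (hR : IsClosed (LinearMap.range (M₀ : H →ₗ[ℂ] H) : Set H))
    (hreg : ∃ ν C : ℝ, ∀ z : ℂ, ν < z.re →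
      ∃ S : H →L[ℂ] H, (z • M₀ + M₁).comp S = ContinuousLinearMap.id ℂ H ∧
        S.comp (z • M₀ + M₁) = ContinuousLinearMap.id ℂ H ∧ ‖S‖ ≤ C)
    (A : H →L[ℂ] H)
    (hAinv : ∀ x : H, M₁ x ∈ LinearMap.range (M₀ : H →ₗ[ℂ] H) → M₁ (A x) ∈ LinearMap.range (M₀ : H →ₗ[ℂ] H))
    (hA : ∀ x : H, M₁ x ∈ LinearMap.range (M₀ : H →ₗ[ℂ] H) → M₀ (A x) = M₁ x)
    (u₀ : H) (hu₀ : M₁ u₀ ∈ LinearMap.range (M₀ : H →ₗ[ℂ] H))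
    (u : ℝ → H) (hu : u = fun t : ℝ => (NormedSpace.exp ((-(t : ℂ)) • A)) u₀) :
    (ContinuousOn u (Ici 0) ∧
      ∃ u' : ℝ → H, (∀ t : ℝ, 0 < t → HasDerivAt u (u' t) t) ∧
        ContinuousOn u' (Ioi 0) ∧
        (∀ t : ℝ, 0 < t → M₀ (u' t) + M₁ (u t) = 0) ∧ u 0 = u₀) ∧
    (∀ v v' : ℝ → H, ContinuousOn v (Ici 0) →
      (∀ t : ℝ, 0 < t → HasDerivAt v (v' t) t) →
      ContinuousOn v' (Ioi 0) →
      (∀ t : ℝ, 0 < t → M₀ (v' t) + M₁ (v t) = 0) →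
      v 0 = u₀ → ∀ t : ℝ, 0 ≤ t → v t = u t) := by
  -- the invariant closed subspace
  set S : Submodule ℂ H := (LinearMap.range (M₀ : H →ₗ[ℂ] H)).comap (M₁ : H →ₗ[ℂ] H) with hSdef
  have hSmem : ∀ x : H, x ∈ S ↔ M₁ x ∈ LinearMap.range (M₀ : H →ₗ[ℂ] H) := fun x => Iff.rfl
  have hScl : IsClosed (S : Set H) := hR.preimage M₁.continuous
  -- derivative of u everywhere
  have hder : ∀ t : ℝ, HasDerivAt u (-(A (u t))) t := by
    intro t
    have h1 := ((ContinuousLinearMap.apply ℂ H u₀).restrictScalars ℝ).hasFDerivAt.comp_hasDerivAt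
      t (expRneg_hasDerivAt A t)
    have h2 : (fun s : ℝ => ((ContinuousLinearMap.apply ℂ H u₀).restrictScalars ℝ)
        (NormedSpace.exp ((-(s : ℂ)) • A))) = u := by
      rw [hu]; rfl
    simp only [Function.comp_def] at h1
    rw [h2] at h1
    convert h1 using 1
    rw [hu]
    simp [ContinuousLinearMap.mul_apply]
  have hu_cont : Continuous u := continuous_iff_continuousAt.mpr fun t => (hder t).continuousAt
  -- invariance of S
  have humem : ∀ t : ℝ, u t ∈ S := by
    intro t
    rw [hu]
    refine exp_mem S hScl _ (fun x hx => ?_) hu₀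
    have : M₁ (((-(t : ℂ)) • A) x) = (-(t : ℂ)) • M₁ (A x) := by
      simp
    refine (hSmem _).mpr ?_
    rw [this]
    exact Submodule.smul_mem _ _ (hAinv x hx)
  constructor
  · refine ⟨hu_cont.continuousOn, fun t => -(A (u t)), fun t _ => hder t,
      ((A.continuous.comp hu_cont).neg).continuousOn, fun t ht => ?_, ?_⟩
    · rw [map_neg, hA (u t) (humem t), neg_add_cancel]
    · rw [hu]; simp
  · intro v v' hvc hvd hv'c hveq hv0
    -- each v s lies in S for s > 0
    have hvmem : ∀ s : ℝ, 0 < s → v s ∈ S := by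
      intro s hs
      refine (hSmem _).mpr ⟨-(v' s), ?_⟩
      rw [map_neg]
      exact neg_eq_of_add_eq_zero_right (hveq s hs)
    have hv'mem : ∀ s : ℝ, 0 < s → v' s ∈ S := by
      intro s hs
      have hslope : Tendsto (slope v s) (𝓝[>] s) (𝓝 (v' s)) :=
        (hasDerivAt_iff_tendsto_slope.mp (hvd s hs)).mono_left
          (nhdsWithin_mono s fun y hy => Set.mem_compl_singleton_iff.mpr (ne_of_gt hy))
      refine hScl.mem_of_tendsto hslope ?_
      filter_upwards [self_mem_nhdsWithin] with y hy
      have hyS : v y ∈ S := hvmem y (hs.trans hy)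
      have hsS : v s ∈ S := hvmem s hs
      show (y - s)⁻¹ • (v y - v s) ∈ S
      exact S.smul_of_tower_mem _ (S.sub_mem hyS hsS)
    have hv' : ∀ s : ℝ, 0 < s → v' s = -(A (v s)) := by
      intro s hs
      have hvS := (hSmem _).mp (hvmem s hs)
      have hsum : v' s + A (v s) ∈ S :=
        S.add_mem (hv'mem s hs) ((hSmem _).mpr (hAinv _ hvS))
      have h0 : M₀ (v' s + A (v s)) = 0 := by
        rw [map_add, hA _ hvS]
        exact hveq s hs
      have hz := ker_lemma M₀ M₁ hreg _ h0 ((hSmem _).mp hsum)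
      exact eq_neg_of_add_eq_zero_left hz
    set E : ℝ → (H →L[ℂ] H) := fun s => NormedSpace.exp ((s : ℂ) • A) with hE
    have hEc : Continuous E :=
      continuous_iff_continuousAt.mpr fun s => (expR_hasDerivAt A s).continuousAt
    set g : ℝ → H := fun s => E s (v s) with hg
    have hgc : ContinuousOn g (Ici 0) :=
      hEc.continuousOn.clm_apply hvc
    have hgd : ∀ s : ℝ, 0 < s → HasDerivAt g 0 s := by
      intro s hs
      have h1 := (ContinuousLinearMap.restrictScalarsL ℂ H H ℝ ℝ).hasFDerivAt.comp_hasDerivAt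
        s (expR_hasDerivAt A s)
      simp only [Function.comp_def] at h1
      have h2 := h1.clm_apply (hvd s hs)
      have h3 : (ContinuousLinearMap.restrictScalarsL ℂ H H ℝ ℝ) (E s * A) (v s)
          + (ContinuousLinearMap.restrictScalarsL ℂ H H ℝ ℝ) (E s) (v' s) = 0 := by
        rw [hv' s hs]
        simp [ContinuousLinearMap.mul_apply]
      have h4 : HasDerivAt g ((ContinuousLinearMap.restrictScalarsL ℂ H H ℝ ℝ) (E s * A) (v s)
          + (ContinuousLinearMap.restrictScalarsL ℂ H H ℝ ℝ) (E s) (v' s)) s := h2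
      rwa [h3] at h4
    intro t ht
    rcases ht.eq_or_lt with h | h
    · rw [← h, hv0, hu]; simp
    · have key : ∀ ε : ℝ, 0 < ε → ε ≤ t → g t = g ε := by
        intro ε hε hεt
        have hcont : ContinuousOn g (Icc ε t) := hgc.mono fun x hx => le_trans hε.le hx.1
        have hderiv : ∀ x ∈ Ico ε t, HasDerivWithinAt g 0 (Ici x) x :=
          fun x hx => (hgd x (lt_of_lt_of_le hε hx.1)).hasDerivWithinAt
        exact constant_of_has_deriv_right_zero hcont hderiv t (right_mem_Icc.mpr hεt)
      have h1 : Tendsto g (𝓝[>] (0:ℝ)) (𝓝 (g 0)) :=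
        (hgc 0 self_mem_Ici).mono_left (nhdsWithin_mono 0 Ioi_subset_Ici_self)
      have h2 : Tendsto g (𝓝[>] (0:ℝ)) (𝓝 (g t)) := by
        refine Tendsto.congr' ?_ tendsto_const_nhds
        filter_upwards [Ioo_mem_nhdsGT_of_mem (Set.mem_Ico.mpr ⟨le_refl 0, h⟩)] with s hs
        exact key s hs.1 hs.2.le
      have hgt : g t = g 0 := tendsto_nhds_unique h2 h1
      have hg0 : g 0 = u₀ := by
        show E 0 (v 0) = u₀
        rw [hv0, hE]
        simp
      have hinv : NormedSpace.exp ((-(t:ℂ)) • A) * NormedSpace.exp ((t:ℂ) • A) = 1 := by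
        let +nondep : NormedAlgebra ℚ (H →L[ℂ] H) := .restrictScalars ℚ ℂ (H →L[ℂ] H)
        rw [← NormedSpace.exp_add_of_commute (((Commute.refl A).smul_left _).smul_right _),
          ← add_smul]
        simp
      have hvt : v t = NormedSpace.exp ((-(t:ℂ)) • A) u₀ := by
        calc v t = (NormedSpace.exp ((-(t:ℂ)) • A) * NormedSpace.exp ((t:ℂ) • A)) (v t) := by
              rw [hinv]; simp
        _ = NormedSpace.exp ((-(t:ℂ)) • A) (g t) := rfl
        _ = NormedSpace.exp ((-(t:ℂ)) • A) u₀ := by rw [hgt, hg0]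
      rw [hvt, hu]
end
end

section
/- Let H be a Hilbert space, M₀, M₁ ∈ L(H), R(M₀) closed, pencil z ↦ zM₀ + M₁ regular. An element u ∈ H lies in IV = M₁⁻¹[R(M₀)] if and only if its component in N(M₀) satisfies P_{N(M₀)} u = −(P⊥ M₁ ι_{N(M₀)})⁻¹ P⊥ M₁ P_{N(M₀)^⊥} u, where P⊥ denotes the orthogonal projection onto R(M₀)^⊥ and P_{N(M₀)}, P_{N(M₀)^⊥} the orthogonal projections onto N(M₀) and N(M₀)^⊥ respectively. -/
set_option synthInstance.maxHeartbeats 1000000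
set_option maxHeartbeats 1000000

open MeasureTheory Filter Set Complex
open scoped Topology

noncomputable section

variable {H : Type*} [NormedAddCommGroup H] [InnerProductSpace ℂ H] [CompleteSpace H]

theorem stmt_9 (M₀ M₁ : H →L[ℂ] H)
    (hR : IsClosed (LinearMap.range (M₀ : H →ₗ[ℂ] H) : Set H))
    (hreg : ∃ ν C : ℝ, ∀ z : ℂ, ν < z.re →
      ∃ S : H →L[ℂ] H, (z • M₀ + M₁).comp S = ContinuousLinearMap.id ℂ H ∧
        S.comp (z • M₀ + M₁) = ContinuousLinearMap.id ℂ H ∧ ‖S‖ ≤ C)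
    -- Binv is the inverse of P⊥ M₁ ι_{N(M₀)} : N(M₀) → R(M₀)^⊥
    (Binv : ↥((LinearMap.range (M₀ : H →ₗ[ℂ] H))ᗮ) →L[ℂ] ↥(LinearMap.ker (M₀ : H →ₗ[ℂ] H)))
    (hBinv :
      ((Submodule.orthogonalProjectionOnto ((LinearMap.range (M₀ : H →ₗ[ℂ] H))ᗮ)).comp
          (M₁.comp (LinearMap.ker (M₀ : H →ₗ[ℂ] H)).subtypeL)).comp Binv =
        ContinuousLinearMap.id ℂ ↥((LinearMap.range (M₀ : H →ₗ[ℂ] H))ᗮ) ∧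
      Binv.comp ((Submodule.orthogonalProjectionOnto ((LinearMap.range (M₀ : H →ₗ[ℂ] H))ᗮ)).comp
          (M₁.comp (LinearMap.ker (M₀ : H →ₗ[ℂ] H)).subtypeL)) =
        ContinuousLinearMap.id ℂ ↥(LinearMap.ker (M₀ : H →ₗ[ℂ] H)))
    (u : H) :
    -- u ∈ IV ↔ P_{N(M₀)} u = −(P⊥ M₁ ι_{N(M₀)})⁻¹ P⊥ M₁ P_{N(M₀)^⊥} u,
    -- where P_{N(M₀)} u = u − P_{N(M₀)^⊥} u
    M₁ u ∈ LinearMap.range (M₀ : H →ₗ[ℂ] H) ↔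
      u - ((Submodule.orthogonalProjectionOnto ((LinearMap.ker (M₀ : H →ₗ[ℂ] H))ᗮ) u : H)) =
        -((Binv ((Submodule.orthogonalProjectionOnto ((LinearMap.range (M₀ : H →ₗ[ℂ] H))ᗮ))
            (M₁ ((Submodule.orthogonalProjectionOnto ((LinearMap.ker (M₀ : H →ₗ[ℂ] H))ᗮ) u : H)))) : H)) := by
  have hcr : CompleteSpace (LinearMap.range (M₀ : H →ₗ[ℂ] H)) := hR.completeSpace_coe
  have hwmem : u - ((Submodule.orthogonalProjectionOnto (LinearMap.ker (M₀ : H →ₗ[ℂ] H))ᗮ) u : H) ∈ LinearMap.ker (M₀ : H →ₗ[ℂ] H) := by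
    have h := Submodule.starProjection_add_starProjection_orthogonal (K := LinearMap.ker (M₀ : H →ₗ[ℂ] H)) u
    have h2 : ((Submodule.orthogonalProjectionOnto (LinearMap.ker (M₀ : H →ₗ[ℂ] H)) u : H))
        = u - ((Submodule.orthogonalProjectionOnto (LinearMap.ker (M₀ : H →ₗ[ℂ] H))ᗮ) u : H) := by
      rw [eq_sub_iff_add_eq]; exact h
    rw [← h2]; exact (Submodule.orthogonalProjectionOnto (LinearMap.ker (M₀ : H →ₗ[ℂ] H)) u).2
  have hmem : M₁ u ∈ LinearMap.range (M₀ : H →ₗ[ℂ] H) ↔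
      (Submodule.orthogonalProjectionOnto (LinearMap.range (M₀ : H →ₗ[ℂ] H))ᗮ) (M₁ u) = 0 := by
    rw [Submodule.orthogonalProjectionOnto_eq_zero_iff, Submodule.orthogonal_orthogonal]
  set w : (LinearMap.ker (M₀ : H →ₗ[ℂ] H)) := ⟨u - ((Submodule.orthogonalProjectionOnto (LinearMap.ker (M₀ : H →ₗ[ℂ] H))ᗮ) u : H), hwmem⟩
    with hwdef
  have hsplit : (Submodule.orthogonalProjectionOnto (LinearMap.range (M₀ : H →ₗ[ℂ] H))ᗮ) (M₁ u) =
      ((Submodule.orthogonalProjectionOnto ((LinearMap.range (M₀ : H →ₗ[ℂ] H))ᗮ)).comp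
          (M₁.comp (LinearMap.ker (M₀ : H →ₗ[ℂ] H)).subtypeL)) w +
      (Submodule.orthogonalProjectionOnto (LinearMap.range (M₀ : H →ₗ[ℂ] H))ᗮ)
        (M₁ ((Submodule.orthogonalProjectionOnto (LinearMap.ker (M₀ : H →ₗ[ℂ] H))ᗮ) u : H)) := by
    have h1 : M₁ u = M₁ (u - ((Submodule.orthogonalProjectionOnto (LinearMap.ker (M₀ : H →ₗ[ℂ] H))ᗮ) u : H))
        + M₁ ((Submodule.orthogonalProjectionOnto (LinearMap.ker (M₀ : H →ₗ[ℂ] H))ᗮ) u : H) := by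
      rw [← map_add]; congr 1; abel
    rw [h1, map_add]; rfl
  constructor
  · intro h
    have h0 := hmem.1 h
    rw [hsplit] at h0
    have h1 : ((Submodule.orthogonalProjectionOnto ((LinearMap.range (M₀ : H →ₗ[ℂ] H))ᗮ)).comp
          (M₁.comp (LinearMap.ker (M₀ : H →ₗ[ℂ] H)).subtypeL)) w =
        -((Submodule.orthogonalProjectionOnto (LinearMap.range (M₀ : H →ₗ[ℂ] H))ᗮ)
          (M₁ ((Submodule.orthogonalProjectionOnto (LinearMap.ker (M₀ : H →ₗ[ℂ] H))ᗮ) u : H))) := by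
      rw [eq_neg_iff_add_eq_zero]; exact h0
    have h2 : w = Binv (((Submodule.orthogonalProjectionOnto ((LinearMap.range (M₀ : H →ₗ[ℂ] H))ᗮ)).comp
          (M₁.comp (LinearMap.ker (M₀ : H →ₗ[ℂ] H)).subtypeL)) w) := by
      have := congrArg (fun f => f w) hBinv.2
      simpa using this.symm
    have h3 : w = -(Binv ((Submodule.orthogonalProjectionOnto (LinearMap.range (M₀ : H →ₗ[ℂ] H))ᗮ)
          (M₁ ((Submodule.orthogonalProjectionOnto (LinearMap.ker (M₀ : H →ₗ[ℂ] H))ᗮ) u : H)))) := by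
      rw [h2, h1, map_neg]
    have := congrArg (Subtype.val) h3
    simpa [hwdef] using this
  · intro h
    have h3 : w = -(Binv ((Submodule.orthogonalProjectionOnto (LinearMap.range (M₀ : H →ₗ[ℂ] H))ᗮ)
          (M₁ ((Submodule.orthogonalProjectionOnto (LinearMap.ker (M₀ : H →ₗ[ℂ] H))ᗮ) u : H)))) :=
      Subtype.ext (by simpa [hwdef] using h)
    have hid := congrArg (fun f => f ((Submodule.orthogonalProjectionOnto (LinearMap.range (M₀ : H →ₗ[ℂ] H))ᗮ)
          (M₁ ((Submodule.orthogonalProjectionOnto (LinearMap.ker (M₀ : H →ₗ[ℂ] H))ᗮ) u : H)))) hBinv.1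
    simp only [ContinuousLinearMap.comp_apply, ContinuousLinearMap.id_apply] at hid
    apply hmem.2
    rw [hsplit, h3, map_neg]
    simp only [ContinuousLinearMap.comp_apply]
    rw [hid]
    abel
end
end

section
/- Let H be a Hilbert space, M₀, M₁ ∈ L(H), R(M₀) closed, pencil regular. Then N(M₀)^⊥ ⊆ IV if and only if P⊥ M₁ ι_{N(M₀)^⊥} = 0, where P⊥ is the orthogonal projection onto R(M₀)^⊥ and ι_{N(M₀)^⊥} the inclusion of N(M₀)^⊥. Moreover, in that case N(M₀)^⊥ = IV. -/
set_option synthInstance.maxHeartbeats 1000000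
set_option maxHeartbeats 1000000

open MeasureTheory Filter Set Complex
open scoped Topology

noncomputable section

variable {H : Type*} [NormedAddCommGroup H] [InnerProductSpace ℂ H] [CompleteSpace H]

theorem stmt_10 (M₀ M₁ : H →L[ℂ] H)
    (hR : IsClosed (LinearMap.range (M₀ : H →ₗ[ℂ] H) : Set H))
    (hreg : ∃ ν C : ℝ, ∀ z : ℂ, ν < z.re →
      ∃ S : H →L[ℂ] H, (z • M₀ + M₁).comp S = ContinuousLinearMap.id ℂ H ∧
        S.comp (z • M₀ + M₁) = ContinuousLinearMap.id ℂ H ∧ ‖S‖ ≤ C) :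
    ((LinearMap.ker (M₀ : H →ₗ[ℂ] H))ᗮ ≤ Submodule.comap (M₁ : H →ₗ[ℂ] H) (LinearMap.range (M₀ : H →ₗ[ℂ] H)) ↔
      (Submodule.orthogonalProjectionOnto ((LinearMap.range (M₀ : H →ₗ[ℂ] H))ᗮ)).comp
        (M₁.comp ((LinearMap.ker (M₀ : H →ₗ[ℂ] H))ᗮ).subtypeL) = 0) ∧
    ((LinearMap.ker (M₀ : H →ₗ[ℂ] H))ᗮ ≤ Submodule.comap (M₁ : H →ₗ[ℂ] H) (LinearMap.range (M₀ : H →ₗ[ℂ] H)) →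
      (LinearMap.ker (M₀ : H →ₗ[ℂ] H))ᗮ = Submodule.comap (M₁ : H →ₗ[ℂ] H) (LinearMap.range (M₀ : H →ₗ[ℂ] H))) := by
  haveI hcomp : CompleteSpace (LinearMap.range (M₀ : H →ₗ[ℂ] H) : Submodule ℂ H) :=
    hR.completeSpace_coe
  have hKK : ((LinearMap.range (M₀ : H →ₗ[ℂ] H) : Submodule ℂ H)ᗮ)ᗮ = LinearMap.range (M₀ : H →ₗ[ℂ] H) :=
    Submodule.orthogonal_orthogonal _
  have key : ∀ y : H,
      (Submodule.orthogonalProjectionOnto ((LinearMap.range (M₀ : H →ₗ[ℂ] H) : Submodule ℂ H)ᗮ) y = 0 ↔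
        y ∈ LinearMap.range (M₀ : H →ₗ[ℂ] H)) := by
    intro y
    rw [Submodule.orthogonalProjectionOnto_eq_zero_iff, hKK]
  have hker0 : ∀ u : H, M₀ u = 0 → M₁ u ∈ LinearMap.range (M₀ : H →ₗ[ℂ] H) → u = 0 := by
    intro u hu hmem
    obtain ⟨w, hw⟩ := hmem
    obtain ⟨ν, C, hreg⟩ := hreg
    have hbound : ∀ t : ℝ, max ν 0 < t → t * ‖u‖ ≤ ‖w‖ + C * (‖M₁‖ * ‖w‖) := by
      intro t ht
      have htν : ν < ((t : ℂ)).re := by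
        simpa using lt_of_le_of_lt (le_max_left ν 0) ht
      obtain ⟨S, hS1, hS2, hSC⟩ := hreg (t : ℂ) htν
      have hS2' : ∀ v : H, S (((t : ℂ) • M₀ + M₁) v) = v := by
        intro v
        have := ContinuousLinearMap.ext_iff.mp hS2 v
        simpa using this
      have h1 : S (M₀ w) = u := by
        have heq : ((t : ℂ) • M₀ + M₁) u = M₀ w := by
          simp [ContinuousLinearMap.add_apply, hu, ← hw]
        rw [← heq, hS2']
      have h2 : (t : ℂ) • u = w - S (M₁ w) := by
        have hww := hS2' w
        have hsum : S ((t : ℂ) • (M₀ w)) + S (M₁ w) = w := by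
          simpa [ContinuousLinearMap.add_apply, map_add] using hww
        rw [_root_.map_smul, h1] at hsum
        rw [eq_sub_iff_add_eq]
        exact hsum
      have hC : ‖S (M₁ w)‖ ≤ C * (‖M₁‖ * ‖w‖) := by
        calc ‖S (M₁ w)‖ ≤ ‖S‖ * ‖M₁ w‖ := S.le_opNorm _
          _ ≤ C * (‖M₁‖ * ‖w‖) :=
            mul_le_mul hSC (M₁.le_opNorm w) (norm_nonneg _)
              ((norm_nonneg S).trans hSC)
      have ht0 : 0 < t := lt_of_le_of_lt (le_max_right ν 0) ht
      have hn : ‖(t : ℂ) • u‖ = t * ‖u‖ := by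
        rw [norm_smul, Complex.norm_real, Real.norm_eq_abs, abs_of_pos ht0]
      calc t * ‖u‖ = ‖(t : ℂ) • u‖ := hn.symm
        _ = ‖w - S (M₁ w)‖ := by rw [h2]
        _ ≤ ‖w‖ + ‖S (M₁ w)‖ := norm_sub_le _ _
        _ ≤ ‖w‖ + C * (‖M₁‖ * ‖w‖) := by linarith
    by_contra hne
    have hu0 : 0 < ‖u‖ := norm_pos_iff.mpr hne
    set B := ‖w‖ + C * (‖M₁‖ * ‖w‖) with hB
    have hm : (0 : ℝ) ≤ max ν 0 := le_max_right ν 0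
    have hB0 : 0 ≤ B := by
      have h := hbound (max ν 0 + 1) (by linarith)
      have h' : 0 ≤ (max ν 0 + 1) * ‖u‖ :=
        mul_nonneg (by linarith) (norm_nonneg u)
      linarith
    have hdiv : 0 ≤ B / ‖u‖ := div_nonneg hB0 hu0.le
    have ht := hbound (max ν 0 + 1 + B / ‖u‖) (by linarith)
    have hcancel : (B / ‖u‖) * ‖u‖ = B := div_mul_cancel₀ B hu0.ne'
    nlinarith [mul_nonneg hm hu0.le]
  constructor
  · constructor
    · intro hle
      ext x
      simp only [ContinuousLinearMap.comp_apply, ContinuousLinearMap.zero_apply,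
        Submodule.subtypeL_apply]
      exact congrArg Subtype.val ((key (M₁ x)).mpr (hle x.2))
    · intro h0 x hx
      have hx0 := ContinuousLinearMap.ext_iff.mp h0 ⟨x, hx⟩
      simp only [ContinuousLinearMap.comp_apply, ContinuousLinearMap.zero_apply,
        Submodule.subtypeL_apply] at hx0
      exact Submodule.mem_comap.mpr ((key (M₁ x)).mp hx0)
  · intro hle
    refine le_antisymm hle ?_
    intro x hx
    have hx' : M₁ x ∈ LinearMap.range (M₀ : H →ₗ[ℂ] H) := hx
    haveI : CompleteSpace (LinearMap.ker (M₀ : H →ₗ[ℂ] H) : Submodule ℂ H) :=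
      (ContinuousLinearMap.isClosed_ker M₀).completeSpace_coe
    obtain ⟨u, hu, v, hv, rfl⟩ :=
      (LinearMap.ker (M₀ : H →ₗ[ℂ] H)).exists_add_mem_mem_orthogonal x
    have hv' : M₁ v ∈ LinearMap.range (M₀ : H →ₗ[ℂ] H) := hle hv
    have hMu : M₁ u ∈ LinearMap.range (M₀ : H →ₗ[ℂ] H) := by
      have : M₁ u = M₁ (u + v) - M₁ v := by rw [map_add]; abel
      rw [this]
      exact Submodule.sub_mem _ hx' hv'
    have hu0 : u = 0 := hker0 u hu hMu
    rw [hu0, zero_add]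
    exact hv
end
end

section
/- Let H be a Hilbert space, M₀, M₁ ∈ L(H), R(M₀) closed, pencil z ↦ zM₀ + M₁ regular. Let A_IV := −(Q M₀ ι_IV)⁻¹(Q M₁ ι_IV) ∈ L(IV), where Q projects onto R(M₀) and IV = M₁⁻¹[R(M₀)]. Then σ(A_IV) = σ(𝓜) := {z ∈ ℂ : zM₀+M₁ is not boundedly invertible}. -/
set_option synthInstance.maxHeartbeats 1000000
set_option maxHeartbeats 1000000

open MeasureTheory Filter Set Complex
open scoped Topology

noncomputable section

variable {H : Type*} [NormedAddCommGroup H] [InnerProductSpace ℂ H] [CompleteSpace H]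

/-- `A` is the operator `−(Q M₀ ι_IV)⁻¹ (Q M₁ ι_IV) ∈ L(IV)`, characterised on `IV`
by `M₀ (A x) = −M₁ x`. Its spectrum equals the spectrum of the pencil. -/


theorem stmt_12 (M₀ M₁ : H →L[ℂ] H)
    (hR : IsClosed (LinearMap.range (M₀ : H →ₗ[ℂ] H) : Set H))
    (hreg : ∃ ν C : ℝ, ∀ z : ℂ, ν < z.re →
      ∃ S : H →L[ℂ] H, (z • M₀ + M₁).comp S = ContinuousLinearMap.id ℂ H ∧
        S.comp (z • M₀ + M₁) = ContinuousLinearMap.id ℂ H ∧ ‖S‖ ≤ C)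
    (A : ↥(Submodule.comap (M₁ : H →ₗ[ℂ] H) (LinearMap.range (M₀ : H →ₗ[ℂ] H))) →L[ℂ]
         ↥(Submodule.comap (M₁ : H →ₗ[ℂ] H) (LinearMap.range (M₀ : H →ₗ[ℂ] H))))
    (hA : ∀ x : ↥(Submodule.comap (M₁ : H →ₗ[ℂ] H) (LinearMap.range (M₀ : H →ₗ[ℂ] H))),
      M₀ ((A x : H)) = -(M₁ (x : H))) :
    spectrum ℂ A = {z : ℂ | ¬ IsUnit (z • M₀ + M₁)} := by
  obtain ⟨ν, C, hreg⟩ := hreg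
  have hC : (0:ℝ) ≤ C := by
    obtain ⟨S, _, _, hS⟩ := hreg ((ν+1 : ℝ) : ℂ) (by rw [Complex.ofReal_re]; linarith)
    exact (norm_nonneg S).trans hS
  -- M₀ is injective on (Submodule.comap (M₁ : H →ₗ[ℂ] H) (LinearMap.range (M₀ : H →ₗ[ℂ] H)))
  have inj : ∀ x : (Submodule.comap (M₁ : H →ₗ[ℂ] H) (LinearMap.range (M₀ : H →ₗ[ℂ] H))), M₀ (x : H) = 0 → x = 0 := by
    intro x hx0
    obtain ⟨u, hu⟩ : ∃ u : H, M₀ u = M₁ (x : H) := x.2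
    set D : ℝ := ‖u‖ + C * ‖M₁ u‖ with hD
    have hDnn : 0 ≤ D := by positivity
    have key : ∀ t : ℝ, ν < t → 0 < t → ‖(x:H)‖ * t ≤ D := by
      intro t htν htpos
      obtain ⟨S, h1, h2, hS⟩ := hreg ((t : ℝ) : ℂ) (by rw [Complex.ofReal_re]; exact htν)
      have h2' : ∀ y : H, S ((((t:ℝ):ℂ) • M₀ + M₁) y) = y := by
        intro y
        have := DFunLike.congr_fun h2 y
        simpa using this
      have hxS : (x : H) = S (M₀ u) := by
        have h4 : (((t:ℝ):ℂ) • M₀ + M₁) (x : H) = M₀ u := by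
          simp [ContinuousLinearMap.add_apply, ContinuousLinearMap.smul_apply, hx0, hu]
        rw [← h4, h2']
      have hsmul : ((t:ℝ):ℂ) • (x : H) = u - S (M₁ u) := by
        have h5 : ((t:ℝ):ℂ) • M₀ u = (((t:ℝ):ℂ) • M₀ + M₁) u - M₁ u := by
          simp [ContinuousLinearMap.add_apply, ContinuousLinearMap.smul_apply]
        rw [hxS, ← _root_.map_smul, h5, map_sub, h2']
      have hnorm : ‖((t:ℝ):ℂ) • (x : H)‖ = t * ‖(x:H)‖ := by
        rw [norm_smul, Complex.norm_real, Real.norm_eq_abs, abs_of_pos htpos]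
      have hb : ‖u - S (M₁ u)‖ ≤ D := by
        refine (norm_sub_le _ _).trans ?_
        have h6 : ‖S (M₁ u)‖ ≤ C * ‖M₁ u‖ :=
          (S.le_opNorm _).trans (mul_le_mul_of_nonneg_right hS (norm_nonneg _))
        rw [hD]; linarith
      rw [mul_comm, ← hnorm, hsmul]
      exact hb
    by_contra hne
    have hxn : 0 < ‖(x:H)‖ := by
      rw [norm_pos_iff]
      exact fun h => hne (Subtype.ext h)
    set t : ℝ := max (max ν 0 + 1) (D / ‖(x:H)‖ + 1) with ht
    have htν : ν < t := lt_of_le_of_lt (le_max_left ν 0) (by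
      calc max ν 0 < max ν 0 + 1 := by linarith
        _ ≤ t := le_max_left _ _)
    have htpos : 0 < t := lt_of_le_of_lt (le_max_right ν 0) (by
      calc max ν 0 < max ν 0 + 1 := by linarith
        _ ≤ t := le_max_left _ _)
    have htD : D / ‖(x:H)‖ < t :=
      lt_of_lt_of_le (by linarith) (le_max_right _ _)
    have hcon : D < ‖(x:H)‖ * t := by
      rw [div_lt_iff₀ hxn] at htD
      calc D < t * ‖(x:H)‖ := htD
        _ = ‖(x:H)‖ * t := mul_comm _ _
    exact absurd (key t htν htpos) (by linarith)
  -- the coercion computation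
  have hMA : ∀ (c : ℂ) (y : (Submodule.comap (M₁ : H →ₗ[ℂ] H) (LinearMap.range (M₀ : H →ₗ[ℂ] H)))),
      M₀ ((((algebraMap ℂ ((Submodule.comap (M₁ : H →ₗ[ℂ] H) (LinearMap.range (M₀ : H →ₗ[ℂ] H))) →L[ℂ] (Submodule.comap (M₁ : H →ₗ[ℂ] H) (LinearMap.range (M₀ : H →ₗ[ℂ] H)))) c - A) y : (Submodule.comap (M₁ : H →ₗ[ℂ] H) (LinearMap.range (M₀ : H →ₗ[ℂ] H)))) : H)) = (c • M₀ + M₁) (y : H) := by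
    intro c y
    have h7 : (((algebraMap ℂ ((Submodule.comap (M₁ : H →ₗ[ℂ] H) (LinearMap.range (M₀ : H →ₗ[ℂ] H))) →L[ℂ] (Submodule.comap (M₁ : H →ₗ[ℂ] H) (LinearMap.range (M₀ : H →ₗ[ℂ] H)))) c - A) y : (Submodule.comap (M₁ : H →ₗ[ℂ] H) (LinearMap.range (M₀ : H →ₗ[ℂ] H)))) : H) = c • (y : H) - ((A y : (Submodule.comap (M₁ : H →ₗ[ℂ] H) (LinearMap.range (M₀ : H →ₗ[ℂ] H)))) : H) := by
      simp [Algebra.algebraMap_eq_smul_one, ContinuousLinearMap.sub_apply,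
        ContinuousLinearMap.smul_apply, ContinuousLinearMap.one_apply]
    rw [h7, map_sub, _root_.map_smul, hA y]
    simp [ContinuousLinearMap.add_apply, ContinuousLinearMap.smul_apply, sub_neg_eq_add]
  -- main construction: from an inverse of the pencil, a two-sided inverse of c - A
  have mk : ∀ (c : ℂ) (S : H →L[ℂ] H),
      (∀ y, (c • M₀ + M₁) (S y) = y) → (∀ y, S ((c • M₀ + M₁) y) = y) →
      ∃ P : H →L[ℂ] (Submodule.comap (M₁ : H →ₗ[ℂ] H) (LinearMap.range (M₀ : H →ₗ[ℂ] H))),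
        (algebraMap ℂ ((Submodule.comap (M₁ : H →ₗ[ℂ] H) (LinearMap.range (M₀ : H →ₗ[ℂ] H))) →L[ℂ] (Submodule.comap (M₁ : H →ₗ[ℂ] H) (LinearMap.range (M₀ : H →ₗ[ℂ] H)))) c - A) * (P.comp (Submodule.comap (M₁ : H →ₗ[ℂ] H) (LinearMap.range (M₀ : H →ₗ[ℂ] H))).subtypeL) = 1 ∧
        (P.comp (Submodule.comap (M₁ : H →ₗ[ℂ] H) (LinearMap.range (M₀ : H →ₗ[ℂ] H))).subtypeL) * (algebraMap ℂ ((Submodule.comap (M₁ : H →ₗ[ℂ] H) (LinearMap.range (M₀ : H →ₗ[ℂ] H))) →L[ℂ] (Submodule.comap (M₁ : H →ₗ[ℂ] H) (LinearMap.range (M₀ : H →ₗ[ℂ] H)))) c - A) = 1 ∧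
        ∀ y : H, ((P y : (Submodule.comap (M₁ : H →ₗ[ℂ] H) (LinearMap.range (M₀ : H →ₗ[ℂ] H)))) : H) = S (M₀ y) := by
    intro c S hS1 hS2
    have hmem : ∀ y : H, S (M₀ y) ∈ (Submodule.comap (M₁ : H →ₗ[ℂ] H) (LinearMap.range (M₀ : H →ₗ[ℂ] H))) := by
      intro y
      refine (⟨y - c • S (M₀ y), ?_⟩ : ∃ u : H, M₀ u = M₁ (S (M₀ y)))
      have h1 := hS1 (M₀ y)
      simp only [ContinuousLinearMap.add_apply, ContinuousLinearMap.smul_apply] at h1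
      rw [map_sub, _root_.map_smul]
      exact (eq_sub_of_add_eq' h1).symm
    refine ⟨ContinuousLinearMap.codRestrict (S.comp M₀) (Submodule.comap (M₁ : H →ₗ[ℂ] H) (LinearMap.range (M₀ : H →ₗ[ℂ] H))) hmem, ?_, ?_, fun y => rfl⟩
    · ext x
      simp only [ContinuousLinearMap.mul_apply, ContinuousLinearMap.one_apply,
        ContinuousLinearMap.coe_coe]
      have hz : M₀ ((((algebraMap ℂ ((Submodule.comap (M₁ : H →ₗ[ℂ] H) (LinearMap.range (M₀ : H →ₗ[ℂ] H))) →L[ℂ] (Submodule.comap (M₁ : H →ₗ[ℂ] H) (LinearMap.range (M₀ : H →ₗ[ℂ] H)))) c - A)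
          (((ContinuousLinearMap.codRestrict (S.comp M₀) (Submodule.comap (M₁ : H →ₗ[ℂ] H) (LinearMap.range (M₀ : H →ₗ[ℂ] H))) hmem).comp (Submodule.comap (M₁ : H →ₗ[ℂ] H) (LinearMap.range (M₀ : H →ₗ[ℂ] H))).subtypeL) x) - x : (Submodule.comap (M₁ : H →ₗ[ℂ] H) (LinearMap.range (M₀ : H →ₗ[ℂ] H)))) : H)) = 0 := by
        rw [Submodule.coe_sub, map_sub, hMA]
        have h8 : (((((ContinuousLinearMap.codRestrict (S.comp M₀) (Submodule.comap (M₁ : H →ₗ[ℂ] H) (LinearMap.range (M₀ : H →ₗ[ℂ] H))) hmem).comp (Submodule.comap (M₁ : H →ₗ[ℂ] H) (LinearMap.range (M₀ : H →ₗ[ℂ] H))).subtypeL) x : (Submodule.comap (M₁ : H →ₗ[ℂ] H) (LinearMap.range (M₀ : H →ₗ[ℂ] H))))) : H)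
            = S (M₀ (x : H)) := rfl
        rw [h8, hS1]
        simp
      have h9 := sub_eq_zero.mp (inj _ hz)
      exact congrArg Subtype.val h9
    · ext x
      simp only [ContinuousLinearMap.mul_apply, ContinuousLinearMap.one_apply,
        ContinuousLinearMap.coe_coe]
      have h10 : (((((ContinuousLinearMap.codRestrict (S.comp M₀) (Submodule.comap (M₁ : H →ₗ[ℂ] H) (LinearMap.range (M₀ : H →ₗ[ℂ] H))) hmem).comp (Submodule.comap (M₁ : H →ₗ[ℂ] H) (LinearMap.range (M₀ : H →ₗ[ℂ] H))).subtypeL)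
          ((algebraMap ℂ ((Submodule.comap (M₁ : H →ₗ[ℂ] H) (LinearMap.range (M₀ : H →ₗ[ℂ] H))) →L[ℂ] (Submodule.comap (M₁ : H →ₗ[ℂ] H) (LinearMap.range (M₀ : H →ₗ[ℂ] H)))) c - A) x) : (Submodule.comap (M₁ : H →ₗ[ℂ] H) (LinearMap.range (M₀ : H →ₗ[ℂ] H))))) : H)
          = S (M₀ (((algebraMap ℂ ((Submodule.comap (M₁ : H →ₗ[ℂ] H) (LinearMap.range (M₀ : H →ₗ[ℂ] H))) →L[ℂ] (Submodule.comap (M₁ : H →ₗ[ℂ] H) (LinearMap.range (M₀ : H →ₗ[ℂ] H)))) c - A) x : (Submodule.comap (M₁ : H →ₗ[ℂ] H) (LinearMap.range (M₀ : H →ₗ[ℂ] H)))) : H)) := rfl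
      calc (((((ContinuousLinearMap.codRestrict (S.comp M₀) (Submodule.comap (M₁ : H →ₗ[ℂ] H) (LinearMap.range (M₀ : H →ₗ[ℂ] H))) hmem).comp (Submodule.comap (M₁ : H →ₗ[ℂ] H) (LinearMap.range (M₀ : H →ₗ[ℂ] H))).subtypeL)
          ((algebraMap ℂ ((Submodule.comap (M₁ : H →ₗ[ℂ] H) (LinearMap.range (M₀ : H →ₗ[ℂ] H))) →L[ℂ] (Submodule.comap (M₁ : H →ₗ[ℂ] H) (LinearMap.range (M₀ : H →ₗ[ℂ] H)))) c - A) x) : (Submodule.comap (M₁ : H →ₗ[ℂ] H) (LinearMap.range (M₀ : H →ₗ[ℂ] H))))) : H) = _ := h10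
        _ = (x : H) := by rw [hMA, hS2]
  -- the main equivalence
  have main : ∀ z : ℂ, IsUnit (z • M₀ + M₁) ↔ IsUnit (algebraMap ℂ ((Submodule.comap (M₁ : H →ₗ[ℂ] H) (LinearMap.range (M₀ : H →ₗ[ℂ] H))) →L[ℂ] (Submodule.comap (M₁ : H →ₗ[ℂ] H) (LinearMap.range (M₀ : H →ₗ[ℂ] H)))) z - A) := by
    intro z
    constructor
    · rintro ⟨u, hu⟩
      have h1 : ∀ y, (z • M₀ + M₁) ((↑u⁻¹ : H →L[ℂ] H) y) = y := by
        intro y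
        have h := DFunLike.congr_fun u.mul_inv y
        rw [hu] at h
        simpa [ContinuousLinearMap.mul_apply] using h
      have h2 : ∀ y, (↑u⁻¹ : H →L[ℂ] H) ((z • M₀ + M₁) y) = y := by
        intro y
        have h := DFunLike.congr_fun u.inv_mul y
        rw [hu] at h
        simpa [ContinuousLinearMap.mul_apply] using h
      obtain ⟨P, hP1, hP2, _⟩ := mk z _ h1 h2
      exact ⟨⟨_, _, hP1, hP2⟩, rfl⟩
    · intro hz
      -- fixed point w with Re w > ν
      obtain ⟨Sw, hw1, hw2, _⟩ := hreg ((ν+1 : ℝ) : ℂ) (by rw [Complex.ofReal_re]; linarith)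
      have hw1' : ∀ y, (((ν+1 : ℝ) : ℂ) • M₀ + M₁) (Sw y) = y := by
        intro y; have h := DFunLike.congr_fun hw1 y; simpa using h
      have hw2' : ∀ y, Sw ((((ν+1 : ℝ) : ℂ) • M₀ + M₁) y) = y := by
        intro y; have h := DFunLike.congr_fun hw2 y; simpa using h
      obtain ⟨P, hP1, hP2, hPcoe⟩ := mk (((ν+1 : ℝ) : ℂ)) Sw hw1' hw2'
      -- 1 + c • Bw = Bw * (z - A),  c := z - w,  Bw := P ∘ ι
      have hsplit : algebraMap ℂ ((Submodule.comap (M₁ : H →ₗ[ℂ] H) (LinearMap.range (M₀ : H →ₗ[ℂ] H))) →L[ℂ] (Submodule.comap (M₁ : H →ₗ[ℂ] H) (LinearMap.range (M₀ : H →ₗ[ℂ] H)))) z - A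
          = (z - (((ν+1 : ℝ) : ℂ))) • (1 : (Submodule.comap (M₁ : H →ₗ[ℂ] H) (LinearMap.range (M₀ : H →ₗ[ℂ] H))) →L[ℂ] (Submodule.comap (M₁ : H →ₗ[ℂ] H) (LinearMap.range (M₀ : H →ₗ[ℂ] H))))
            + (algebraMap ℂ ((Submodule.comap (M₁ : H →ₗ[ℂ] H) (LinearMap.range (M₀ : H →ₗ[ℂ] H))) →L[ℂ] (Submodule.comap (M₁ : H →ₗ[ℂ] H) (LinearMap.range (M₀ : H →ₗ[ℂ] H)))) (((ν+1 : ℝ) : ℂ)) - A) := by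
        simp only [Algebra.algebraMap_eq_smul_one, sub_smul]
        module
      have hkey : (P.comp (Submodule.comap (M₁ : H →ₗ[ℂ] H) (LinearMap.range (M₀ : H →ₗ[ℂ] H))).subtypeL) * (algebraMap ℂ ((Submodule.comap (M₁ : H →ₗ[ℂ] H) (LinearMap.range (M₀ : H →ₗ[ℂ] H))) →L[ℂ] (Submodule.comap (M₁ : H →ₗ[ℂ] H) (LinearMap.range (M₀ : H →ₗ[ℂ] H)))) z - A)
          = 1 + (z - (((ν+1 : ℝ) : ℂ))) • (P.comp (Submodule.comap (M₁ : H →ₗ[ℂ] H) (LinearMap.range (M₀ : H →ₗ[ℂ] H))).subtypeL) := by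
        have hBs : (P.comp (Submodule.comap (M₁ : H →ₗ[ℂ] H) (LinearMap.range (M₀ : H →ₗ[ℂ] H))).subtypeL) * ((z - (((ν+1 : ℝ) : ℂ))) • (1 : (Submodule.comap (M₁ : H →ₗ[ℂ] H) (LinearMap.range (M₀ : H →ₗ[ℂ] H))) →L[ℂ] (Submodule.comap (M₁ : H →ₗ[ℂ] H) (LinearMap.range (M₀ : H →ₗ[ℂ] H)))))
            = (z - (((ν+1 : ℝ) : ℂ))) • (P.comp (Submodule.comap (M₁ : H →ₗ[ℂ] H) (LinearMap.range (M₀ : H →ₗ[ℂ] H))).subtypeL) := by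
          ext v
          simp only [ContinuousLinearMap.mul_apply, ContinuousLinearMap.smul_apply,
            ContinuousLinearMap.one_apply]
          rw [_root_.map_smul]
        rw [hsplit, mul_add, hBs, hP2]
        exact add_comm _ _
      have unit1 : IsUnit (1 + (z - (((ν+1 : ℝ) : ℂ))) • (P.comp (Submodule.comap (M₁ : H →ₗ[ℂ] H) (LinearMap.range (M₀ : H →ₗ[ℂ] H))).subtypeL)) := by
        rw [← hkey]
        exact IsUnit.mul
          ⟨⟨P.comp (Submodule.comap (M₁ : H →ₗ[ℂ] H) (LinearMap.range (M₀ : H →ₗ[ℂ] H))).subtypeL, algebraMap ℂ ((Submodule.comap (M₁ : H →ₗ[ℂ] H) (LinearMap.range (M₀ : H →ₗ[ℂ] H))) →L[ℂ] (Submodule.comap (M₁ : H →ₗ[ℂ] H) (LinearMap.range (M₀ : H →ₗ[ℂ] H)))) (((ν+1 : ℝ) : ℂ)) - A, hP2, hP1⟩, rfl⟩ hz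
      obtain ⟨u₁, hu₁⟩ := unit1
      have hR1 : ∀ v : (Submodule.comap (M₁ : H →ₗ[ℂ] H) (LinearMap.range (M₀ : H →ₗ[ℂ] H))), ((↑u₁⁻¹ : (Submodule.comap (M₁ : H →ₗ[ℂ] H) (LinearMap.range (M₀ : H →ₗ[ℂ] H))) →L[ℂ] (Submodule.comap (M₁ : H →ₗ[ℂ] H) (LinearMap.range (M₀ : H →ₗ[ℂ] H)))) v : (Submodule.comap (M₁ : H →ₗ[ℂ] H) (LinearMap.range (M₀ : H →ₗ[ℂ] H))))
          + (z - (((ν+1 : ℝ) : ℂ))) • (P.comp (Submodule.comap (M₁ : H →ₗ[ℂ] H) (LinearMap.range (M₀ : H →ₗ[ℂ] H))).subtypeL) ((↑u₁⁻¹ : (Submodule.comap (M₁ : H →ₗ[ℂ] H) (LinearMap.range (M₀ : H →ₗ[ℂ] H))) →L[ℂ] (Submodule.comap (M₁ : H →ₗ[ℂ] H) (LinearMap.range (M₀ : H →ₗ[ℂ] H)))) v) = v := by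
        intro v
        have h := DFunLike.congr_fun u₁.mul_inv v
        rw [hu₁] at h
        simpa [ContinuousLinearMap.mul_apply, ContinuousLinearMap.add_apply,
          ContinuousLinearMap.smul_apply, ContinuousLinearMap.one_apply] using h
      have hR2 : ∀ v : (Submodule.comap (M₁ : H →ₗ[ℂ] H) (LinearMap.range (M₀ : H →ₗ[ℂ] H))), (↑u₁⁻¹ : (Submodule.comap (M₁ : H →ₗ[ℂ] H) (LinearMap.range (M₀ : H →ₗ[ℂ] H))) →L[ℂ] (Submodule.comap (M₁ : H →ₗ[ℂ] H) (LinearMap.range (M₀ : H →ₗ[ℂ] H)))) (v + (z - (((ν+1 : ℝ) : ℂ))) • (P.comp (Submodule.comap (M₁ : H →ₗ[ℂ] H) (LinearMap.range (M₀ : H →ₗ[ℂ] H))).subtypeL) v) = v := by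
        intro v
        have h := DFunLike.congr_fun u₁.inv_mul v
        rw [hu₁] at h
        simpa [ContinuousLinearMap.mul_apply, ContinuousLinearMap.add_apply,
          ContinuousLinearMap.smul_apply, ContinuousLinearMap.one_apply] using h
      have unit2 : IsUnit ((1 : H →L[ℂ] H) + (z - (((ν+1 : ℝ) : ℂ))) • ((Submodule.comap (M₁ : H →ₗ[ℂ] H) (LinearMap.range (M₀ : H →ₗ[ℂ] H))).subtypeL.comp P)) := by
        refine ⟨⟨(1 : H →L[ℂ] H) + (z - (((ν+1 : ℝ) : ℂ))) • ((Submodule.comap (M₁ : H →ₗ[ℂ] H) (LinearMap.range (M₀ : H →ₗ[ℂ] H))).subtypeL.comp P),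
          (1 : H →L[ℂ] H) - (z - (((ν+1 : ℝ) : ℂ))) • ((Submodule.comap (M₁ : H →ₗ[ℂ] H) (LinearMap.range (M₀ : H →ₗ[ℂ] H))).subtypeL.comp ((↑u₁⁻¹ : (Submodule.comap (M₁ : H →ₗ[ℂ] H) (LinearMap.range (M₀ : H →ₗ[ℂ] H))) →L[ℂ] (Submodule.comap (M₁ : H →ₗ[ℂ] H) (LinearMap.range (M₀ : H →ₗ[ℂ] H)))).comp P)),
          ?_, ?_⟩, rfl⟩
        · ext x
          simp only [ContinuousLinearMap.mul_apply, ContinuousLinearMap.add_apply,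
            ContinuousLinearMap.sub_apply, ContinuousLinearMap.smul_apply,
            ContinuousLinearMap.one_apply, ContinuousLinearMap.comp_apply,
            ContinuousLinearMap.coe_comp', Function.comp_apply, Submodule.coe_subtypeL',
            Submodule.coe_subtype]
          have hcoe := congrArg (fun v : (Submodule.comap (M₁ : H →ₗ[ℂ] H) (LinearMap.range (M₀ : H →ₗ[ℂ] H))) => (v : H)) (hR1 (P x))
          simp only [Submodule.coe_add, SetLike.val_smul, ContinuousLinearMap.comp_apply,
            ContinuousLinearMap.coe_comp', Function.comp_apply, Submodule.coe_subtypeL',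
            Submodule.coe_subtype] at hcoe
          rw [map_sub, _root_.map_smul]
          push_cast
          rw [← hcoe]
          module
        · ext x
          simp only [ContinuousLinearMap.mul_apply, ContinuousLinearMap.add_apply,
            ContinuousLinearMap.sub_apply, ContinuousLinearMap.smul_apply,
            ContinuousLinearMap.one_apply, ContinuousLinearMap.comp_apply,
            ContinuousLinearMap.coe_comp', Function.comp_apply, Submodule.coe_subtypeL',
            Submodule.coe_subtype]
          have hR2' : (↑u₁⁻¹ : (Submodule.comap (M₁ : H →ₗ[ℂ] H) (LinearMap.range (M₀ : H →ₗ[ℂ] H))) →L[ℂ] (Submodule.comap (M₁ : H →ₗ[ℂ] H) (LinearMap.range (M₀ : H →ₗ[ℂ] H))))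
              (P x + (z - (((ν+1 : ℝ) : ℂ))) • P (((P x : (Submodule.comap (M₁ : H →ₗ[ℂ] H) (LinearMap.range (M₀ : H →ₗ[ℂ] H)))) : H))) = P x := by
            have h := hR2 (P x)
            simpa only [ContinuousLinearMap.comp_apply, ContinuousLinearMap.coe_comp',
              Function.comp_apply, Submodule.coe_subtypeL', Submodule.coe_subtype] using h
          rw [map_add, _root_.map_smul, hR2']
          module
      -- pencil factorisation
      have hfact : z • M₀ + M₁
          = ((((ν+1 : ℝ) : ℂ)) • M₀ + M₁)
            * ((1 : H →L[ℂ] H) + (z - (((ν+1 : ℝ) : ℂ))) • ((Submodule.comap (M₁ : H →ₗ[ℂ] H) (LinearMap.range (M₀ : H →ₗ[ℂ] H))).subtypeL.comp P)) := by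
        ext x
        simp only [ContinuousLinearMap.mul_apply, ContinuousLinearMap.add_apply,
          ContinuousLinearMap.smul_apply, ContinuousLinearMap.one_apply,
          ContinuousLinearMap.comp_apply, ContinuousLinearMap.coe_comp',
          Function.comp_apply, Submodule.coe_subtypeL', Submodule.coe_subtype]
        rw [map_add, _root_.map_smul]
        have h3 : ((((ν+1 : ℝ) : ℂ)) • M₀ + M₁) ((P x : (Submodule.comap (M₁ : H →ₗ[ℂ] H) (LinearMap.range (M₀ : H →ₗ[ℂ] H)))) : H) = M₀ x := by
          rw [hPcoe x, hw1']
        simp only [ContinuousLinearMap.add_apply, ContinuousLinearMap.smul_apply] at h3 ⊢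
        simp only [map_add, _root_.map_smul]
        rw [eq_sub_of_add_eq' h3]
        module
      rw [hfact]
      exact IsUnit.mul ⟨⟨(((ν+1 : ℝ) : ℂ)) • M₀ + M₁, Sw, by ext y; simpa using hw1' y,
        by ext y; simpa using hw2' y⟩, rfl⟩ unit2
  ext z
  simp only [Set.mem_setOf_eq, spectrum.mem_iff]
  exact not_congr (main z).symm
end
end
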